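/- arXiv:1711.02058 — 12 statements merged into one kernel-verified Lean document; each statement's English description precedes it below -/
import Mathlib

section
/- Let A_1, …, A_n be finite sets and k_1, …, k_n nonnegative integers. Suppose that for every subset I ⊆ {1,…,n} one has |⋃_{i∈I} A_i| ≥ Σ_{i∈I} k_i. Then there exist pairwise disjoint finite sets B_1, …, B_n with B_i ⊆ A_i and |B_i| = k_i for every i. -/
/-- Generalized Hall representative lemma: if finite sets `A 1, …, A n` and
nonnegative integers `k 1, …, k n` satisfy `|⋃_{i ∈ I} A i| ≥ Σ_{i ∈ I} k i`
for every subset `I ⊆ {1,…,n}`, then one can choose pairwise disjoint subsets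
`B i ⊆ A i` with `|B i| = k i`. -/
theorem generalized_hall_representative_lemma {α : Type*} [DecidableEq α] (n : ℕ)
    (A : Fin n → Finset α) (k : Fin n → ℕ)
    (h : ∀ I : Finset (Fin n), ∑ i ∈ I, k i ≤ (I.biUnion A).card) :
    ∃ B : Fin n → Finset α,
      (∀ i, B i ⊆ A i) ∧ (∀ i, (B i).card = k i) ∧
      (∀ i j, i ≠ j → Disjoint (B i) (B j)) := by
  classical
  set ι := Σ i : Fin n, Fin (k i)
  set t : ι → Finset α := fun x => A x.1
  have hall : ∀ s : Finset ι, s.card ≤ (s.biUnion t).card := by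
    intro s
    set I : Finset (Fin n) := s.image Sigma.fst
    have hsub : s ⊆ I.sigma (fun i => (Finset.univ : Finset (Fin (k i)))) := by
      intro x hx
      exact Finset.mem_sigma.mpr ⟨Finset.mem_image_of_mem Sigma.fst hx, Finset.mem_univ _⟩
    have h1 : s.card ≤ ∑ i ∈ I, k i := by
      calc s.card ≤ (I.sigma (fun i => (Finset.univ : Finset (Fin (k i))))).card :=
            Finset.card_le_card hsub
        _ = ∑ i ∈ I, k i := by simp [Finset.card_sigma]
    have h2 : s.biUnion t ⊇ I.biUnion A ∨ True := Or.inr trivial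
    have heq : s.biUnion t = I.biUnion A := by
      ext a
      simp only [Finset.mem_biUnion, Finset.mem_image, I, t]
      constructor
      · rintro ⟨x, hx, ha⟩; exact ⟨x.1, ⟨x, hx, rfl⟩, ha⟩
      · rintro ⟨i, ⟨x, hx, rfl⟩, ha⟩; exact ⟨x, hx, ha⟩
    rw [heq]
    exact h1.trans (h I)
  obtain ⟨f, hf, hft⟩ := (Finset.all_card_le_biUnion_card_iff_exists_injective t).mp hall
  refine ⟨fun i => (Finset.univ : Finset (Fin (k i))).image (fun j => f ⟨i, j⟩), ?_, ?_, ?_⟩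
  · intro i a ha
    simp only [Finset.mem_image] at ha
    obtain ⟨j, _, rfl⟩ := ha
    exact hft ⟨i, j⟩
  · intro i
    rw [Finset.card_image_of_injective _ (fun a b hab => sigma_mk_injective (hf hab))]
    simp
  · intro i j hij
    rw [Finset.disjoint_left]
    intro a ha hb
    simp only [Finset.mem_image] at ha hb
    obtain ⟨x, _, hx⟩ := ha
    obtain ⟨y, _, hy⟩ := hb
    have : (⟨i, x⟩ : ι) = ⟨j, y⟩ := hf (hx.trans hy.symm)
    exact hij (congrArg Sigma.fst this)
end

section
/- Let w ∈ W and let α, β, γ ∈ Φ ∩ wΦ⁻ satisfy (α,β) = 1, (β,γ) = 1, (α,γ) = 0, and suppose α ≺_w β or γ ≺_w β. Then δ := α − β + γ is a root and δ ∈ wΦ⁻. -/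
open scoped RealInnerProductSpace

/-- `posSum Φpos a b` means `a ≺ b`: the difference `b - a` is a nonempty sum of
positive roots. -/
def posSum {V : Type*} [AddCommGroup V] (Φpos : Finset V) (a b : V) : Prop :=
  ∃ m : Multiset V, m ≠ 0 ∧ (∀ x ∈ m, x ∈ Φpos) ∧ m.sum = b - a

/-- Sum of a multiset of vectors given by nonneg integer coordinates. -/
lemma multiset_sum_coords {V : Type*} [AddCommGroup V] [Module ℝ V] {r : ℕ}
    (simple : Fin r → V) (g : V → Fin r → ℕ) :
    ∀ m : Multiset V, (∀ x ∈ m, x = ∑ j, (g x j : ℝ) • simple j) →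
      m.sum = ∑ j, (((m.map (fun y => g y j)).sum : ℕ) : ℝ) • simple j := by
  intro m
  induction m using Multiset.induction with
  | empty => simp
  | cons a s ih =>
    intro h
    rw [Multiset.sum_cons, ih (fun x hx => h x (Multiset.mem_cons_of_mem hx))]
    nth_rewrite 1 [h a (Multiset.mem_cons_self a s)]
    rw [← Finset.sum_add_distrib]
    refine Finset.sum_congr rfl fun j _ => ?_
    rw [Multiset.map_cons, Multiset.sum_cons, Nat.cast_add, add_smul]

/-- A nonempty multiset of positive roots has nonzero sum. -/
lemma pos_multiset_sum_ne_zero {V : Type*} [AddCommGroup V] [Module ℝ V]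
    (Φ : Finset V) (hΦ0 : (0 : V) ∉ Φ) (Φpos : Finset V) (hpos : Φpos ⊆ Φ)
    {r : ℕ} {simple : Fin r → V} (hsind : LinearIndependent ℝ simple)
    (hsspan : ∀ α ∈ Φpos, ∃ c : Fin r → ℕ, α = ∑ j, (c j : ℝ) • simple j)
    (m : Multiset V) (hm : m ≠ 0) (hmem : ∀ x ∈ m, x ∈ Φpos) : m.sum ≠ 0 := by
  classical
  intro hsum
  set g : V → Fin r → ℕ := fun x =>
    if h : x ∈ Φpos then Classical.choose (hsspan x h) else 0 with hg
  have hgspec : ∀ x ∈ Φpos, x = ∑ j, (g x j : ℝ) • simple j := by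
    intro x hx
    simp only [hg, dif_pos hx]
    exact Classical.choose_spec (hsspan x hx)
  have hsum' := multiset_sum_coords simple g m (fun x hx => hgspec x (hmem x hx))
  rw [hsum] at hsum'
  have hcoef : ∀ j, ((m.map (fun y => g y j)).sum : ℕ) = 0 := by
    have h1 := Fintype.linearIndependent_iff.mp hsind
      (fun j => (((m.map (fun y => g y j)).sum : ℕ) : ℝ)) hsum'.symm
    intro j
    have h2 : (((m.map (fun y => g y j)).sum : ℕ) : ℝ) = 0 := h1 j
    exact_mod_cast h2
  obtain ⟨x, hx⟩ := Multiset.exists_mem_of_ne_zero hm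
  have hx0 : ∀ j, g x j = 0 := by
    intro j
    have hle : g x j ≤ (m.map (fun y => g y j)).sum :=
      Multiset.single_le_sum (fun y _ => Nat.zero_le y)
        _ (Multiset.mem_map_of_mem _ hx)
    have := hcoef j
    omega
  have hx0' : x = 0 := by
    rw [hgspec x (hmem x hx)]
    simp [hx0]
  exact hΦ0 (hx0' ▸ hpos (hmem x hx))

/-- Let `w` be an element of the Weyl group and let `α, β, γ ∈ Φ ∩ wΦ⁻` satisfy
`(α,β) = 1`, `(β,γ) = 1`, `(α,γ) = 0` and `α ≺_w β` or `γ ≺_w β`.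
Then `δ = α - β + γ` is a root and `δ ∈ wΦ⁻`. -/
theorem rhombus_initially_negative {V : Type*} [NormedAddCommGroup V]
    [InnerProductSpace ℝ V] [FiniteDimensional ℝ V]
    (Φ : Finset V)
    (hΦ0 : (0 : V) ∉ Φ)
    (hrefl : ∀ α ∈ Φ, ∀ β ∈ Φ, β - ⟪α, β⟫ • α ∈ Φ)
    (hred : ∀ α ∈ Φ, ∀ c : ℝ, c • α ∈ Φ → c = 1 ∨ c = -1)
    (hcrys : ∀ α ∈ Φ, ∀ β ∈ Φ, ∃ n : ℤ, ⟪α, β⟫ = (n : ℝ))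
    (hnorm : ∀ α ∈ Φ, ⟪α, α⟫ = 2)
    (Φpos : Finset V) (hpos : Φpos ⊆ Φ)
    (hsplit : ∀ α ∈ Φ, (α ∈ Φpos ↔ -α ∉ Φpos))
    (r : ℕ) (simple : Fin r → V)
    (hsmem : ∀ i, simple i ∈ Φpos)
    (hsind : LinearIndependent ℝ simple)
    (hsspan : ∀ α ∈ Φpos, ∃ c : Fin r → ℕ, α = ∑ j, (c j : ℝ) • simple j)
    (w : V ≃ₗ[ℝ] V)
    (hw : w ∈ Subgroup.closure
      {u : V ≃ₗ[ℝ] V | ∃ α ∈ Φ, ∀ v, u v = v - ⟪α, v⟫ • α})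
    (α β γ : V) (hα : α ∈ Φ) (hβ : β ∈ Φ) (hγ : γ ∈ Φ)
    (hαneg : ∃ x ∈ Φpos, w (-x) = α)
    (hβneg : ∃ x ∈ Φpos, w (-x) = β)
    (hγneg : ∃ x ∈ Φpos, w (-x) = γ)
    (hab : ⟪α, β⟫ = 1) (hbc : ⟪β, γ⟫ = 1) (hac : ⟪α, γ⟫ = 0)
    (hord : posSum Φpos (w⁻¹ α) (w⁻¹ β) ∨ posSum Φpos (w⁻¹ γ) (w⁻¹ β)) :
    α - β + γ ∈ Φ ∧ ∃ x ∈ Φpos, w (-x) = α - β + γ := by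
  classical
  -- δ is a root
  have hαβ : α - β ∈ Φ := by
    have h := hrefl β hβ α hα
    rwa [real_inner_comm, hab, one_smul] at h
  have hδ : α - β + γ ∈ Φ := by
    have h := hrefl γ hγ (α - β) hαβ
    have hi : ⟪γ, α - β⟫ = -1 := by
      have h1 : ⟪γ, α⟫ = 0 := by rw [real_inner_comm]; exact hac
      have h2 : ⟪γ, β⟫ = 1 := by rw [real_inner_comm]; exact hbc
      rw [inner_sub_right, h1, h2]
      ring
    rw [hi] at h
    have he : α - β - (-1 : ℝ) • γ = α - β + γ := by
      rw [neg_one_smul]; abel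
    rwa [he] at h
  refine ⟨hδ, ?_⟩
  -- every element of the Weyl group preserves Φ
  have hwmem : ∀ u ∈ Subgroup.closure
      {u : V ≃ₗ[ℝ] V | ∃ α ∈ Φ, ∀ v, u v = v - ⟪α, v⟫ • α},
      ∀ x ∈ Φ, u x ∈ Φ := by
    intro u hu
    induction hu using Subgroup.closure_induction with
    | mem u hu =>
      obtain ⟨a, ha, hua⟩ := hu
      intro x hx
      rw [hua x]
      exact hrefl a ha x hx
    | one => intro x hx; simpa using hx
    | mul u v _ _ hu hv =>
      intro x hx
      have : (u * v) x = u (v x) := rfl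
      rw [this]
      exact hu _ (hv x hx)
    | inv u _ hu =>
      intro x hx
      have himg : Φ.image (fun y => u y) = Φ := by
        apply Finset.eq_of_subset_of_card_le
        · intro y hy
          obtain ⟨z, hz, rfl⟩ := Finset.mem_image.mp hy
          exact hu z hz
        · rw [Finset.card_image_of_injective _ u.injective]
      obtain ⟨z, hz, hzx⟩ := Finset.mem_image.mp (himg ▸ hx)
      have hz' : u⁻¹ x = z := by
        rw [← hzx]
        exact u.symm_apply_apply z
      rw [hz']
      exact hz
  have hw' : ∀ x ∈ Φ, w⁻¹ x ∈ Φ := hwmem w⁻¹ (inv_mem hw) 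
  -- extract positive roots
  obtain ⟨a, haP, hwa⟩ := hαneg
  obtain ⟨b, hbP, hwb⟩ := hβneg
  obtain ⟨c, hcP, hwc⟩ := hγneg
  have hwia : w⁻¹ α = -a := by rw [← hwa]; exact w.symm_apply_apply (-a)
  have hwib : w⁻¹ β = -b := by rw [← hwb]; exact w.symm_apply_apply (-b)
  have hwic : w⁻¹ γ = -c := by rw [← hwc]; exact w.symm_apply_apply (-c)
  -- w⁻¹ δ
  have hwid : w⁻¹ (α - β + γ) = b - a - c := by
    have : w⁻¹ (α - β + γ) = w⁻¹ α - w⁻¹ β + w⁻¹ γ := by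
      show w.symm (α - β + γ) = w.symm α - w.symm β + w.symm γ
      rw [map_add, map_sub]
    rw [this, hwia, hwib, hwic]
    abel
  have hdΦ : b - a - c ∈ Φ := hwid ▸ hw' _ hδ
  -- the key: b - a - c is NOT positive
  have hdneg : b - a - c ∉ Φpos := by
    intro hd
    rcases hord with ⟨m, hm0, hmP, hms⟩ | ⟨m, hm0, hmP, hms⟩
    · rw [hwia, hwib] at hms
      have hsum0 : ((b - a - c) ::ₘ c ::ₘ m).sum = 0 := by
        rw [Multiset.sum_cons, Multiset.sum_cons, hms]
        abel
      exact pos_multiset_sum_ne_zero Φ hΦ0 Φpos hpos hsind hsspan _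
        (by simp) (by
          intro x hx
          rcases Multiset.mem_cons.mp hx with rfl | hx
          · exact hd
          rcases Multiset.mem_cons.mp hx with rfl | hx
          · exact hcP
          exact hmP x hx) hsum0
    · rw [hwic, hwib] at hms
      have hsum0 : ((b - a - c) ::ₘ a ::ₘ m).sum = 0 := by
        rw [Multiset.sum_cons, Multiset.sum_cons, hms]
        abel
      exact pos_multiset_sum_ne_zero Φ hΦ0 Φpos hpos hsind hsspan _
        (by simp) (by
          intro x hx
          rcases Multiset.mem_cons.mp hx with rfl | hx
          · exact hd
          rcases Multiset.mem_cons.mp hx with rfl | hx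
          · exact haP
          exact hmP x hx) hsum0
  -- hence a - b + c is positive
  have hxΦ : a - b + c ∈ Φ := by
    have h := hrefl (b - a - c) hdΦ (b - a - c) hdΦ
    rw [hnorm _ hdΦ] at h
    have he : b - a - c - (2 : ℝ) • (b - a - c) = a - b + c := by
      rw [two_smul]; abel
    rwa [he] at h
  have hxP : a - b + c ∈ Φpos := by
    have h := hsplit _ hxΦ
    by_contra hxn
    have : -(a - b + c) ∈ Φpos := by
      by_contra hnn
      exact hxn (h.mpr (by simpa using hnn))
    have he : -(a - b + c) = b - a - c := by abel
    rw [he] at this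
    exact hdneg this
  refine ⟨a - b + c, hxP, ?_⟩
  have : w (w⁻¹ (α - β + γ)) = α - β + γ := w.apply_symm_apply _
  rw [← this, hwid]
  congr 1
  abel
end

section
/- Let w ∈ W and α ∈ Φ⁺ ∩ wΦ⁻. Then |Φ⁺ ∩ (σ_α w)Φ⁻| = |Φ⁺ ∩ wΦ⁻| − 1 if and only if it is impossible to find roots β, δ ∈ Φ⁺ ∩ wΦ⁻ such that α = β + δ. -/
open scoped RealInnerProductSpace

private lemma weyl_preserves {V : Type*} [NormedAddCommGroup V]
    [InnerProductSpace ℝ V] [DecidableEq V] (Φ : Finset V)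
    (hgen : ∀ u ∈ {u : V ≃ₗ[ℝ] V | ∃ α ∈ Φ, ∀ v, u v = v - ⟪α, v⟫ • α},
      ∀ v ∈ Φ, u v ∈ Φ)
    {w : V ≃ₗ[ℝ] V}
    (hw : w ∈ Subgroup.closure {u : V ≃ₗ[ℝ] V | ∃ α ∈ Φ, ∀ v, u v = v - ⟪α, v⟫ • α}) :
    ∀ v ∈ Φ, w v ∈ Φ := by
  induction hw using Subgroup.closure_induction with
  | mem x hx => exact hgen x hx
  | one => intro v hv; simpa using hv
  | mul x y hx hy ihx ihy => intro v hv; exact ihx _ (ihy v hv)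
  | inv x hx ih =>
    intro v hv
    have hsub : Φ.image (fun v => x v) ⊆ Φ := by
      intro u hu
      obtain ⟨z, hz, rfl⟩ := Finset.mem_image.mp hu
      exact ih z hz
    have heq : Φ.image (fun v => x v) = Φ :=
      Finset.eq_of_subset_of_card_le hsub
        (by rw [Finset.card_image_of_injective _ x.injective])
    have hv' : v ∈ Φ.image (fun v => x v) := by rw [heq]; exact hv
    obtain ⟨z, hz, hzv⟩ := Finset.mem_image.mp hv'
    have : x⁻¹ v = z := by rw [← hzv]; exact x.symm_apply_apply z
    rwa [this]

/-- Admissibility criterion: for `w` in the Weyl group and a root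
`α ∈ Φ⁺ ∩ wΦ⁻`, the reflection `σ_α` satisfies
`|Φ⁺ ∩ (σ_α w)Φ⁻| = |Φ⁺ ∩ wΦ⁻| - 1` if and only if it is impossible to find
`β, δ ∈ Φ⁺ ∩ wΦ⁻` with `α = β + δ`. -/
theorem admissibility_criterion {V : Type*} [NormedAddCommGroup V]
    [InnerProductSpace ℝ V] [FiniteDimensional ℝ V] [DecidableEq V]
    (Φ : Finset V)
    (hΦ0 : (0 : V) ∉ Φ)
    (hrefl : ∀ α ∈ Φ, ∀ β ∈ Φ, β - ⟪α, β⟫ • α ∈ Φ)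
    (hred : ∀ α ∈ Φ, ∀ c : ℝ, c • α ∈ Φ → c = 1 ∨ c = -1)
    (hcrys : ∀ α ∈ Φ, ∀ β ∈ Φ, ∃ n : ℤ, ⟪α, β⟫ = (n : ℝ))
    (hnorm : ∀ α ∈ Φ, ⟪α, α⟫ = 2)
    (Φpos : Finset V) (hpos : Φpos ⊆ Φ)
    (hsplit : ∀ α ∈ Φ, (α ∈ Φpos ↔ -α ∉ Φpos))
    (r : ℕ) (simple : Fin r → V)
    (hsmem : ∀ i, simple i ∈ Φpos)
    (hsind : LinearIndependent ℝ simple)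
    (hsspan : ∀ α ∈ Φpos, ∃ c : Fin r → ℕ, α = ∑ j, (c j : ℝ) • simple j)
    (w : V ≃ₗ[ℝ] V)
    (hw : w ∈ Subgroup.closure
      {u : V ≃ₗ[ℝ] V | ∃ α ∈ Φ, ∀ v, u v = v - ⟪α, v⟫ • α})
    (α : V)
    (hα : α ∈ Φpos ∩ Φpos.image (fun x => w (-x))) :
    (Φpos ∩ (Φpos.image (fun x => w (-x))).image (fun v => v - ⟪α, v⟫ • α)).card
        = (Φpos ∩ Φpos.image (fun x => w (-x))).card - 1
      ↔ ¬ ∃ β ∈ Φpos ∩ Φpos.image (fun x => w (-x)),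
            ∃ δ ∈ Φpos ∩ Φpos.image (fun x => w (-x)), α = β + δ := by
  classical
  set M : Finset V := Φpos.image (fun x => w (-x)) with hMdef
  set σ : V → V := fun v => v - ⟪α, v⟫ • α with hσdef
  have hσ : ∀ v, σ v = v - ⟪α, v⟫ • α := fun v => rfl
  obtain ⟨hαpos, hαM⟩ := Finset.mem_inter.mp hα
  have hαΦ : α ∈ Φ := hpos hαpos
  -- Φ is closed under negation
  have hneg : ∀ v ∈ Φ, -v ∈ Φ := by
    intro v hv
    have h := hrefl v hv v hv
    rw [hnorm v hv] at h
    have h2 : v - (2:ℝ) • v = -v := by rw [two_smul]; abel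
    rwa [h2] at h
  have hposne : ∀ x ∈ Φpos, x ≠ 0 := fun x hx h => hΦ0 (h ▸ hpos hx)
  -- sum of two positive roots, if a root, is positive
  have hsum : ∀ x ∈ Φpos, ∀ y ∈ Φpos, x + y ∈ Φ → x + y ∈ Φpos := by
    intro x hx y hy hxy
    by_contra h
    have hnegp : -(x+y) ∈ Φpos := by
      by_contra h2
      exact h ((hsplit _ hxy).mpr h2)
    obtain ⟨c, hc⟩ := hsspan x hx
    obtain ⟨d, hd⟩ := hsspan y hy
    obtain ⟨e, he⟩ := hsspan _ hnegp
    have hzero : ∑ j, ((c j + d j + e j : ℕ) : ℝ) • simple j = 0 := by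
      push_cast
      simp only [add_smul]
      rw [Finset.sum_add_distrib, Finset.sum_add_distrib, ← hc, ← hd, ← he]
      abel
    have hall := Fintype.linearIndependent_iff.mp hsind
      (fun j => ((c j + d j + e j : ℕ) : ℝ)) hzero
    have hc0 : ∀ j, c j = 0 := by
      intro j
      have h1 : ((c j + d j + e j : ℕ) : ℝ) = 0 := hall j
      have h2 : (c j + d j + e j : ℕ) = 0 := by exact_mod_cast h1
      omega
    have hx0 : x = 0 := by
      rw [hc]
      exact Finset.sum_eq_zero fun j _ => by rw [hc0 j]; simp
    exact hposne x hx hx0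
  -- w and w⁻¹ preserve Φ
  have hgen : ∀ u ∈ {u : V ≃ₗ[ℝ] V | ∃ γ ∈ Φ, ∀ v, u v = v - ⟪γ, v⟫ • γ},
      ∀ v ∈ Φ, u v ∈ Φ := by
    rintro u ⟨γ, hγ, hu⟩ v hv
    rw [hu v]
    exact hrefl γ hγ v hv
  have hwΦ : ∀ v ∈ Φ, w v ∈ Φ := weyl_preserves Φ hgen hw
  have hwinv : ∀ v ∈ Φ, w.symm v ∈ Φ :=
    weyl_preserves Φ hgen (Subgroup.inv_mem _ hw)
  -- basic facts about M
  have hMΦ : ∀ v ∈ M, v ∈ Φ := by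
    intro v hv
    obtain ⟨x, hx, rfl⟩ := Finset.mem_image.mp hv
    exact hwΦ _ (hneg _ (hpos hx))
  have hMchar : ∀ v ∈ Φ, (v ∈ M ↔ w.symm v ∉ Φpos) := by
    intro v hv
    constructor
    · rintro hvM hsym
      obtain ⟨x, hx, rfl⟩ := Finset.mem_image.mp hvM
      rw [w.symm_apply_apply] at hsym
      exact (hsplit x (hpos hx)).mp hx hsym
    · intro hsym
      have hsymΦ : w.symm v ∈ Φ := hwinv v hv
      have hnegpos : -(w.symm v) ∈ Φpos := by
        by_contra h
        exact hsym ((hsplit _ hsymΦ).mpr h)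
      refine Finset.mem_image.mpr ⟨-(w.symm v), hnegpos, ?_⟩
      simp
  have hMneg : ∀ v ∈ M, -v ∉ M := by
    intro v hv hnv
    have hvΦ := hMΦ v hv
    have h1 := (hMchar v hvΦ).mp hv
    have h2 := (hMchar (-v) (hneg v hvΦ)).mp hnv
    rw [map_neg] at h2
    have h3 := hsplit _ (hwinv v hvΦ)
    tauto
  have hMneg' : ∀ v ∈ Φ, v ∉ M → -v ∈ M := by
    intro v hv hnv
    rw [hMchar _ (hneg v hv), map_neg]
    intro h
    have h2 : w.symm v ∈ Φpos := by
      have := hMchar v hv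
      tauto
    exact (hsplit _ (hwinv v hv)).mp h2 h
  have hMsum : ∀ x ∈ M, ∀ y ∈ M, x + y ∈ Φ → x + y ∈ M := by
    intro x hx y hy hxy
    rw [hMchar _ hxy]
    intro hcon
    have hxn : -(w.symm x) ∈ Φpos := by
      have h1 := (hMchar x (hMΦ x hx)).mp hx
      have h2 := hsplit _ (hwinv x (hMΦ x hx))
      tauto
    have hyn : -(w.symm y) ∈ Φpos := by
      have h1 := (hMchar y (hMΦ y hy)).mp hy
      have h2 := hsplit _ (hwinv y (hMΦ y hy))
      tauto
    have heq : -(w.symm x) + -(w.symm y) = -(w.symm (x+y)) := by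
      rw [map_add]; abel
    have hΦ' : -(w.symm x) + -(w.symm y) ∈ Φ := by
      rw [heq]
      exact hneg _ (hwinv _ hxy)
    have hsum' := hsum _ hxn _ hyn hΦ'
    rw [heq] at hsum'
    exact (hsplit _ (hwinv _ hxy)).mp hcon hsum'
  -- inner product values
  have hinner_cases : ∀ β ∈ Φ, β ≠ α → β ≠ -α →
      ⟪α, β⟫ = -1 ∨ ⟪α, β⟫ = 0 ∨ ⟪α, β⟫ = 1 := by
    intro β hβ h1 h2
    obtain ⟨n, hn⟩ := hcrys α hαΦ β hβ
    have hcs : ⟪α,β⟫ * ⟪α,β⟫ ≤ 4 := by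
      have h := real_inner_mul_inner_self_le α β
      rw [hnorm α hαΦ, hnorm β hβ] at h
      linarith
    have hne2 : ⟪α,β⟫ ≠ 2 := by
      intro h
      apply h1
      have hz : ⟪β - α, β - α⟫ = (0:ℝ) := by
        rw [inner_sub_left, inner_sub_right, inner_sub_right, hnorm β hβ,
          hnorm α hαΦ]
        have hcomm : ⟪β, α⟫ = ⟪α, β⟫ := real_inner_comm α β
        linarith
      have h4 := inner_self_eq_zero.mp hz
      rw [sub_eq_zero] at h4
      exact h4
    have hnen2 : ⟪α,β⟫ ≠ -2 := by
      intro h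
      apply h2
      have hz : ⟪β + α, β + α⟫ = (0:ℝ) := by
        rw [inner_add_left, inner_add_right, inner_add_right, hnorm β hβ,
          hnorm α hαΦ]
        have hcomm : ⟪β, α⟫ = ⟪α, β⟫ := real_inner_comm α β
        linarith
      have h4 := inner_self_eq_zero.mp hz
      exact eq_neg_of_add_eq_zero_left h4
    have hcs' : n * n ≤ 4 := by exact_mod_cast (hn ▸ hcs)
    have hn2 : n ≠ 2 := by intro h; exact hne2 (by rw [hn, h]; norm_num)
    have hnn2 : n ≠ -2 := by intro h; exact hnen2 (by rw [hn, h]; norm_num)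
    have hb : -2 ≤ n ∧ n ≤ 2 := by constructor <;> nlinarith
    have : n = -1 ∨ n = 0 ∨ n = 1 := by omega
    rcases this with h | h | h
    · left; rw [hn, h]; norm_num
    · right; left; rw [hn, h]; norm_num
    · right; right; rw [hn, h]; norm_num
  have hinner_one : ∀ β, α - β ∈ Φ → β ∈ Φ → ⟪α, β⟫ = 1 := by
    intro β hαβ hβ
    have h := hnorm _ hαβ
    rw [inner_sub_left, inner_sub_right, inner_sub_right, hnorm α hαΦ,
      hnorm β hβ] at h
    have hcomm : ⟪β, α⟫ = ⟪α, β⟫ := real_inner_comm α β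
    linarith
  -- σ is an involution
  have hσσ : ∀ v, σ (σ v) = v := by
    intro v
    have h1 : ⟪α, v - ⟪α,v⟫ • α⟫ = -⟪α,v⟫ := by
      rw [inner_sub_right, real_inner_smul_right, hnorm α hαΦ]
      ring
    rw [hσ, hσ, h1, neg_smul, sub_neg_eq_add, sub_add_cancel]
  have hσinj : Function.Injective σ := Function.LeftInverse.injective hσσ
  have hσΦ : ∀ v ∈ Φ, σ v ∈ Φ := fun v hv => hrefl α hαΦ v hv
  have himg : ∀ (A : Finset V) (v : V), v ∈ A.image σ ↔ σ v ∈ A := by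
    intro A v
    constructor
    · rintro h
      obtain ⟨u, hu, rfl⟩ := Finset.mem_image.mp h
      rwa [hσσ]
    · intro h
      exact Finset.mem_image.mpr ⟨σ v, h, hσσ v⟩
  -- the key finsets
  set S := Φpos ∩ M with hSdef
  set T := (Φpos.image σ) ∩ M with hTdef
  set P := S.filter (fun β => α - β ∈ Φpos) with hPdef
  set D := S.filter (fun β => α - β ∈ S) with hDdef
  have hSmem : ∀ v, v ∈ S ↔ v ∈ Φpos ∧ v ∈ M := fun v => Finset.mem_inter
  have hTmem : ∀ v, v ∈ T ↔ σ v ∈ Φpos ∧ v ∈ M := by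
    intro v
    rw [hTdef, Finset.mem_inter, himg Φpos v]
  have hcardT : (Φpos ∩ M.image σ).card = T.card := by
    have hTimg : (Φpos ∩ M.image σ) = T.image σ := by
      ext v
      rw [Finset.mem_inter, himg M v, himg T v, hTmem (σ v), hσσ v]
    rw [hTimg, Finset.card_image_of_injective _ hσinj]
  have hαnP : α ∉ P := by
    rw [hPdef, Finset.mem_filter]
    rintro ⟨-, h⟩
    rw [sub_self] at h
    exact hΦ0 (hpos h)
  -- S \ T = insert α P
  have hST : S \ T = insert α P := by
    ext β
    constructor
    · intro hmem
      obtain ⟨hβS, hβnT⟩ := Finset.mem_sdiff.mp hmem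
      obtain ⟨hβpos, hβM⟩ := (hSmem β).mp hβS
      have hβΦ : β ∈ Φ := hpos hβpos
      have hσβ : σ β ∉ Φpos := fun h => hβnT ((hTmem β).mpr ⟨h, hβM⟩)
      rw [Finset.mem_insert]
      by_cases hβα : β = α
      · exact Or.inl hβα
      right
      rw [hPdef, Finset.mem_filter]
      refine ⟨hβS, ?_⟩
      have hβnα : β ≠ -α := by
        rintro rfl
        exact (hsplit α hαΦ).mp hαpos (by simpa using hβpos)
      rcases hinner_cases β hβΦ hβα hβnα with h | h | h
      · exfalso
        have hσβΦ : σ β ∈ Φ := hσΦ β hβΦ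
        have heq : σ β = β + α := by rw [hσ, h, neg_one_smul, sub_neg_eq_add]
        rw [heq] at hσβΦ hσβ
        exact hσβ (hsum β hβpos α hαpos hσβΦ)
      · exfalso
        have heq : σ β = β := by rw [hσ, h, zero_smul, sub_zero]
        rw [heq] at hσβ
        exact hσβ hβpos
      · have hσβΦ : σ β ∈ Φ := hσΦ β hβΦ
        have heq : σ β = -(α - β) := by rw [hσ, h, one_smul, neg_sub]
        rw [heq] at hσβΦ hσβ
        have h2 : -(-(α - β)) ∈ Φpos := by
          have := hsplit _ hσβΦ
          tauto
        rwa [neg_neg] at h2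
    · intro hmem
      rw [Finset.mem_insert, hPdef, Finset.mem_filter] at hmem
      rw [Finset.mem_sdiff]
      rcases hmem with rfl | ⟨hβS, hαβ⟩
      · refine ⟨(hSmem β).mpr ⟨hαpos, hαM⟩, ?_⟩
        intro hT
        have h := ((hTmem β).mp hT).1
        have heq : σ β = -β := by
          rw [hσ, hnorm β hαΦ, two_smul]
          abel
        rw [heq] at h
        exact (hsplit β hαΦ).mp hαpos h
      · obtain ⟨hβpos, hβM⟩ := (hSmem β).mp hβS
        refine ⟨hβS, ?_⟩
        intro hT
        have h := ((hTmem β).mp hT).1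
        have h1 : ⟪α, β⟫ = 1 := hinner_one β (hpos hαβ) (hpos hβpos)
        have heq : σ β = -(α - β) := by rw [hσ, h1, one_smul, neg_sub]
        rw [heq] at h
        exact (hsplit _ (hpos hαβ)).mp hαβ h
  -- (T \ S).image σ = P \ D
  have hTS : (T \ S).image σ = P \ D := by
    ext u
    constructor
    · intro hmem
      have hσu : σ u ∈ T \ S := (himg _ u).mp hmem
      obtain ⟨hσuT, hσunS⟩ := Finset.mem_sdiff.mp hσu
      obtain ⟨hu', hσuM⟩ := (hTmem (σ u)).mp hσuT
      rw [hσσ] at hu'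
      have hσunpos : σ u ∉ Φpos := fun h => hσunS ((hSmem _).mpr ⟨h, hσuM⟩)
      have huΦ : u ∈ Φ := hpos hu'
      have hσuΦ : σ u ∈ Φ := hσΦ u huΦ
      have hunα : u ≠ α := by
        rintro rfl
        have heq : σ u = -u := by
          rw [hσ, hnorm u hαΦ, two_smul]
          abel
        rw [heq] at hσuM
        exact hMneg u hαM hσuM
      have hunnα : u ≠ -α := by
        rintro rfl
        exact (hsplit α hαΦ).mp hαpos (by simpa using hu')
      rcases hinner_cases u huΦ hunα hunnα with h | h | h
      · exfalso
        have heq : σ u = u + α := by rw [hσ, h, neg_one_smul, sub_neg_eq_add]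
        rw [heq] at hσuΦ hσunpos
        exact hσunpos (hsum u hu' α hαpos hσuΦ)
      · exfalso
        have heq : σ u = u := by rw [hσ, h, zero_smul, sub_zero]
        rw [heq] at hσunpos
        exact hσunpos hu'
      · have heq : σ u = u - α := by rw [hσ, h, one_smul]
        have huM : u ∈ M := by
          have h2 : σ u + α = u := by rw [heq]; abel
          have h3 := hMsum (σ u) hσuM α hαM (by rw [h2]; exact huΦ)
          rwa [h2] at h3
        have hαupos : α - u ∈ Φpos := by
          have h2 : -(σ u) ∈ Φpos := by
            have := hsplit _ hσuΦ
            tauto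
          rw [heq, neg_sub] at h2
          exact h2
        have hαunM : α - u ∉ M := by
          have h2 : α - u = -(σ u) := by rw [heq]; abel
          rw [h2]
          exact hMneg _ hσuM
        rw [Finset.mem_sdiff, hPdef, Finset.mem_filter, hDdef,
          Finset.mem_filter]
        refine ⟨⟨(hSmem u).mpr ⟨hu', huM⟩, hαupos⟩, ?_⟩
        rintro ⟨-, hαuS⟩
        exact hαunM ((hSmem _).mp hαuS).2
    · intro hmem
      rw [Finset.mem_sdiff, hPdef, Finset.mem_filter, hDdef,
        Finset.mem_filter] at hmem
      obtain ⟨⟨huS, hαupos⟩, hnD⟩ := hmem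
      obtain ⟨hupos, huM⟩ := (hSmem u).mp huS
      have hαunM : α - u ∉ M := fun h => hnD ⟨huS, (hSmem _).mpr ⟨hαupos, h⟩⟩
      have huΦ : u ∈ Φ := hpos hupos
      have h1 : ⟪α, u⟫ = 1 := hinner_one u (hpos hαupos) huΦ
      have heq : σ u = u - α := by rw [hσ, h1, one_smul]
      have hσuΦ : σ u ∈ Φ := hσΦ u huΦ
      have hσunpos : σ u ∉ Φpos := by
        rw [heq]
        intro h
        have h2 : -(α - u) ∈ Φpos := by rwa [neg_sub]
        exact (hsplit _ (hpos hαupos)).mp hαupos h2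
      have hσuM : σ u ∈ M := by
        have h2 : σ u = -(α - u) := by rw [heq]; abel
        rw [h2]
        exact hMneg' _ (hpos hαupos) hαunM
      rw [himg, Finset.mem_sdiff]
      refine ⟨(hTmem _).mpr ⟨?_, hσuM⟩, ?_⟩
      · rw [hσσ]; exact hupos
      · intro hS
        exact hσunpos ((hSmem _).mp hS).1
  -- cardinalities
  have hPD : D ⊆ P := by
    intro x hx
    rw [hDdef, Finset.mem_filter] at hx
    rw [hPdef, Finset.mem_filter]
    exact ⟨hx.1, ((hSmem _).mp hx.2).1⟩
  have hcard1 : (S \ T).card = P.card + 1 := by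
    rw [hST, Finset.card_insert_of_notMem hαnP]
  have hcard2 : (T \ S).card = P.card - D.card := by
    rw [← Finset.card_image_of_injective (T \ S) hσinj, hTS,
      Finset.card_sdiff_of_subset hPD]
  have hDcardP : D.card ≤ P.card := Finset.card_le_card hPD
  have hSTcard : S.card = T.card + 1 + D.card := by
    have h1 := Finset.card_inter_add_card_sdiff S T
    have h2 := Finset.card_inter_add_card_sdiff T S
    rw [Finset.inter_comm] at h2
    omega
  have hαS : α ∈ S := (hSmem α).mpr ⟨hαpos, hαM⟩
  have hScard1 : 1 ≤ S.card := Finset.card_pos.mpr ⟨α, hαS⟩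
  rw [hcardT]
  constructor
  · intro h hex
    obtain ⟨β, hβ, δ, hδ, hαβδ⟩ := hex
    have hβD : β ∈ D := by
      rw [hDdef, Finset.mem_filter]
      refine ⟨hβ, ?_⟩
      have heq : α - β = δ := by rw [hαβδ]; abel
      rw [heq]
      exact hδ
    have hDpos : 1 ≤ D.card := Finset.card_pos.mpr ⟨β, hβD⟩
    omega
  · intro h
    have hD0 : D = ∅ := by
      by_contra hne
      obtain ⟨β, hβ⟩ := Finset.nonempty_of_ne_empty hne
      rw [hDdef, Finset.mem_filter] at hβ
      exact h ⟨β, hβ.1, α - β, hβ.2, by abel⟩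
    rw [hD0, Finset.card_empty] at hSTcard
    omega
end

section
/- Let w ∈ W and α ∈ Φ⁺ ∩ wΦ⁻ with |Φ⁺ ∩ (σ_α w)Φ⁻| = |Φ⁺ ∩ wΦ⁻| − 1. Then Φ⁺ ∩ (σ_α w)Φ⁻ = { β − α : β ∈ Φ⁺ ∩ wΦ⁻, (α,β) = 1, α ≺ β, β − α ∉ Φ⁺ ∩ wΦ⁻ } ∪ { β ∈ Φ⁺ ∩ wΦ⁻ : β ≠ α, and not ((α,β) = 1 and α ≺ β and β − α ∉ Φ⁺ ∩ wΦ⁻) }. Moreover, the map from (Φ⁺ ∩ wΦ⁻) \ {α} to Φ⁺ ∩ (σ_α w)Φ⁻ sending β to β − α when (α,β) = 1, α ≺ β and β − α ∉ Φ⁺ ∩ wΦ⁻, and sending β to β otherwise, is a bijection. -/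
open scoped RealInnerProductSpace

open Classical in
/-- Description of `Φ⁺ ∩ (σ_α w)Φ⁻` obtained from `Φ⁺ ∩ wΦ⁻` when `σ_α` is an
admissible sorting reflection, together with the induced bijection
`(Φ⁺ ∩ wΦ⁻) \ {α} → Φ⁺ ∩ (σ_α w)Φ⁻`. -/
theorem decrease_set_procedure {V : Type*} [NormedAddCommGroup V]
    [InnerProductSpace ℝ V] [FiniteDimensional ℝ V] [DecidableEq V]
    (Φ : Finset V)
    (hΦ0 : (0 : V) ∉ Φ)
    (hrefl : ∀ α ∈ Φ, ∀ β ∈ Φ, β - ⟪α, β⟫ • α ∈ Φ)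
    (hred : ∀ α ∈ Φ, ∀ c : ℝ, c • α ∈ Φ → c = 1 ∨ c = -1)
    (hcrys : ∀ α ∈ Φ, ∀ β ∈ Φ, ∃ n : ℤ, ⟪α, β⟫ = (n : ℝ))
    (hnorm : ∀ α ∈ Φ, ⟪α, α⟫ = 2)
    (Φpos : Finset V) (hpos : Φpos ⊆ Φ)
    (hsplit : ∀ α ∈ Φ, (α ∈ Φpos ↔ -α ∉ Φpos))
    (r : ℕ) (simple : Fin r → V)
    (hsmem : ∀ i, simple i ∈ Φpos)
    (hsind : LinearIndependent ℝ simple)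
    (hsspan : ∀ α ∈ Φpos, ∃ c : Fin r → ℕ, α = ∑ j, (c j : ℝ) • simple j)
    (w : V ≃ₗ[ℝ] V)
    (hw : w ∈ Subgroup.closure
      {u : V ≃ₗ[ℝ] V | ∃ α ∈ Φ, ∀ v, u v = v - ⟪α, v⟫ • α})
    (α : V)
    (N N' : Finset V)
    (hN : N = Φpos ∩ Φpos.image (fun x => w (-x)))
    (hN' : N' = Φpos ∩ (Φpos.image (fun x => w (-x))).image (fun v => v - ⟪α, v⟫ • α))
    (hα : α ∈ N)
    (hlen : N'.card = N.card - 1) :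
    (↑N' : Set V) =
        (fun β => β - α) ''
          {β : V | β ∈ N ∧ (⟪α, β⟫ = 1 ∧ posSum Φpos α β ∧ β - α ∉ N)} ∪
        {β : V | β ∈ N ∧ β ≠ α ∧ ¬ (⟪α, β⟫ = 1 ∧ posSum Φpos α β ∧ β - α ∉ N)} ∧
      Set.BijOn
        (fun β => if ⟪α, β⟫ = 1 ∧ posSum Φpos α β ∧ β - α ∉ N then β - α else β)
        ((↑N : Set V) \ {α}) (↑N' : Set V) := by
  classical
  set M : Finset V := Φpos.image (fun x => w (-x)) with hMdef
  -- basic facts about α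
  have hαpos : α ∈ Φpos := by rw [hN] at hα; exact (Finset.mem_inter.mp hα).1
  have hαM : α ∈ M := by rw [hN] at hα; exact (Finset.mem_inter.mp hα).2
  have hαΦ : α ∈ Φ := hpos hαpos
  have hαα : ⟪α, α⟫ = (2:ℝ) := hnorm α hαΦ
  -- Φ is closed under negation
  have hnegΦ : ∀ x ∈ Φ, -x ∈ Φ := by
    intro x hx
    have h := hrefl x hx x hx
    rw [hnorm x hx] at h
    have e : x - (2:ℝ) • x = -x := by rw [two_smul]; abel
    rwa [e] at h
  -- the positivity functional
  obtain ⟨lam, hlam⟩ : ∃ lam : V →ₗ[ℝ] ℝ, ∀ j, lam (simple j) = 1 := by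
    have hKm : ∀ j, simple j ∈ Submodule.span ℝ (Set.range simple) :=
      fun j => Submodule.subset_span ⟨j, rfl⟩
    refine ⟨((Finsupp.linearCombination ℝ (fun _ : Fin r => (1:ℝ))).comp
      hsind.repr).comp
      (Submodule.orthogonalProjectionOnto (Submodule.span ℝ (Set.range simple))).toLinearMap, fun j => ?_⟩
    have h1 : Submodule.orthogonalProjectionOnto (Submodule.span ℝ (Set.range simple)) (simple j)
        = ⟨simple j, hKm j⟩ :=
      Submodule.orthogonalProjectionOnto_mem_subspace_eq_self ⟨simple j, hKm j⟩
    have h2 : hsind.repr ⟨simple j, hKm j⟩ = Finsupp.single j 1 :=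
      hsind.repr_eq_single j ⟨simple j, hKm j⟩ rfl
    simp [LinearMap.comp_apply, h1, h2, Finsupp.linearCombination_single]
  have hlampos : ∀ x ∈ Φpos, 0 < lam x := by
    intro x hx
    obtain ⟨c, hc⟩ := hsspan x hx
    have hx0 : x ≠ 0 := fun h => hΦ0 (h ▸ hpos hx)
    have hlx : lam x = ∑ j, (c j : ℝ) := by
      rw [hc, map_sum]
      refine Finset.sum_congr rfl fun j _ => ?_
      rw [map_smul, hlam, smul_eq_mul, mul_one]
    have hnn : (0:ℝ) ≤ ∑ j, (c j : ℝ) :=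
      Finset.sum_nonneg fun j _ => by positivity
    rcases hnn.lt_or_eq with h | h
    · rw [hlx]; exact h
    · exfalso
      apply hx0
      have hz : ∀ j ∈ Finset.univ, (c j : ℝ) = 0 :=
        (Finset.sum_eq_zero_iff_of_nonneg (fun j _ => by positivity)).mp h.symm
      rw [hc]
      exact Finset.sum_eq_zero fun j hj => by rw [hz j hj, zero_smul]
  have hposdet : ∀ x ∈ Φ, 0 < lam x → x ∈ Φpos := by
    intro x hx hl
    by_contra hnp
    have hnx : -x ∈ Φpos := by have := hsplit x hx; tauto
    have := hlampos _ hnx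
    rw [map_neg] at this; linarith
  have hsumpos : ∀ m : Multiset V, m ≠ 0 → (∀ x ∈ m, x ∈ Φpos) → 0 < lam m.sum := by
    have key : ∀ m : Multiset V, (∀ x ∈ m, x ∈ Φpos) → 0 ≤ lam m.sum := by
      intro m
      induction m using Multiset.induction with
      | empty => intro _; simp
      | cons a t ih =>
        intro h
        rw [Multiset.sum_cons, map_add]
        have h1 := hlampos a (h a (Multiset.mem_cons_self a t))
        have h2 := ih (fun x hx => h x (Multiset.mem_cons_of_mem hx))
        linarith
    intro m hm0 hmm
    obtain ⟨x, hx⟩ := Multiset.exists_mem_of_ne_zero hm0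
    obtain ⟨m', rfl⟩ := Multiset.exists_cons_of_mem hx
    rw [Multiset.sum_cons, map_add]
    have h1 := hlampos x (hmm x (Multiset.mem_cons_self x m'))
    have h2 := key m' (fun y hy => hmm y (Multiset.mem_cons_of_mem hy))
    linarith
  -- elements of the reflection group preserve Φ
  have hWmem : ∀ u : V ≃ₗ[ℝ] V, u ∈ Subgroup.closure
      {u : V ≃ₗ[ℝ] V | ∃ γ ∈ Φ, ∀ v, u v = v - ⟪γ, v⟫ • γ} → ∀ x : V, x ∈ Φ ↔ u x ∈ Φ := by
    intro u hu
    induction hu using Subgroup.closure_induction with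
    | mem u hu =>
      obtain ⟨γ, hγ, hu⟩ := hu
      intro x
      constructor
      · intro hx; rw [hu x]; exact hrefl γ hγ x hx
      · intro hx
        have h2 := hrefl γ hγ (u x) hx
        have e : u x - ⟪γ, u x⟫ • γ = x := by
          rw [hu x, inner_sub_right, real_inner_smul_right, hnorm γ hγ]
          module
        rwa [e] at h2
    | one => intro x; simp
    | mul u v _ _ ihu ihv =>
      intro x
      have e : (u * v) x = u (v x) := rfl
      rw [e, ihv x, ihu (v x)]
    | inv u _ ih =>
      intro x
      have e : (u⁻¹) x = u.symm x := rfl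
      have h := ih (u.symm x)
      rw [u.apply_symm_apply] at h
      rw [e, ← h]
  -- facts about M = wΦ⁻
  have hMmem : ∀ γ, γ ∈ M ↔ ∃ x ∈ Φpos, w (-x) = γ := by
    intro γ; rw [hMdef, Finset.mem_image]
  have hMΦ : ∀ γ ∈ M, γ ∈ Φ := by
    intro γ hγ
    obtain ⟨x, hx, rfl⟩ := (hMmem γ).mp hγ
    exact (hWmem w hw (-x)).mp (hnegΦ x (hpos hx))
  have hMneg : ∀ γ ∈ Φ, (γ ∈ M ↔ -γ ∉ M) := by
    intro γ hγ
    have hyΦ : w.symm γ ∈ Φ := by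
      have h := hWmem w hw (w.symm γ)
      rw [w.apply_symm_apply] at h
      exact h.mpr hγ
    have h1 : γ ∈ M ↔ -(w.symm γ) ∈ Φpos := by
      rw [hMmem]
      constructor
      · rintro ⟨x, hx, hw'⟩
        have hxy : -x = w.symm γ := by rw [← hw', w.symm_apply_apply]
        have : x = -(w.symm γ) := by rw [← hxy, neg_neg]
        rwa [← this]
      · intro h
        exact ⟨-(w.symm γ), h, by rw [neg_neg, w.apply_symm_apply]⟩
    have h2 : -γ ∈ M ↔ w.symm γ ∈ Φpos := by
      rw [hMmem]
      constructor
      · rintro ⟨x, hx, hw'⟩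
        have hwx : w x = γ := by
          have := congrArg Neg.neg hw'
          rwa [map_neg, neg_neg, neg_neg] at this
        have : x = w.symm γ := by rw [← hwx, w.symm_apply_apply]
        rwa [← this]
      · intro h
        exact ⟨w.symm γ, h, by rw [map_neg, w.apply_symm_apply]⟩
    have h3 := hsplit _ hyΦ
    rw [h1, h2]; tauto
  have hMadd : ∀ γ ∈ M, ∀ δ ∈ M, γ + δ ∈ Φ → γ + δ ∈ M := by
    intro γ hγ δ hδ hsum
    obtain ⟨x, hx, rfl⟩ := (hMmem γ).mp hγ
    obtain ⟨y, hy, rfl⟩ := (hMmem δ).mp hδ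
    have hxy : w (-x) + w (-y) = w (-(x+y)) := by
      rw [← map_add]; congr 1; abel
    rw [hxy] at hsum ⊢
    have h1 : -(x+y) ∈ Φ := (hWmem w hw _).mpr hsum
    have h2 : x + y ∈ Φ := by have := hnegΦ _ h1; rwa [neg_neg] at this
    have h3 : x + y ∈ Φpos := by
      refine hposdet _ h2 ?_
      rw [map_add]
      have := hlampos x hx; have := hlampos y hy; linarith
    exact (hMmem _).mpr ⟨x+y, h3, rfl⟩
  have hNmem : ∀ γ, γ ∈ N ↔ γ ∈ Φpos ∧ γ ∈ M := by
    intro γ; rw [hN, Finset.mem_inter]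
  -- the reflection σ_α is an involution
  have hsinvol : ∀ v : V, (v - ⟪α, v⟫ • α) - ⟪α, v - ⟪α, v⟫ • α⟫ • α = v := by
    intro v
    rw [inner_sub_right, real_inner_smul_right, hαα]
    module
  have hN'mem : ∀ γ, γ ∈ N' ↔ γ ∈ Φpos ∧ γ - ⟪α, γ⟫ • α ∈ M := by
    intro γ
    rw [hN', Finset.mem_inter, Finset.mem_image]
    constructor
    · rintro ⟨h1, m, hm, hm2⟩
      refine ⟨h1, ?_⟩
      rw [← hm2, hsinvol m]
      exact hm
    · rintro ⟨h1, h2⟩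
      exact ⟨h1, γ - ⟪α, γ⟫ • α, h2, hsinvol γ⟩
  -- possible inner products with α
  have hbound : ∀ β ∈ Φ, β ≠ α → β ≠ -α → (⟪α, β⟫ = -1 ∨ ⟪α, β⟫ = 0 ∨ ⟪α, β⟫ = 1) := by
    intro β hβ hne hne'
    obtain ⟨n, hn⟩ := hcrys α hαΦ β hβ
    have hββ := hnorm β hβ
    have e1 : ⟪β - α, β - α⟫ = 4 - 2 * ⟪α, β⟫ := by
      rw [real_inner_sub_sub_self, hββ, hαα, real_inner_comm β α]; ring
    have e2 : ⟪β + α, β + α⟫ = 4 + 2 * ⟪α, β⟫ := by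
      rw [real_inner_add_add_self, hββ, hαα, real_inner_comm β α]; ring
    have h1 : (0:ℝ) ≤ ⟪β - α, β - α⟫ := real_inner_self_nonneg
    have h2 : (0:ℝ) ≤ ⟪β + α, β + α⟫ := real_inner_self_nonneg
    have hn2 : n ≤ 2 := by
      have : (n:ℝ) ≤ 2 := by nlinarith [h1, e1, hn]
      exact_mod_cast this
    have hnm2 : -2 ≤ n := by
      have : (-2:ℝ) ≤ (n:ℝ) := by nlinarith [h2, e2, hn]
      exact_mod_cast this
    have hne2 : n ≠ 2 := by
      intro h
      apply hne
      have hz : ⟪β - α, β - α⟫ = 0 := by rw [e1, hn, h]; norm_num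
      have := inner_self_eq_zero.mp hz
      rwa [sub_eq_zero] at this
    have hnem2 : n ≠ -2 := by
      intro h
      apply hne'
      have hz : ⟪β + α, β + α⟫ = 0 := by rw [e2, hn, h]; norm_num
      have := inner_self_eq_zero.mp hz
      rw [add_eq_zero_iff_eq_neg] at this
      exact this
    have : n = -1 ∨ n = 0 ∨ n = 1 := by omega
    rcases this with h | h | h
    · left; rw [hn, h]; norm_num
    · right; left; rw [hn, h]; norm_num
    · right; right; rw [hn, h]; norm_num
  -- KEY LEMMA (uses hlen): no "bad" elements
  have hkey : ∀ β, β ∈ Φpos → β ∈ M → ⟪α, β⟫ = 1 → β - α ∉ M → β - α ∈ Φpos := by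
    intro β hβpos hβM hβ1 hβαM
    by_contra hcon
    have hβΦ : β ∈ Φ := hpos hβpos
    have hβαΦ : β - α ∈ Φ := by
      have := hrefl α hαΦ β hβΦ; rwa [hβ1, one_smul] at this
    have hβα : β ≠ α := by
      intro h; rw [h, hαα] at hβ1; norm_num at hβ1
    have hβN : β ∈ N := (hNmem β).mpr ⟨hβpos, hβM⟩
    -- the counting injection h : N' → (N \ {α, β})
    have hmaps : ∀ δ ∈ N',
        (if δ ∈ M then δ else δ - ⟪α, δ⟫ • α) ∈ (N.erase α).erase β := by
      intro δ hδ
      obtain ⟨hδpos, hδs⟩ := (hN'mem δ).mp hδ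
      have hδΦ : δ ∈ Φ := hpos hδpos
      by_cases hδM : δ ∈ M
      · rw [if_pos hδM]
        refine Finset.mem_erase.mpr ⟨?_, Finset.mem_erase.mpr
          ⟨?_, (hNmem δ).mpr ⟨hδpos, hδM⟩⟩⟩
        · rintro rfl
          rw [hβ1, one_smul] at hδs
          exact hβαM hδs
        · intro hEq
          rw [hEq, hαα] at hδs
          have e : α - (2:ℝ) • α = -α := by rw [two_smul]; abel
          rw [e] at hδs
          exact ((hMneg α hαΦ).mp hαM) hδs
      · rw [if_neg hδM]
        have hδα : δ ≠ α := fun h => hδM (h ▸ hαM)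
        have hδnα : δ ≠ -α := by
          rintro rfl; exact (hsplit α hαΦ).mp hαpos hδpos
        rcases hbound δ hδΦ hδα hδnα with h | h | h
        · -- inner = -1 : image is δ + α
          rw [h, neg_smul, one_smul, sub_neg_eq_add] at hδs ⊢
          have hδαΦ : δ + α ∈ Φ := hMΦ _ hδs
          have hδαpos : δ + α ∈ Φpos := by
            refine hposdet _ hδαΦ ?_
            rw [map_add]
            have := hlampos δ hδpos; have := hlampos α hαpos; linarith
          refine Finset.mem_erase.mpr ⟨?_, Finset.mem_erase.mpr
            ⟨?_, (hNmem _).mpr ⟨hδαpos, hδs⟩⟩⟩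
          · intro hEq
            apply hcon
            have e : δ = β - α := by rw [← hEq]; abel
            rwa [← e]
          · intro hEq
            have e : δ = 0 := by
              have := hEq
              rwa [add_eq_right] at this
            exact hΦ0 (e ▸ hδΦ)
        · -- inner = 0 : impossible here
          rw [h, zero_smul, sub_zero] at hδs
          exact absurd hδs hδM
        · -- inner = 1 : image is δ - α
          rw [h, one_smul] at hδs ⊢
          have hδαΦ : δ - α ∈ Φ := hMΦ _ hδs
          have hδαpos : δ - α ∈ Φpos := by
            by_contra hnp
            have hαδΦ : α - δ ∈ Φ := by
              have := hnegΦ _ hδαΦ; rwa [neg_sub] at this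
            have hαδpos : α - δ ∈ Φpos := by
              have hsp := hsplit _ hδαΦ
              have h2 : -(δ - α) ∈ Φpos := by tauto
              rwa [neg_sub] at h2
            have h3 : -δ ∈ M := by
              have := hMneg δ hδΦ; tauto
            have h4 : -(α - δ) ∈ M := by rw [neg_sub]; exact hδs
            have h5 : -δ + -(α - δ) ∈ Φ := by
              have e : -δ + -(α - δ) = -α := by abel
              rw [e]; exact hnegΦ α hαΦ
            have h6 := hMadd _ h3 _ h4 h5
            have e : -δ + -(α - δ) = -α := by abel
            rw [e] at h6
            exact ((hMneg α hαΦ).mp hαM) h6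
          refine Finset.mem_erase.mpr ⟨?_, Finset.mem_erase.mpr
            ⟨?_, (hNmem _).mpr ⟨hδαpos, hδs⟩⟩⟩
          · intro hEq
            have e : δ = β + α := by rw [← hEq]; abel
            rw [e, inner_add_right, hβ1, hαα] at h
            norm_num at h
          · intro hEq
            have e : δ = α + α := eq_add_of_sub_eq hEq
            rw [e, inner_add_right, hαα] at h
            norm_num at h
    have hinj : Set.InjOn (fun δ => if δ ∈ M then δ else δ - ⟪α, δ⟫ • α) ↑N' := by
      intro x hx y hy hxy
      obtain ⟨hxpos, hxs⟩ := (hN'mem x).mp (Finset.mem_coe.mp hx)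
      obtain ⟨hypos, hys⟩ := (hN'mem y).mp (Finset.mem_coe.mp hy)
      simp only at hxy
      by_cases hxM : x ∈ M <;> by_cases hyM : y ∈ M
      · rwa [if_pos hxM, if_pos hyM] at hxy
      · rw [if_pos hxM, if_neg hyM] at hxy
        exfalso
        subst hxy
        rw [hsinvol y] at hxs
        exact hyM hxs
      · rw [if_neg hxM, if_pos hyM] at hxy
        exfalso
        rw [← hxy, hsinvol x] at hys
        exact hxM hys
      · rw [if_neg hxM, if_neg hyM] at hxy
        have := congrArg (fun v => v - ⟪α, v⟫ • α) hxy
        simpa only [hsinvol x, hsinvol y] using this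
    have hcard := Finset.card_le_card_of_injOn _ hmaps hinj
    have hβmem : β ∈ N.erase α := Finset.mem_erase.mpr ⟨hβα, hβN⟩
    have e1 : (N.erase α).card = N.card - 1 := Finset.card_erase_of_mem hα
    have e2 : ((N.erase α).erase β).card = (N.erase α).card - 1 :=
      Finset.card_erase_of_mem hβmem
    have e3 : 0 < (N.erase α).card := Finset.card_pos.mpr ⟨β, hβmem⟩
    have e4 : 0 < N.card := Finset.card_pos.mpr ⟨α, hα⟩
    omega
  -- the two clauses of the map land in N'
  have hPtrueN' : ∀ β ∈ N, ⟪α, β⟫ = 1 → posSum Φpos α β → β - α ∉ N → β - α ∈ N' := by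
    intro β hβN h1 hps hβαN
    obtain ⟨hβpos, hβM⟩ := (hNmem β).mp hβN
    have hβΦ : β ∈ Φ := hpos hβpos
    have hβαΦ : β - α ∈ Φ := by
      have := hrefl α hαΦ β hβΦ; rwa [h1, one_smul] at this
    by_cases hm : β - α ∈ M
    · exfalso
      have hβαnpos : β - α ∉ Φpos := fun h => hβαN ((hNmem _).mpr ⟨h, hm⟩)
      have hαβpos : α - β ∈ Φpos := by
        have hsp := hsplit _ hβαΦ
        have h2 : -(β - α) ∈ Φpos := by tauto
        rwa [neg_sub] at h2
      obtain ⟨m, hm0, hmm, hmsum⟩ := hps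
      have hp1 := hsumpos m hm0 hmm
      rw [hmsum] at hp1
      have hp2 := hlampos _ hαβpos
      rw [map_sub] at hp1 hp2
      linarith
    · have hβαpos : β - α ∈ Φpos := hkey β hβpos hβM h1 hm
      refine (hN'mem _).mpr ⟨hβαpos, ?_⟩
      have hc : ⟪α, β - α⟫ = -1 := by
        rw [inner_sub_right, h1, hαα]; norm_num
      rw [hc, neg_smul, one_smul, sub_neg_eq_add]
      have e : β - α + α = β := by abel
      rw [e]; exact hβM
  have hPfalseN' : ∀ β ∈ N, β ≠ α →
      ¬(⟪α, β⟫ = 1 ∧ posSum Φpos α β ∧ β - α ∉ N) → β ∈ N' := by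
    intro β hβN hβα hnP
    obtain ⟨hβpos, hβM⟩ := (hNmem β).mp hβN
    have hβΦ : β ∈ Φ := hpos hβpos
    have hβnα : β ≠ -α := by
      rintro rfl; exact (hsplit α hαΦ).mp hαpos hβpos
    refine (hN'mem _).mpr ⟨hβpos, ?_⟩
    rcases hbound β hβΦ hβα hβnα with h | h | h
    · rw [h, neg_smul, one_smul, sub_neg_eq_add]
      refine hMadd β hβM α hαM ?_
      have := hrefl α hαΦ β hβΦ
      rwa [h, neg_smul, one_smul, sub_neg_eq_add] at this
    · rw [h, zero_smul, sub_zero]; exact hβM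
    · rw [h, one_smul]
      by_cases hm : β - α ∈ M
      · exact hm
      · exfalso
        apply hnP
        have hβαpos := hkey β hβpos hβM h hm
        refine ⟨h, ⟨{β - α}, by simp, by simp [hβαpos], by simp⟩, ?_⟩
        intro hIn
        exact hm ((hNmem _).mp hIn).2
  -- assemble the bijection
  have hmapsTo : ∀ β ∈ N.erase α,
      (if ⟪α, β⟫ = 1 ∧ posSum Φpos α β ∧ β - α ∉ N then β - α else β) ∈ N' := by
    intro β hβ
    obtain ⟨hβα, hβN⟩ := Finset.mem_erase.mp hβ
    split_ifs with hP
    · exact hPtrueN' β hβN hP.1 hP.2.1 hP.2.2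
    · exact hPfalseN' β hβN hβα hP
  have hinjOn : ∀ a₁ ∈ N.erase α, ∀ a₂ ∈ N.erase α,
      (if ⟪α, a₁⟫ = 1 ∧ posSum Φpos α a₁ ∧ a₁ - α ∉ N then a₁ - α else a₁) =
      (if ⟪α, a₂⟫ = 1 ∧ posSum Φpos α a₂ ∧ a₂ - α ∉ N then a₂ - α else a₂) → a₁ = a₂ := by
    intro x hx y hy hxy
    obtain ⟨hxα, hxN⟩ := Finset.mem_erase.mp hx
    obtain ⟨hyα, hyN⟩ := Finset.mem_erase.mp hy
    split_ifs at hxy with h1 h2 h2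
    · exact sub_left_inj.mp hxy
    · exact absurd (hxy ▸ hyN) h1.2.2
    · exact absurd (hxy ▸ hxN) h2.2.2
    · exact hxy
  have hdiff : ∀ x : V, x ∈ (↑N : Set V) \ {α} ↔ x ∈ N.erase α := by
    intro x
    simp [Finset.mem_erase, Set.mem_diff, and_comm]
  have hbij : Set.BijOn
      (fun β => if ⟪α, β⟫ = 1 ∧ posSum Φpos α β ∧ β - α ∉ N then β - α else β)
      ((↑N : Set V) \ {α}) (↑N' : Set V) := by
    refine ⟨?_, ?_, ?_⟩
    · intro x hx
      exact Finset.mem_coe.mpr (hmapsTo x ((hdiff x).mp hx))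
    · intro x hx y hy hxy
      exact hinjOn x ((hdiff x).mp hx) y ((hdiff y).mp hy) hxy
    · intro x hx
      have hcard : N'.card ≤ (N.erase α).card := by
        rw [hlen, Finset.card_erase_of_mem hα]
      obtain ⟨a, ha, hax⟩ := Finset.surj_on_of_inj_on_of_card_le
        (fun a (_ : a ∈ N.erase α) =>
          if ⟪α, a⟫ = 1 ∧ posSum Φpos α a ∧ a - α ∉ N then a - α else a)
        (fun a ha => hmapsTo a ha)
        (fun a₁ a₂ ha₁ ha₂ h => hinjOn a₁ ha₁ a₂ ha₂ h)
        hcard x (Finset.mem_coe.mp hx)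
      exact ⟨a, (hdiff a).mpr ha, hax.symm⟩
  refine ⟨?_, hbij⟩
  rw [← hbij.image_eq]
  ext x
  simp only [Set.mem_image, Set.mem_union, Set.mem_setOf_eq, Set.mem_diff,
    Set.mem_singleton_iff, Finset.mem_coe]
  constructor
  · rintro ⟨β, ⟨hβN, hβα⟩, rfl⟩
    by_cases hP : ⟪α, β⟫ = 1 ∧ posSum Φpos α β ∧ β - α ∉ N
    · left; exact ⟨β, ⟨hβN, hP⟩, (if_pos hP).symm⟩
    · right; rw [if_neg hP]; exact ⟨hβN, hβα, hP⟩
  · rintro (⟨β, ⟨hβN, hP⟩, rfl⟩ | ⟨hxN, hxα, hnP⟩)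
    · refine ⟨β, ⟨hβN, ?_⟩, if_pos hP⟩
      rintro rfl
      have := hP.1
      rw [hαα] at this
      norm_num at this
    · exact ⟨x, ⟨hxN, hxα⟩, if_neg hnP⟩
end

section
/- Let w ∈ W and α ∈ Φ⁺ ∩ wΦ⁻. The following three conditions are equivalent: (1) w⁻¹α ∈ −Π; (2) α is a maximal element of the set Φ⁺ ∩ wΦ⁻ with respect to the order ≺_w (i.e. there is no β ∈ Φ⁺ ∩ wΦ⁻ with α ≺_w β); (3) it is impossible to find roots β, γ ∈ Φ⁺ ∩ wΦ⁻ such that α = β + γ, and it is impossible to find a root β ∈ Φ⁺ ∩ wΦ⁻ such that α ≺ β, (α,β) = 1 and β − α ∉ Φ⁺ ∩ wΦ⁻. -/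
open scoped RealInnerProductSpace

lemma weyl_pres {V : Type*} [NormedAddCommGroup V] [InnerProductSpace ℝ V]
    (Φ : Finset V)
    (hrefl : ∀ α ∈ Φ, ∀ β ∈ Φ, β - ⟪α, β⟫ • α ∈ Φ)
    (hnorm : ∀ α ∈ Φ, ⟪α, α⟫ = 2)
    (w : V ≃ₗ[ℝ] V)
    (hw : w ∈ Subgroup.closure {u : V ≃ₗ[ℝ] V | ∃ α ∈ Φ, ∀ v, u v = v - ⟪α, v⟫ • α}) :
    (∀ a b : V, ⟪w a, w b⟫ = ⟪a, b⟫) ∧ (∀ ρ ∈ Φ, w ρ ∈ Φ) ∧ (∀ ρ ∈ Φ, w⁻¹ ρ ∈ Φ) := by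
  induction hw using Subgroup.closure_induction with
  | mem u hu =>
    obtain ⟨a0, ha0, hu⟩ := hu
    have key : ∀ x y : V, ⟪u x, u y⟫ = ⟪x, y⟫ := by
      intro x y
      rw [hu x, hu y]
      simp only [inner_sub_left, inner_sub_right, real_inner_smul_left,
        real_inner_smul_right]
      rw [hnorm a0 ha0, real_inner_comm x a0, real_inner_comm y a0]
      ring
    have invol : ∀ v, u (u v) = v := by
      intro v
      rw [hu (u v), hu v, inner_sub_right, real_inner_smul_right, hnorm a0 ha0]
      module
    have hmem : ∀ ρ ∈ Φ, u ρ ∈ Φ := by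
      intro ρ hρ
      rw [hu ρ]
      exact hrefl a0 ha0 ρ hρ
    have hinv : ∀ v : V, u (u⁻¹ v) = v := by
      intro v
      show (u * u⁻¹) v = v
      rw [mul_inv_cancel]; rfl
    refine ⟨key, hmem, fun ρ hρ => ?_⟩
    have h1 : u⁻¹ ρ = u ρ := by
      have h2 : u (u⁻¹ ρ) = u (u ρ) := by
        rw [hinv, invol]
      exact u.injective h2
    rw [h1]; exact hmem ρ hρ
  | one => exact ⟨fun a b => rfl, fun ρ hρ => hρ, fun ρ hρ => by rw [inv_one]; exact hρ⟩
  | mul u v hu hv ihu ihv =>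
    refine ⟨fun a b => by rw [show (u*v) a = u (v a) from rfl,
      show (u*v) b = u (v b) from rfl, ihu.1, ihv.1],
      fun ρ hρ => ihu.2.1 _ (ihv.2.1 ρ hρ), fun ρ hρ => ?_⟩
    rw [mul_inv_rev]
    exact ihv.2.2 _ (ihu.2.2 ρ hρ)
  | inv u hu ihu =>
    refine ⟨fun a b => ?_, ihu.2.2, fun ρ hρ => by rw [inv_inv]; exact ihu.2.1 ρ hρ⟩
    have hinv : ∀ v : V, u (u⁻¹ v) = v := by
      intro v
      show (u * u⁻¹) v = v
      rw [mul_inv_cancel]; rfl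
    rw [← ihu.1 (u⁻¹ a) (u⁻¹ b), hinv, hinv]

lemma height_exists {V : Type*} [NormedAddCommGroup V] [InnerProductSpace ℝ V]
    (r : ℕ) (simple : Fin r → V) (hsind : LinearIndependent ℝ simple) :
    ∃ f : V →ₗ[ℝ] ℝ, ∀ i, f (simple i) = 1 := by
  have h1 : LinearIndepOn ℝ id (Set.range simple) := (linearIndepOn_id_range_iff hsind.injective).mpr hsind
  let B := Module.Basis.extend h1
  refine ⟨B.sumCoords, fun i => ?_⟩
  have hx : simple i ∈ h1.extend (Set.subset_univ _) :=
    h1.subset_extend _ ⟨i, rfl⟩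
  have : simple i = B ⟨simple i, hx⟩ := (Module.Basis.extend_apply_self h1 ⟨simple i, hx⟩).symm
  rw [this, Module.Basis.sumCoords_self_apply]

/-- For `w` in the Weyl group and `α ∈ Φ⁺ ∩ wΦ⁻`, the following are equivalent:
(1) `w⁻¹α ∈ -Π`; (2) `α` is `≺_w`-maximal in `Φ⁺ ∩ wΦ⁻`;
(3) `α` is not a sum of two elements of `Φ⁺ ∩ wΦ⁻`, and there is no
`β ∈ Φ⁺ ∩ wΦ⁻` with `α ≺ β`, `(α,β) = 1`, `β - α ∉ Φ⁺ ∩ wΦ⁻`. -/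
theorem antisimple_iff_maximal {V : Type*} [NormedAddCommGroup V]
    [InnerProductSpace ℝ V] [FiniteDimensional ℝ V] [DecidableEq V]
    (Φ : Finset V)
    (hΦ0 : (0 : V) ∉ Φ)
    (hrefl : ∀ α ∈ Φ, ∀ β ∈ Φ, β - ⟪α, β⟫ • α ∈ Φ)
    (hred : ∀ α ∈ Φ, ∀ c : ℝ, c • α ∈ Φ → c = 1 ∨ c = -1)
    (hcrys : ∀ α ∈ Φ, ∀ β ∈ Φ, ∃ n : ℤ, ⟪α, β⟫ = (n : ℝ))
    (hnorm : ∀ α ∈ Φ, ⟪α, α⟫ = 2)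
    (Φpos : Finset V) (hpos : Φpos ⊆ Φ)
    (hsplit : ∀ α ∈ Φ, (α ∈ Φpos ↔ -α ∉ Φpos))
    (r : ℕ) (simple : Fin r → V)
    (hsmem : ∀ i, simple i ∈ Φpos)
    (hsind : LinearIndependent ℝ simple)
    (hsspan : ∀ α ∈ Φpos, ∃ c : Fin r → ℕ, α = ∑ j, (c j : ℝ) • simple j)
    (w : V ≃ₗ[ℝ] V)
    (hw : w ∈ Subgroup.closure
      {u : V ≃ₗ[ℝ] V | ∃ α ∈ Φ, ∀ v, u v = v - ⟪α, v⟫ • α})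
    (α : V)
    (N : Finset V)
    (hN : N = Φpos ∩ Φpos.image (fun x => w (-x)))
    (hα : α ∈ N) :
    ((∃ i : Fin r, w⁻¹ α = -(simple i)) ↔
        (∀ β ∈ N, ¬ posSum Φpos (w⁻¹ α) (w⁻¹ β))) ∧
      ((∀ β ∈ N, ¬ posSum Φpos (w⁻¹ α) (w⁻¹ β)) ↔
        ((¬ ∃ β ∈ N, ∃ γ ∈ N, α = β + γ) ∧
          ¬ ∃ β ∈ N, posSum Φpos α β ∧ ⟪α, β⟫ = 1 ∧ β - α ∉ N)) := by
  obtain ⟨hwinner, hwΦ, hwΦi⟩ := weyl_pres Φ hrefl hnorm w hw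
  obtain ⟨f, hf⟩ := height_exists r simple hsind
  have hWinv1 : ∀ v : V, w (w⁻¹ v) = v := fun v => w.apply_symm_apply v
  have hWinv2 : ∀ v : V, w⁻¹ (w v) = v := fun v => w.symm_apply_apply v
  -- basic height facts
  have hfge1 : ∀ a ∈ Φpos, (1:ℝ) ≤ f a := by
    intro a ha
    obtain ⟨c, hc⟩ := hsspan a ha
    have hfa : f a = ∑ j, (c j : ℝ) := by
      rw [hc, map_sum]
      simp [hf]
    have hne : ∑ j, c j ≠ 0 := by
      intro h0
      have hz : ∀ j ∈ Finset.univ, c j = 0 := Finset.sum_eq_zero_iff.mp h0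
      have ha0 : a = 0 := by
        rw [hc]
        apply Finset.sum_eq_zero
        intro j hj
        rw [hz j hj]
        simp
      exact hΦ0 (ha0 ▸ hpos ha)
    have h1 : 1 ≤ ∑ j, c j := Nat.one_le_iff_ne_zero.mpr hne
    have h2 : ((∑ j, c j : ℕ) : ℝ) = ∑ j, (c j : ℝ) := by push_cast; rfl
    rw [hfa, ← h2]
    exact_mod_cast h1
  have hfge2 : ∀ a ∈ Φpos, (∀ i, a ≠ simple i) → (2:ℝ) ≤ f a := by
    intro a ha hns
    obtain ⟨c, hc⟩ := hsspan a ha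
    have hfa : f a = ∑ j, (c j : ℝ) := by
      rw [hc, map_sum]
      simp [hf]
    have h2 : 2 ≤ ∑ j, c j := by
      by_contra hlt
      push_neg at hlt
      interval_cases h : (∑ j, c j)
      · have hz : ∀ j ∈ Finset.univ, c j = 0 := Finset.sum_eq_zero_iff.mp h
        have ha0 : a = 0 := by
          rw [hc]
          apply Finset.sum_eq_zero
          intro j hj
          rw [hz j hj]; simp
        exact hΦ0 (ha0 ▸ hpos ha)
      · obtain ⟨i, _, hi⟩ := Finset.exists_ne_zero_of_sum_ne_zero (h ▸ one_ne_zero)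
        have hsum := Finset.add_sum_erase Finset.univ c (Finset.mem_univ i)
        rw [h] at hsum
        have hci : c i = 1 := by
          have hrest : 0 ≤ ∑ j ∈ Finset.univ.erase i, c j := Nat.zero_le _
          omega
        have hrest0 : ∑ j ∈ Finset.univ.erase i, c j = 0 := by omega
        have hz : ∀ j ∈ Finset.univ.erase i, c j = 0 := Finset.sum_eq_zero_iff.mp hrest0
        have : a = simple i := by
          rw [hc, ← Finset.add_sum_erase Finset.univ _ (Finset.mem_univ i), hci]
          rw [Finset.sum_eq_zero (fun j hj => by rw [hz j hj]; simp)]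
          simp
        exact hns i this
    have h3 : ((∑ j, c j : ℕ) : ℝ) = ∑ j, (c j : ℝ) := by push_cast; rfl
    rw [hfa, ← h3]
    exact_mod_cast h2
  have hfneg : ∀ a ∈ Φ, a ∉ Φpos → f a ≤ -1 := by
    intro a ha hna
    have h2 : -a ∈ Φpos := by
      by_contra h
      exact hna ((hsplit a ha).mpr h)
    have h3 := hfge1 _ h2
    rw [map_neg] at h3
    linarith
  have hposof : ∀ a ∈ Φ, 0 ≤ f a → a ∈ Φpos := by
    intro a ha h0
    by_contra h
    linarith [hfneg a ha h]
  have hpossum : ∀ a b : V, posSum Φpos a b → f a + 1 ≤ f b := by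
    rintro a b ⟨m, hm0, hmm, hms⟩
    have h1 : f (b - a) = (m.map f).sum := by
      rw [← hms, map_multiset_sum]
    have hnn : ∀ y ∈ m.map f, (0:ℝ) ≤ y := by
      intro y hy
      obtain ⟨z, hz, rfl⟩ := Multiset.mem_map.mp hy
      linarith [hfge1 z (hmm z hz)]
    obtain ⟨p, hp⟩ := Multiset.exists_mem_of_ne_zero hm0
    have hpm : f p ∈ m.map f := Multiset.mem_map_of_mem f hp
    have h2 : f p ≤ (m.map f).sum := Multiset.single_le_sum hnn _ hpm
    have h3 : (1:ℝ) ≤ f p := hfge1 p (hmm p hp)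
    have h4 : f (b - a) = f b - f a := map_sub f b a
    linarith
  have hnegΦ : ∀ a ∈ Φ, -a ∈ Φ := by
    intro a ha
    have h := hrefl a ha a ha
    rw [hnorm a ha] at h
    have : a - (2:ℝ) • a = -a := by module
    rwa [this] at h
  -- membership in N
  have hNm : ∀ a : V, a ∈ N ↔ (a ∈ Φpos ∧ -(w⁻¹ a) ∈ Φpos) := by
    intro a
    rw [hN, Finset.mem_inter, Finset.mem_image]
    constructor
    · rintro ⟨h1, x, hx, hxa⟩
      refine ⟨h1, ?_⟩
      have hwa : w⁻¹ a = -x := by rw [← hxa, hWinv2]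
      rw [hwa, neg_neg]
      exact hx
    · rintro ⟨h1, h2⟩
      exact ⟨h1, ⟨-(w⁻¹ a), h2, by rw [neg_neg, hWinv1]⟩⟩
  have hα1 : α ∈ Φpos := ((hNm α).mp hα).1
  have hα2 : -(w⁻¹ α) ∈ Φpos := ((hNm α).mp hα).2
  have hαΦ : α ∈ Φ := hpos hα1
  -- singleton posSum
  have psingle : ∀ p a b : V, p ∈ Φpos → b - a = p → posSum Φpos a b := by
    intro p a b hp he
    refine ⟨{p}, by simp, ?_, by simp [he]⟩
    intro q hq
    rw [Multiset.mem_singleton.mp hq]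
    exact hp
  -- the key decomposition when w⁻¹α is not anti-simple
  have hnotone : (∀ i : Fin r, w⁻¹ α ≠ -(simple i)) →
      (∃ β ∈ N, posSum Φpos (w⁻¹ α) (w⁻¹ β)) ∧
      ((∃ β ∈ N, ∃ γ ∈ N, α = β + γ) ∨
        (∃ β ∈ N, posSum Φpos α β ∧ ⟪α, β⟫ = 1 ∧ β - α ∉ N)) := by
    intro hns
    set x := -(w⁻¹ α) with hxdef
    have hwx : w⁻¹ α = -x := by rw [hxdef, neg_neg]
    have hxpos : x ∈ Φpos := hα2
    have hxΦ : x ∈ Φ := hpos hxpos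
    have h2x : ⟪x, x⟫ = 2 := hnorm x hxΦ
    have hxns : ∀ i, x ≠ simple i := by
      intro i h
      exact hns i (by rw [hwx, h])
    -- find simple root with positive inner product
    obtain ⟨c, hc⟩ := hsspan x hxpos
    have hex : ∃ i, 0 < ⟪x, simple i⟫ := by
      by_contra h
      push_neg at h
      have hle : ⟪x, x⟫ ≤ 0 := by
        nth_rewrite 2 [hc]
        rw [inner_sum]
        apply Finset.sum_nonpos
        intro j _
        rw [real_inner_smul_right]
        exact mul_nonpos_of_nonneg_of_nonpos (Nat.cast_nonneg _) (h j)
      linarith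
    obtain ⟨i, hi⟩ := hex
    have hsΦ : simple i ∈ Φ := hpos (hsmem i)
    have hxs1 : ⟪x, simple i⟫ = 1 := by
      obtain ⟨n, hn⟩ := hcrys x hxΦ (simple i) hsΦ
      have hn1 : 1 ≤ n := by
        have : (0:ℝ) < n := hn ▸ hi
        exact_mod_cast this
      by_contra hne
      have hn2 : 2 ≤ n := by
        rcases lt_or_ge n 2 with h | h
        · have : n = 1 := by omega
          exact absurd (by rw [hn, this]; norm_num) hne
        · exact h
      have hnn : (0:ℝ) ≤ ⟪x - simple i, x - simple i⟫ := real_inner_self_nonneg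
      have hn' : ⟪simple i, x⟫ = (n:ℝ) := by rw [real_inner_comm]; exact hn
      have hval : ⟪x - simple i, x - simple i⟫ = 4 - 2 * n := by
        have e1 : ⟪x - simple i, x - simple i⟫ =
            ⟪x, x⟫ - ⟪x, simple i⟫ - (⟪simple i, x⟫ - ⟪simple i, simple i⟫) := by
          rw [inner_sub_left, inner_sub_right, inner_sub_right]
        rw [e1, h2x, hnorm _ hsΦ, hn, hn']
        ring
      have hle2 : (n:ℝ) ≤ 2 := by linarith
      have hn2' : n = 2 := by
        have : n ≤ 2 := by exact_mod_cast hle2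
        omega
      have hz : ⟪x - simple i, x - simple i⟫ = 0 := by
        rw [hval, hn2']
        norm_num
      have hxe : x = simple i := by
        have := inner_self_eq_zero.mp hz
        rwa [sub_eq_zero] at this
      exact hxns i hxe
    set s := simple i with hsdef
    have hy : x - s ∈ Φ := by
      have h := hrefl s hsΦ x hxΦ
      rw [real_inner_comm, hxs1, one_smul] at h
      exact h
    set y := x - s with hydef
    have hfs : f s = 1 := hf i
    have hfy : (1:ℝ) ≤ f y := by
      have h1 := hfge2 x hxpos hxns
      have h2 : f y = f x - f s := map_sub f x s
      linarith
    have hypos : y ∈ Φpos := hposof y hy (by linarith)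
    have hyΦ : y ∈ Φ := hy
    -- b = w(-y), c = w(-s)
    set b := w (-y) with hbdef
    set cc := w (-s) with hcdef
    have hwb : w⁻¹ b = -y := by rw [hbdef, hWinv2]
    have hwc : w⁻¹ cc = -s := by rw [hcdef, hWinv2]
    have hαbc : α = b + cc := by
      rw [hbdef, hcdef, ← map_add]
      rw [← hWinv1 α, hwx]
      congr 1
      rw [hydef]
      abel
    have hbΦ : b ∈ Φ := hwΦ _ (hnegΦ y hyΦ)
    have hcΦ : cc ∈ Φ := hwΦ _ (hnegΦ s hsΦ)
    have hxy1 : ⟪x, y⟫ = 1 := by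
      rw [hydef, inner_sub_right, h2x, hxs1]
      norm_num
    have hnotboth : b ∈ Φpos ∨ cc ∈ Φpos := by
      by_contra h
      push_neg at h
      have h1 := hfneg b hbΦ h.1
      have h2 := hfneg cc hcΦ h.2
      have h3 := hfge1 α hα1
      have h4 : f α = f b + f cc := by rw [hαbc, map_add]
      linarith
    have hαw : α = w (-x) := by rw [← hWinv1 α, hwx]
    rcases hnotboth with hb | hcpos
    · -- b positive
      have hbN : b ∈ N := (hNm b).mpr ⟨hb, by rw [hwb, neg_neg]; exact hypos⟩
      have hps2 : posSum Φpos (w⁻¹ α) (w⁻¹ b) := by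
        apply psingle s _ _ (hsmem i)
        rw [hwb, hwx, hydef]
        abel
      refine ⟨⟨b, hbN, hps2⟩, ?_⟩
      by_cases hcp : cc ∈ Φpos
      · exact Or.inl ⟨b, hbN, cc, (hNm cc).mpr ⟨hcp, by rw [hwc, neg_neg]; exact hsmem i⟩,
          hαbc⟩
      · refine Or.inr ⟨b, hbN, ?_, ?_, ?_⟩
        · apply psingle (-cc) _ _ (by
            by_contra hh
            exact hcp ((hsplit cc hcΦ).mpr hh))
          rw [hαbc]; abel
        · rw [hαw, hbdef, hwinner, inner_neg_neg, hxy1]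
        · intro hmem
          have h1 : b - α = -cc := by rw [hαbc]; abel
          have h2 := ((hNm _).mp hmem).2
          rw [h1] at h2
          have h3 : w⁻¹ (-cc) = s := by rw [map_neg, hwc, neg_neg]
          rw [h3] at h2
          exact ((hsplit s hsΦ).mp (hsmem i)) h2
    · -- c positive
      have hcN : cc ∈ N := (hNm cc).mpr ⟨hcpos, by rw [hwc, neg_neg]; exact hsmem i⟩
      have hps2 : posSum Φpos (w⁻¹ α) (w⁻¹ cc) := by
        apply psingle y _ _ hypos
        rw [hwc, hwx, hydef]
        abel
      refine ⟨⟨cc, hcN, hps2⟩, ?_⟩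
      by_cases hbp : b ∈ Φpos
      · exact Or.inl ⟨b, (hNm b).mpr ⟨hbp, by rw [hwb, neg_neg]; exact hypos⟩, cc, hcN, hαbc⟩
      · refine Or.inr ⟨cc, hcN, ?_, ?_, ?_⟩
        · apply psingle (-b) _ _ (by
            by_contra hh
            exact hbp ((hsplit b hbΦ).mpr hh))
          rw [hαbc]; abel
        · rw [hαw, hcdef, hwinner, inner_neg_neg, hxs1]
        · intro hmem
          have h1 : cc - α = -b := by rw [hαbc]; abel
          have h2 := ((hNm _).mp hmem).2
          rw [h1] at h2
          have h3 : w⁻¹ (-b) = y := by rw [map_neg, hwb, neg_neg]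
          rw [h3] at h2
          exact ((hsplit y hyΦ).mp hypos) h2
  -- (1) → (2)
  have hAB : (∃ i : Fin r, w⁻¹ α = -(simple i)) →
      (∀ β ∈ N, ¬ posSum Φpos (w⁻¹ α) (w⁻¹ β)) := by
    rintro ⟨i, hi⟩ β hβ hps
    have h1 := hpossum _ _ hps
    have hwa : f (w⁻¹ α) = -1 := by
      rw [hi, map_neg, hf i]
    have hβ2 : -(w⁻¹ β) ∈ Φpos := ((hNm β).mp hβ).2
    have h2 := hfge1 _ hβ2
    rw [map_neg] at h2
    linarith
  -- (2) → (1)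
  have hBA : (∀ β ∈ N, ¬ posSum Φpos (w⁻¹ α) (w⁻¹ β)) →
      (∃ i : Fin r, w⁻¹ α = -(simple i)) := by
    intro hB
    by_contra h
    push_neg at h
    obtain ⟨β, hβ, hps⟩ := (hnotone h).1
    exact hB β hβ hps
  -- (2) → (3)
  have hBC : (∀ β ∈ N, ¬ posSum Φpos (w⁻¹ α) (w⁻¹ β)) →
      ((¬ ∃ β ∈ N, ∃ γ ∈ N, α = β + γ) ∧
        ¬ ∃ β ∈ N, posSum Φpos α β ∧ ⟪α, β⟫ = 1 ∧ β - α ∉ N) := by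
    intro hB
    constructor
    · rintro ⟨β, hβ, γ, hγ, he⟩
      apply hB β hβ
      apply psingle (-(w⁻¹ γ)) _ _ ((hNm γ).mp hγ).2
      have : w⁻¹ α = w⁻¹ β + w⁻¹ γ := by rw [he, map_add]
      rw [this]; abel
    · rintro ⟨β, hβ, hps, hin, hnm⟩
      apply hB β hβ
      have hβ1 : β ∈ Φpos := ((hNm β).mp hβ).1
      have hβΦ : β ∈ Φ := hpos hβ1
      have hγΦ : β - α ∈ Φ := by
        have h := hrefl α hαΦ β hβΦ
        rw [hin, one_smul] at h
        exact h
      have hγpos : β - α ∈ Φpos := by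
        apply hposof _ hγΦ
        have h1 := hpossum α β hps
        have h2 := hfge1 α hα1
        have h3 : f (β - α) = f β - f α := map_sub f β α
        linarith
      have hwγ : w⁻¹ (β - α) ∈ Φpos := by
        have hΦ' : w⁻¹ (β - α) ∈ Φ := hwΦi _ hγΦ
        by_contra hh
        have h2 : -(w⁻¹ (β - α)) ∈ Φpos := by
          by_contra h3
          exact hh ((hsplit _ hΦ').mpr h3)
        exact hnm ((hNm _).mpr ⟨hγpos, h2⟩)
      apply psingle _ _ _ hwγ
      rw [map_sub]
  -- (3) → (2)
  have hCB : ((¬ ∃ β ∈ N, ∃ γ ∈ N, α = β + γ) ∧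
        ¬ ∃ β ∈ N, posSum Φpos α β ∧ ⟪α, β⟫ = 1 ∧ β - α ∉ N) →
      (∀ β ∈ N, ¬ posSum Φpos (w⁻¹ α) (w⁻¹ β)) := by
    intro hC
    apply hAB
    by_contra h
    push_neg at h
    rcases (hnotone h).2 with h1 | h2
    · exact hC.1 h1
    · exact hC.2 h2
  exact ⟨⟨hAB, hBA⟩, ⟨hBC, hCB⟩⟩
end

section
/- Let w ∈ W and let α_i be a simple root. If there exists α ∈ Φ⁺ ∩ wΦ⁻ with α_i ∈ supp(α), then there exists β ∈ Φ⁺ ∩ wΦ⁻ with α_i ∈ supp(β) and w⁻¹β ∈ −Π. -/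
open scoped RealInnerProductSpace

/-- If some root of `Φ⁺ ∩ wΦ⁻` has the simple root `simple i` in its support,
then there is a root `β ∈ Φ⁺ ∩ wΦ⁻` with `simple i` in its support and with
`w⁻¹β` the negative of a simple root. -/
theorem antisimple_root_with_support_exists {V : Type*} [NormedAddCommGroup V]
    [InnerProductSpace ℝ V] [FiniteDimensional ℝ V] [DecidableEq V]
    (Φ : Finset V)
    (hΦ0 : (0 : V) ∉ Φ)
    (hrefl : ∀ α ∈ Φ, ∀ β ∈ Φ, β - ⟪α, β⟫ • α ∈ Φ)
    (hred : ∀ α ∈ Φ, ∀ c : ℝ, c • α ∈ Φ → c = 1 ∨ c = -1)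
    (hcrys : ∀ α ∈ Φ, ∀ β ∈ Φ, ∃ n : ℤ, ⟪α, β⟫ = (n : ℝ))
    (hnorm : ∀ α ∈ Φ, ⟪α, α⟫ = 2)
    (Φpos : Finset V) (hpos : Φpos ⊆ Φ)
    (hsplit : ∀ α ∈ Φ, (α ∈ Φpos ↔ -α ∉ Φpos))
    (r : ℕ) (simple : Fin r → V)
    (hsmem : ∀ i, simple i ∈ Φpos)
    (hsind : LinearIndependent ℝ simple)
    (hsspan : ∀ α ∈ Φpos, ∃ c : Fin r → ℕ, α = ∑ j, (c j : ℝ) • simple j)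
    (w : V ≃ₗ[ℝ] V)
    (hw : w ∈ Subgroup.closure
      {u : V ≃ₗ[ℝ] V | ∃ α ∈ Φ, ∀ v, u v = v - ⟪α, v⟫ • α})
    (i : Fin r)
    (h : ∃ α ∈ Φpos ∩ Φpos.image (fun x => w (-x)),
      ∃ c : Fin r → ℕ, α = ∑ j, (c j : ℝ) • simple j ∧ c i ≠ 0) :
    ∃ β ∈ Φpos ∩ Φpos.image (fun x => w (-x)),
      (∃ c : Fin r → ℕ, β = ∑ j, (c j : ℝ) • simple j ∧ c i ≠ 0) ∧
      ∃ j : Fin r, w⁻¹ β = -(simple j) := by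
  classical
  -- uniqueness of real coefficients
  have huniqR : ∀ c d : Fin r → ℝ,
      (∑ j, c j • simple j) = (∑ j, d j • simple j) → ∀ k, c k = d k := by
    intro c d hcd k
    have h0 : (∑ j, (c j - d j) • simple j) = 0 := by
      simp [sub_smul, Finset.sum_sub_distrib, hcd]
    have := Fintype.linearIndependent_iff.mp hsind (fun j => c j - d j) h0 k
    linarith
  have huniqN : ∀ c d : Fin r → ℕ,
      (∑ j, (c j : ℝ) • simple j) = (∑ j, (d j : ℝ) • simple j) → ∀ k, c k = d k := by
    intro c d hcd k
    exact_mod_cast huniqR (fun j => (c j : ℝ)) (fun j => (d j : ℝ)) hcd k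
  -- Φ is closed under negation
  have hneg : ∀ α ∈ Φ, -α ∈ Φ := by
    intro α hα
    have := hrefl α hα α hα
    rwa [hnorm α hα, show α - (2:ℝ) • α = -α by module] at this
  -- elements of closure preserve Φ
  have hwΦ : ∀ α ∈ Φ, w α ∈ Φ := by
    have : ∀ u ∈ Subgroup.closure
        {u : V ≃ₗ[ℝ] V | ∃ α ∈ Φ, ∀ v, u v = v - ⟪α, v⟫ • α},
        ∀ α ∈ Φ, u α ∈ Φ := by
      intro u hu
      induction hu using Subgroup.closure_induction with
      | mem x hx =>
        obtain ⟨α, hα, hx⟩ := hx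
        intro β hβ
        rw [hx β]
        exact hrefl α hα β hβ
      | one => intro β hβ; simpa using hβ
      | mul x y hx hy px py =>
        intro β hβ
        exact px (y β) (py β hβ)
      | inv x hx px =>
        intro β hβ
        have himg : Φ.image x = Φ := by
          apply Finset.eq_of_subset_of_card_le
          · intro a ha
            obtain ⟨b, hb, rfl⟩ := Finset.mem_image.mp ha
            exact px b hb
          · rw [Finset.card_image_of_injective _ x.injective]
        rw [← himg] at hβ
        obtain ⟨a, ha, rfl⟩ := Finset.mem_image.mp hβ
        have : x⁻¹ (x a) = a := x.symm_apply_apply a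
        rwa [this]
    exact this w hw
  have hposneg : ∀ α ∈ Φ, α ∉ Φpos → -α ∈ Φpos := by
    intro α hα hnp
    have := hsplit (-α) (hneg α hα)
    rw [neg_neg] at this
    exact this.mpr hnp
  -- main induction on the height of γ where β = w(-γ)
  have key : ∀ n : ℕ, ∀ γ, γ ∈ Φpos → ∀ cγ : Fin r → ℕ,
      γ = ∑ j, (cγ j : ℝ) • simple j → (∑ j, cγ j) ≤ n →
      w (-γ) ∈ Φpos →
      (∃ b : Fin r → ℕ, w (-γ) = ∑ j, (b j : ℝ) • simple j ∧ b i ≠ 0) →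
      ∃ β ∈ Φpos ∩ Φpos.image (fun x => w (-x)),
        (∃ c : Fin r → ℕ, β = ∑ j, (c j : ℝ) • simple j ∧ c i ≠ 0) ∧
        ∃ j : Fin r, w⁻¹ β = -(simple j) := by
    intro n
    induction n with
    | zero =>
      intro γ hγ cγ hγc hht _ _
      exfalso
      have hs0 : (∑ j, cγ j) = 0 := Nat.le_zero.mp hht
      have hc0 : ∀ j, cγ j = 0 := by
        intro j
        exact (Finset.sum_eq_zero_iff.mp hs0) j (Finset.mem_univ j)
      have : γ = 0 := by simp [hγc, hc0]
      exact hΦ0 (this ▸ hpos hγ)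
    | succ n ih =>
      intro γ hγ cγ hγc hht hβpos hb
      obtain ⟨b, hbeq, hbi⟩ := hb
      have hγΦ : γ ∈ Φ := hpos hγ
      -- find simple root j with positive coefficient and positive inner product
      have h2 : (∑ j, (cγ j : ℝ) * ⟪γ, simple j⟫) = 2 := by
        have : ⟪γ, γ⟫ = ⟪γ, ∑ j, (cγ j : ℝ) • simple j⟫ := by rw [← hγc]
        rw [hnorm γ hγΦ] at this
        rw [inner_sum] at this
        simp only [real_inner_smul_right] at this
        linarith [this]
      have hj : ∃ j, cγ j ≠ 0 ∧ 0 < ⟪γ, simple j⟫ := by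
        by_contra hcon
        push_neg at hcon
        have : (∑ j, (cγ j : ℝ) * ⟪γ, simple j⟫) ≤ 0 := by
          apply Finset.sum_nonpos
          intro j _
          by_cases hcj : cγ j = 0
          · simp [hcj]
          · have := hcon j hcj
            have hc0 : (0:ℝ) ≤ (cγ j : ℝ) := Nat.cast_nonneg _
            exact mul_nonpos_of_nonneg_of_nonpos hc0 this
        linarith
      obtain ⟨j, hcj, hip⟩ := hj
      obtain ⟨m, hm⟩ := hcrys γ hγΦ (simple j) (hpos (hsmem j))
      have hm1 : 1 ≤ m := by
        rw [hm] at hip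
        have : 0 < m := by exact_mod_cast hip
        omega
      have hm2 : m ≤ 2 := by
        have h0 : (0:ℝ) ≤ ⟪γ - simple j, γ - simple j⟫ := real_inner_self_nonneg
        have hexp : ⟪γ - simple j, γ - simple j⟫ = 4 - 2 * (m:ℝ) := by
          have hs2 := hnorm (simple j) (hpos (hsmem j))
          have hsym : ⟪simple j, γ⟫ = (m:ℝ) := by rw [real_inner_comm]; exact hm
          simp only [inner_sub_left, inner_sub_right, hnorm γ hγΦ, hs2, hm, hsym]
          ring
        rw [hexp] at h0
        have : (m:ℝ) ≤ 2 := by linarith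
        exact_mod_cast this
      rcases eq_or_lt_of_le hm2 with hm2' | hm2'
      · -- m = 2: γ is the simple root j itself
        have hγs : γ = simple j := by
          have h0 : ⟪γ - simple j, γ - simple j⟫ = 0 := by
            have hs2 := hnorm (simple j) (hpos (hsmem j))
            have hsym : ⟪simple j, γ⟫ = (m:ℝ) := by rw [real_inner_comm]; exact hm
            simp only [inner_sub_left, inner_sub_right, hnorm γ hγΦ, hs2, hm, hsym]
            rw [hm2']
            norm_num
          have := inner_self_eq_zero.mp h0
          rwa [sub_eq_zero] at this
        refine ⟨w (-γ), ?_, ⟨b, hbeq, hbi⟩, j, ?_⟩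
        · rw [Finset.mem_inter]
          exact ⟨hβpos, Finset.mem_image.mpr ⟨γ, hγ, rfl⟩⟩
        · rw [← hγs]
          exact w.symm_apply_apply (-γ)
      · -- m = 1
        have hm1' : m = 1 := by omega
        have hm' : ⟪γ, simple j⟫ = 1 := by rw [hm, hm1']; norm_num
        have hγne : γ ≠ simple j := by
          intro e
          rw [e, hnorm (simple j) (hpos (hsmem j))] at hm'
          norm_num at hm'
        -- γ' = γ - simple j is a root
        have hγ'Φ : γ - simple j ∈ Φ := by
          have := hrefl (simple j) (hpos (hsmem j)) γ hγΦ
          have hsym : ⟪simple j, γ⟫ = 1 := by rw [real_inner_comm]; exact hm'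
          rwa [hsym, one_smul] at this
        set γ' := γ - simple j with hγ'def
        -- γ' is positive
        have hγ'pos : γ' ∈ Φpos := by
          by_contra hc
          obtain ⟨d, hd⟩ := hsspan (-γ') (hposneg γ' hγ'Φ hc)
          -- ∑ (cγ + d) • simple = simple j
          have heq : (∑ k, ((cγ k + d k : ℕ) : ℝ) • simple k)
              = ∑ k, ((if k = j then 1 else 0 : ℕ) : ℝ) • simple k := by
            push_cast
            simp only [add_smul, Finset.sum_add_distrib]
            rw [← hγc, ← hd]
            have : (∑ k, (if k = j then (1:ℝ) else 0) • simple k) = simple j := by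
              rw [Finset.sum_eq_single j]
              · simp
              · intro k _ hk; simp [hk]
              · intro hk; exact absurd (Finset.mem_univ j) hk
            rw [this, hγ'def]
            abel
          have hco := huniqN _ _ heq
          have hcj' := hco j
          simp at hcj'
          have hdj : d j = 0 := by omega
          have hcj1 : cγ j = 1 := by omega
          have hrest : ∀ k, k ≠ j → cγ k = 0 := by
            intro k hk
            have := hco k
            simp [hk] at this
            omega
          have : γ = simple j := by
            rw [hγc, Finset.sum_eq_single j]
            · rw [hcj1]; simp
            · intro k _ hk; rw [hrest k hk]; simp
            · intro hk; exact absurd (Finset.mem_univ j) hk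
          exact hγne this
        -- coefficients of γ'
        obtain ⟨c', hc'⟩ := hsspan γ' hγ'pos
        have hc'rel : ∀ k, c' k + (if k = j then 1 else 0) = cγ k := by
          have heq : (∑ k, ((c' k + if k = j then 1 else 0 : ℕ) : ℝ) • simple k)
              = ∑ k, (cγ k : ℝ) • simple k := by
            push_cast
            simp only [add_smul, Finset.sum_add_distrib]
            rw [← hc', ← hγc]
            have : (∑ k, (if k = j then (1:ℝ) else 0) • simple k) = simple j := by
              rw [Finset.sum_eq_single j]
              · simp
              · intro k _ hk; simp [hk]
              · intro hk; exact absurd (Finset.mem_univ j) hk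
            rw [this, hγ'def]
            abel
          intro k
          exact huniqN _ _ heq k
        have hht' : (∑ k, c' k) ≤ n := by
          have hsum : (∑ k, (c' k + if k = j then 1 else 0)) = ∑ k, cγ k := by
            apply Finset.sum_congr rfl
            intro k _
            exact hc'rel k
          rw [Finset.sum_add_distrib] at hsum
          have : (∑ k, (if k = j then 1 else 0 : ℕ)) = 1 := by
            rw [Finset.sum_eq_single j]
            · simp
            · intro k _ hk; simp [hk]
            · intro hk; exact absurd (Finset.mem_univ j) hk
          omega
        -- relation β' = β + w(simple j)
        have hβ'eq : w (-γ') = w (-γ) + w (simple j) := by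
          rw [← map_add]
          congr 1
          rw [hγ'def]
          abel
        have hβ'Φ : w (-γ') ∈ Φ := hwΦ (-γ') (hneg γ' (hpos hγ'pos))
        by_cases hwsj : w (simple j) ∈ Φpos
        · -- case A: w(simple j) positive
          obtain ⟨a, ha⟩ := hsspan _ hwsj
          have hβ'pos : w (-γ') ∈ Φpos := by
            by_contra hc
            obtain ⟨f, hf⟩ := hsspan (-(w (-γ'))) (hposneg _ hβ'Φ hc)
            have h0 : (∑ k, ((b k + a k + f k : ℕ) : ℝ) • simple k)
                = ∑ k, ((0:ℕ) : ℝ) • simple k := by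
              push_cast
              simp only [add_smul, Finset.sum_add_distrib]
              rw [← hbeq, ← ha, ← hf]
              simp only [Nat.cast_zero, zero_smul, Finset.sum_const_zero]
              rw [hβ'eq]
              abel
            have := huniqN _ _ h0 i
            simp at this
            omega
          obtain ⟨e, he⟩ := hsspan _ hβ'pos
          have herel : ∀ k, e k = b k + a k := by
            intro k
            have h0 : (∑ k, (e k : ℝ) • simple k)
                = ∑ k, ((b k + a k : ℕ) : ℝ) • simple k := by
              push_cast
              simp only [add_smul, Finset.sum_add_distrib]
              rw [← he, ← hbeq, ← ha, hβ'eq]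
            exact huniqN _ _ h0 k
          have hei : e i ≠ 0 := by
            have := herel i
            omega
          exact ih γ' hγ'pos c' hc' hht' hβ'pos ⟨e, he, hei⟩
        · -- case B: w(simple j) negative; δ = -w(simple j) positive
          have hwsjΦ : w (simple j) ∈ Φ := hwΦ _ (hpos (hsmem j))
          have hδpos : -(w (simple j)) ∈ Φpos := hposneg _ hwsjΦ hwsj
          obtain ⟨d, hd⟩ := hsspan _ hδpos
          have hδim : -(w (simple j)) = w (-(simple j)) := by rw [map_neg]
          have hδmem : -(w (simple j)) ∈ Φpos ∩ Φpos.image (fun x => w (-x)) := by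
            rw [Finset.mem_inter]
            exact ⟨hδpos, Finset.mem_image.mpr ⟨simple j, hsmem j, hδim.symm⟩⟩
          have hδinv : w⁻¹ (-(w (simple j))) = -(simple j) := by
            rw [hδim]
            exact w.symm_apply_apply (-(simple j))
          by_cases hβ'pos : w (-γ') ∈ Φpos
          · -- β = β' + δ
            obtain ⟨e, he⟩ := hsspan _ hβ'pos
            have hbrel : ∀ k, b k = e k + d k := by
              intro k
              have h0 : (∑ k, (b k : ℝ) • simple k)
                  = ∑ k, ((e k + d k : ℕ) : ℝ) • simple k := by
                push_cast
                simp only [add_smul, Finset.sum_add_distrib]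
                rw [← hbeq, ← he, ← hd]
                rw [hβ'eq]
                abel
              exact huniqN _ _ h0 k
            by_cases hdi : d i = 0
            · have hei : e i ≠ 0 := by have := hbrel i; omega
              exact ih γ' hγ'pos c' hc' hht' hβ'pos ⟨e, he, hei⟩
            · exact ⟨-(w (simple j)), hδmem, ⟨d, hd, hdi⟩, j, hδinv⟩
          · -- δ = β + (-β')
            obtain ⟨f, hf⟩ := hsspan (-(w (-γ'))) (hposneg _ hβ'Φ hβ'pos)
            have hdrel : ∀ k, d k = b k + f k := by
              intro k
              have h0 : (∑ k, (d k : ℝ) • simple k)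
                  = ∑ k, ((b k + f k : ℕ) : ℝ) • simple k := by
                push_cast
                simp only [add_smul, Finset.sum_add_distrib]
                rw [← hd, ← hbeq, ← hf, hβ'eq]
                abel
              exact huniqN _ _ h0 k
            have hdi : d i ≠ 0 := by have := hdrel i; omega
            exact ⟨-(w (simple j)), hδmem, ⟨d, hd, hdi⟩, j, hδinv⟩
  -- apply the key lemma
  obtain ⟨α, hαmem, c, hcα, hci⟩ := h
  rw [Finset.mem_inter] at hαmem
  obtain ⟨hαpos, hαim⟩ := hαmem
  obtain ⟨x, hx, hxα⟩ := Finset.mem_image.mp hαim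
  obtain ⟨cx, hcx⟩ := hsspan x hx
  exact key (∑ j, cx j) x hx cx hcx le_rfl (hxα ▸ hαpos)
    ⟨c, by rw [hxα]; exact hcα, hci⟩
end

section
/- Let w ∈ W and suppose that Φ⁺ ∩ wΦ⁻ contains exactly one root α with w⁻¹α ∈ −Π. Then for every β ∈ Φ⁺ ∩ wΦ⁻ one has supp(β) ⊆ supp(α). -/
open scoped RealInnerProductSpace

/-- If `Φ⁺ ∩ wΦ⁻` contains exactly one root `α` with `w⁻¹α ∈ -Π`, then the
support of every `β ∈ Φ⁺ ∩ wΦ⁻` is contained in the support of `α`. -/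
theorem unique_antisimple_support_covers {V : Type*} [NormedAddCommGroup V]
    [InnerProductSpace ℝ V] [FiniteDimensional ℝ V] [DecidableEq V]
    (Φ : Finset V)
    (hΦ0 : (0 : V) ∉ Φ)
    (hrefl : ∀ α ∈ Φ, ∀ β ∈ Φ, β - ⟪α, β⟫ • α ∈ Φ)
    (hred : ∀ α ∈ Φ, ∀ c : ℝ, c • α ∈ Φ → c = 1 ∨ c = -1)
    (hcrys : ∀ α ∈ Φ, ∀ β ∈ Φ, ∃ n : ℤ, ⟪α, β⟫ = (n : ℝ))
    (hnorm : ∀ α ∈ Φ, ⟪α, α⟫ = 2)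
    (Φpos : Finset V) (hpos : Φpos ⊆ Φ)
    (hsplit : ∀ α ∈ Φ, (α ∈ Φpos ↔ -α ∉ Φpos))
    (r : ℕ) (simple : Fin r → V)
    (hsmem : ∀ i, simple i ∈ Φpos)
    (hsind : LinearIndependent ℝ simple)
    (hsspan : ∀ α ∈ Φpos, ∃ c : Fin r → ℕ, α = ∑ j, (c j : ℝ) • simple j)
    (w : V ≃ₗ[ℝ] V)
    (hw : w ∈ Subgroup.closure
      {u : V ≃ₗ[ℝ] V | ∃ α ∈ Φ, ∀ v, u v = v - ⟪α, v⟫ • α})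
    (α : V)
    (hα : α ∈ Φpos ∩ Φpos.image (fun x => w (-x)))
    (hanti : ∃ i : Fin r, w⁻¹ α = -(simple i))
    (huniq : ∀ β ∈ Φpos ∩ Φpos.image (fun x => w (-x)),
      (∃ i : Fin r, w⁻¹ β = -(simple i)) → β = α) :
    ∀ β ∈ Φpos ∩ Φpos.image (fun x => w (-x)), ∀ i : Fin r,
      (∃ c : Fin r → ℕ, β = ∑ j, (c j : ℝ) • simple j ∧ c i ≠ 0) →
      (∃ c : Fin r → ℕ, α = ∑ j, (c j : ℝ) • simple j ∧ c i ≠ 0) := by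
  have hinv : ∀ y : V, w⁻¹ (w y) = y := fun y => w.symm_apply_apply y
  have hcoeff : ∀ a b : Fin r → ℝ,
      (∑ j, a j • simple j) = (∑ j, b j • simple j) → ∀ j, a j = b j := by
    intro a b hab j
    have h0 : ∑ j, (a j - b j) • simple j = 0 := by
      simp only [sub_smul, Finset.sum_sub_distrib, hab, sub_self]
    have := Fintype.linearIndependent_iff.mp hsind (fun j => a j - b j) h0 j
    linarith
  have hnegΦ : ∀ γ ∈ Φ, -γ ∈ Φ := by
    intro γ hγ
    have h := hrefl γ hγ γ hγ
    rwa [hnorm γ hγ, show γ - (2:ℝ) • γ = -γ by module] at h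
  have htri : ∀ γ ∈ Φ, γ ∉ Φpos → -γ ∈ Φpos := by
    intro γ hγ h
    by_contra h'
    exact h ((hsplit γ hγ).mpr h')
  have hWmap : ∀ γ ∈ Φ, w γ ∈ Φ := by
    have main : ∀ u : V ≃ₗ[ℝ] V,
        u ∈ Subgroup.closure {u : V ≃ₗ[ℝ] V | ∃ α ∈ Φ, ∀ v, u v = v - ⟪α, v⟫ • α} →
        ∀ γ ∈ Φ, u γ ∈ Φ := by
      intro u hu
      induction hu using Subgroup.closure_induction with
      | mem x hx =>
        obtain ⟨a, ha, hx⟩ := hx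
        intro γ hγ; rw [hx γ]; exact hrefl a ha γ hγ
      | one => intro γ hγ; simpa using hγ
      | mul x y hx hy ihx ihy => intro γ hγ; exact ihx (y γ) (ihy γ hγ)
      | inv x hx ih =>
        intro γ hγ
        have hsub : Φ.image (fun v => x v) ⊆ Φ := by
          intro z hz
          obtain ⟨y, hy, rfl⟩ := Finset.mem_image.mp hz
          exact ih y hy
        have hcard : Φ.card ≤ (Φ.image (fun v => x v)).card := by
          rw [Finset.card_image_of_injective _ x.injective]
        have heq : Φ.image (fun v => x v) = Φ := Finset.eq_of_subset_of_card_le hsub hcard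
        obtain ⟨y, hy, hyx⟩ := Finset.mem_image.mp (heq ▸ hγ)
        have hx' : x⁻¹ γ = y := by rw [← hyx]; exact x.symm_apply_apply y
        rwa [hx']
    exact main w hw
  have hαpos : α ∈ Φpos := (Finset.mem_inter.mp hα).1
  obtain ⟨ca, hca⟩ := hsspan α hαpos
  have key : ∀ n : ℕ, ∀ x, x ∈ Φpos → ∀ cx : Fin r → ℕ,
      x = ∑ j, (cx j : ℝ) • simple j → (∑ j, cx j) = n →
      w (-x) ∈ Φpos → ∀ cb : Fin r → ℕ,
      w (-x) = ∑ j, (cb j : ℝ) • simple j → ∀ i, cb i ≠ 0 → ca i ≠ 0 := by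
    intro n
    induction n using Nat.strong_induction_on with
    | _ n IH =>
    intro x hx cx hcx hsum hβpos cb hcb i hcbi
    have hβN : w (-x) ∈ Φpos ∩ Φpos.image (fun x => w (-x)) :=
      Finset.mem_inter.mpr ⟨hβpos, Finset.mem_image.mpr ⟨x, hx, rfl⟩⟩
    by_cases hxs : ∃ j, x = simple j
    · obtain ⟨j, rfl⟩ := hxs
      have hβα : w (-(simple j)) = α := huniq _ hβN ⟨j, hinv _⟩
      have hcc : ∀ j', (cb j' : ℝ) = ca j' := by
        refine hcoeff _ _ ?_
        rw [← hcb, hβα]; exact hca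
      have : cb i = ca i := by exact_mod_cast hcc i
      omega
    · have hxΦ : x ∈ Φ := hpos hx
      have hx2 : ⟪x, x⟫ = 2 := hnorm x hxΦ
      have hexp : ⟪x, x⟫ = ∑ j, (cx j : ℝ) * ⟪simple j, x⟫ := by
        calc ⟪x, x⟫ = ⟪∑ j, (cx j : ℝ) • simple j, x⟫ := by rw [← hcx]
        _ = ∑ j, (cx j : ℝ) * ⟪simple j, x⟫ := by
              rw [sum_inner]; simp [real_inner_smul_left]
      have hex : ∃ j, cx j ≠ 0 ∧ 0 < ⟪simple j, x⟫ := by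
        by_contra hcon
        push_neg at hcon
        have hle : ∑ j, (cx j : ℝ) * ⟪simple j, x⟫ ≤ 0 := by
          refine Finset.sum_nonpos (fun j _ => ?_)
          by_cases h : cx j = 0
          · simp [h]
          · exact mul_nonpos_of_nonneg_of_nonpos (Nat.cast_nonneg _) (hcon j h)
        rw [← hexp, hx2] at hle
        linarith
      obtain ⟨i₁, hci₁, hip_pos⟩ := hex
      have hsΦ : simple i₁ ∈ Φ := hpos (hsmem i₁)
      obtain ⟨m, hm⟩ := hcrys (simple i₁) hsΦ x hxΦ
      have hxne : x ≠ simple i₁ := fun h => hxs ⟨i₁, h⟩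
      have hip1 : ⟪simple i₁, x⟫ = 1 := by
        have h1 : 0 < m := by
          have : (0:ℝ) < (m:ℝ) := by rw [← hm]; exact hip_pos
          exact_mod_cast this
        have hnn : 0 ≤ ⟪x - simple i₁, x - simple i₁⟫ := real_inner_self_nonneg
        have hxy : ⟪x, simple i₁⟫ = (m : ℝ) := by rw [real_inner_comm]; exact hm
        rw [real_inner_sub_sub_self, hxy, hx2, hnorm _ hsΦ] at hnn
        have hm2 : m ≤ 2 := by
          have : (m:ℝ) ≤ 2 := by linarith
          exact_mod_cast this
        interval_cases m
        · rw [hm]; norm_num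
        · exfalso
          have hz : ⟪x - simple i₁, x - simple i₁⟫ = 0 := by
            have hxy : ⟪x, simple i₁⟫ = ((2:ℤ) : ℝ) := by rw [real_inner_comm]; exact hm
            rw [real_inner_sub_sub_self, hxy, hx2, hnorm _ hsΦ]
            norm_num
          have := inner_self_eq_zero.mp hz
          exact hxne (by rwa [sub_eq_zero] at this)
      have hδΦ : x - simple i₁ ∈ Φ := by
        have h := hrefl (simple i₁) hsΦ x hxΦ
        rwa [hip1, one_smul] at h
      have hδpos : x - simple i₁ ∈ Φpos := by
        by_contra h
        have hmem : -(x - simple i₁) ∈ Φpos := htri _ hδΦ h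
        obtain ⟨d, hd⟩ := hsspan _ hmem
        have hall : ∀ j, (cx j : ℝ) + d j = (if j = i₁ then (1:ℝ) else 0) := by
          refine hcoeff _ _ ?_
          have h1 : ∑ j, ((cx j : ℝ) + (d j : ℝ)) • simple j = simple i₁ := by
            simp only [add_smul, Finset.sum_add_distrib, ← hcx, ← hd]
            abel
          have h2 : ∑ j, (if j = i₁ then (1:ℝ) else 0) • simple j = simple i₁ := by
            simp [ite_smul]
          rw [h1, h2]
        have hx1 : x = simple i₁ := by
          have hcxj : ∀ j, (cx j : ℝ) = if j = i₁ then (1:ℝ) else 0 := by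
            intro j
            have h : (cx j : ℝ) + (d j : ℝ) = if j = i₁ then (1:ℝ) else 0 := hall j
            by_cases hj : j = i₁
            · subst hj
              rw [if_pos rfl] at h ⊢
              have hn : cx j + d j = 1 := by exact_mod_cast h
              have hx1 : cx j = 1 := by omega
              rw [hx1]; norm_num
            · rw [if_neg hj] at h ⊢
              have hn : cx j + d j = 0 := by exact_mod_cast h
              have hx0 : cx j = 0 := by omega
              rw [hx0]; norm_num
          rw [hcx, Finset.sum_congr rfl (fun j _ => by rw [hcxj j])]
          simp
        exact hxne hx1
      obtain ⟨cd, hcd⟩ := hsspan _ hδpos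
      have hrel : ∀ j, cd j + (if j = i₁ then 1 else 0) = cx j := by
        intro j
        have h : (cd j : ℝ) + (if j = i₁ then (1:ℝ) else 0) = (cx j : ℝ) :=
          hcoeff (fun j => (cd j : ℝ) + (if j = i₁ then (1:ℝ) else 0))
            (fun j => (cx j : ℝ)) ?_ j
        · by_cases hj : j = i₁
          · subst hj
            rw [if_pos rfl] at h ⊢
            exact_mod_cast h
          · rw [if_neg hj] at h ⊢
            exact_mod_cast h
        · have h1 : ∑ j, ((cd j : ℝ) + (if j = i₁ then (1:ℝ) else 0)) • simple j = x := by
            simp only [add_smul, Finset.sum_add_distrib, ← hcd]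
            have h2 : ∑ j, (if j = i₁ then (1:ℝ) else 0) • simple j = simple i₁ := by
              simp [ite_smul]
            rw [h2]; abel
          rw [h1, ← hcx]
      have hsumlt : (∑ j, cd j) < n := by
        have h1 : ∑ j, (cd j + (if j = i₁ then 1 else 0)) = n := by
          rw [Finset.sum_congr rfl (fun j _ => hrel j)]; exact hsum
        rw [Finset.sum_add_distrib] at h1
        have h2 : (∑ j, (if j = i₁ then 1 else 0)) = 1 := by simp
        omega
      have huΦ : w (-(simple i₁)) ∈ Φ := hWmap _ (hnegΦ _ hsΦ)
      have hvΦ : w (-(x - simple i₁)) ∈ Φ := hWmap _ (hnegΦ _ hδΦ)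
      have huv : w (-(simple i₁)) + w (-(x - simple i₁)) = w (-x) := by
        rw [← map_add]
        congr 1
        abel
      by_cases hu : w (-(simple i₁)) ∈ Φpos
      · have huN : w (-(simple i₁)) ∈ Φpos ∩ Φpos.image (fun x => w (-x)) :=
          Finset.mem_inter.mpr ⟨hu, Finset.mem_image.mpr ⟨simple i₁, hsmem i₁, rfl⟩⟩
        have huα : w (-(simple i₁)) = α := huniq _ huN ⟨i₁, hinv _⟩
        by_cases hv : w (-(x - simple i₁)) ∈ Φpos
        · obtain ⟨cv, hcv⟩ := hsspan _ hv
          have IHv := IH (∑ j, cd j) hsumlt _ hδpos cd hcd rfl hv cv hcv i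
          have hsum2 : ∀ j, (cb j : ℝ) = (ca j : ℝ) + (cv j : ℝ) := by
            refine hcoeff _ _ ?_
            rw [← hcb, ← huv, huα]
            simp only [add_smul, Finset.sum_add_distrib, ← hca, ← hcv]
          have hni : cb i = ca i + cv i := by exact_mod_cast hsum2 i
          by_cases h' : cv i = 0
          · omega
          · exact IHv h'
        · have hnv : -(w (-(x - simple i₁))) ∈ Φpos := htri _ hvΦ hv
          obtain ⟨cnv, hcnv⟩ := hsspan _ hnv
          have hsum2 : ∀ j, (ca j : ℝ) = (cb j : ℝ) + (cnv j : ℝ) := by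
            refine hcoeff _ _ ?_
            rw [← hca, ← huα]
            have : w (-(simple i₁)) = w (-x) + -(w (-(x - simple i₁))) := by
              rw [← huv]; abel
            rw [this, hcb, hcnv]
            simp only [add_smul, Finset.sum_add_distrib]
          have hni : ca i = cb i + cnv i := by exact_mod_cast hsum2 i
          omega
      · have hnu : -(w (-(simple i₁))) ∈ Φpos := htri _ huΦ hu
        obtain ⟨cnu, hcnu⟩ := hsspan _ hnu
        by_cases hv : w (-(x - simple i₁)) ∈ Φpos
        · obtain ⟨cv, hcv⟩ := hsspan _ hv
          have IHv := IH (∑ j, cd j) hsumlt _ hδpos cd hcd rfl hv cv hcv i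
          have hsum2 : ∀ j, (cv j : ℝ) = (cb j : ℝ) + (cnu j : ℝ) := by
            refine hcoeff _ _ ?_
            rw [← hcv]
            have : w (-(x - simple i₁)) = w (-x) + -(w (-(simple i₁))) := by
              rw [← huv]; abel
            rw [this, hcb, hcnu]
            simp only [add_smul, Finset.sum_add_distrib]
          have hni : cv i = cb i + cnu i := by exact_mod_cast hsum2 i
          exact IHv (by omega)
        · exfalso
          have hnv : -(w (-(x - simple i₁))) ∈ Φpos := htri _ hvΦ hv
          obtain ⟨cnv, hcnv⟩ := hsspan _ hnv
          have hsum2 : ∀ j, (cb j : ℝ) + (cnu j : ℝ) + (cnv j : ℝ) = 0 := by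
            refine hcoeff (fun j => (cb j : ℝ) + (cnu j : ℝ) + (cnv j : ℝ))
              (fun _ => (0:ℝ)) ?_
            have h0 : w (-x) + -(w (-(simple i₁))) + -(w (-(x - simple i₁))) = 0 := by
              rw [← huv]; abel
            simp only [add_smul, Finset.sum_add_distrib, ← hcb, ← hcnu, ← hcnv, h0]
            simp
          have h := hsum2 i
          have h1 : (0:ℝ) ≤ (cnu i : ℝ) := Nat.cast_nonneg _
          have h2 : (0:ℝ) ≤ (cnv i : ℝ) := Nat.cast_nonneg _
          have h3 : (0:ℝ) ≤ (cb i : ℝ) := Nat.cast_nonneg _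
          have : (cb i : ℝ) = 0 := by linarith
          exact hcbi (by exact_mod_cast this)
  intro β hβ i hc
  obtain ⟨cb, hcb, hcbi⟩ := hc
  obtain ⟨hβpos, hβim⟩ := Finset.mem_inter.mp hβ
  obtain ⟨x, hxpos, hwx⟩ := Finset.mem_image.mp hβim
  obtain ⟨cx, hcx⟩ := hsspan x hxpos
  subst hwx
  exact ⟨ca, hca, key (∑ j, cx j) x hxpos cx hcx rfl hβpos cb hcb i hcbi⟩
end

section
/- Let (A; n_1,…,n_r) be an excessive A-configuration with A nonempty, and let I = {i : n_i > 0}. Suppose that whenever β_1, β_2 ∈ A are two distinct ≺-maximal elements of A, one has supp(β_1) ∩ supp(β_2) ∩ {α_i : i ∈ I} = ∅. Then A has exactly one ≺-maximal element. -/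
open scoped RealInnerProductSpace

open Classical in
/-- `RIdx simple I A` is the set `R_I(A)` of elements of `A` whose support
(w.r.t. the expansion into simple roots `simple`) meets `I`. -/
noncomputable def RIdx {V : Type*} [AddCommGroup V] [Module ℝ V] {r : ℕ}
    (simple : Fin r → V) (I : Finset (Fin r)) (A : Finset V) : Finset V :=
  A.filter (fun a => ∃ i ∈ I, ∃ c : Fin r → ℕ,
    a = ∑ j, (c j : ℝ) • simple j ∧ c i ≠ 0)

/-- If `(A; n₁,…,n_r)` is an excessive A-configuration with `A` nonempty such
that the supports of any two distinct `≺`-maximal elements of `A` share no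
involved simple root, then `A` has exactly one `≺`-maximal element. -/
theorem excessive_unique_maximal {V : Type*} [NormedAddCommGroup V]
    [InnerProductSpace ℝ V] [FiniteDimensional ℝ V] [DecidableEq V]
    (Φ : Finset V)
    (hΦ0 : (0 : V) ∉ Φ)
    (hrefl : ∀ α ∈ Φ, ∀ β ∈ Φ, β - ⟪α, β⟫ • α ∈ Φ)
    (hred : ∀ α ∈ Φ, ∀ c : ℝ, c • α ∈ Φ → c = 1 ∨ c = -1)
    (hcrys : ∀ α ∈ Φ, ∀ β ∈ Φ, ∃ n : ℤ, ⟪α, β⟫ = (n : ℝ))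
    (hnorm : ∀ α ∈ Φ, ⟪α, α⟫ = 2)
    (Φpos : Finset V) (hpos : Φpos ⊆ Φ)
    (hsplit : ∀ α ∈ Φ, (α ∈ Φpos ↔ -α ∉ Φpos))
    (r : ℕ) (simple : Fin r → V)
    (hsmem : ∀ i, simple i ∈ Φpos)
    (hsind : LinearIndependent ℝ simple)
    (hsspan : ∀ α ∈ Φpos, ∃ c : Fin r → ℕ, α = ∑ j, (c j : ℝ) • simple j)
    (A : Finset V) (hA : A ⊆ Φpos) (hAne : A.Nonempty)
    (n : Fin r → ℕ) (hsum : ∑ i, n i = A.card)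
    (hexc1 : (RIdx simple (Finset.univ.filter (fun i => 0 < n i)) A).card = ∑ i, n i)
    (hexc2 : ∀ J : Finset (Fin r), J ⊆ Finset.univ.filter (fun i => 0 < n i) →
      J.Nonempty → J ≠ Finset.univ.filter (fun i => 0 < n i) →
      ∑ i ∈ J, n i < (RIdx simple J A).card)
    (hmaxsupp : ∀ β₁ ∈ A, ∀ β₂ ∈ A,
      (∀ γ ∈ A, ¬ posSum Φpos β₁ γ) → (∀ γ ∈ A, ¬ posSum Φpos β₂ γ) → β₁ ≠ β₂ →
      ∀ i : Fin r, 0 < n i →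
        ¬ ((∃ c : Fin r → ℕ, β₁ = ∑ j, (c j : ℝ) • simple j ∧ c i ≠ 0) ∧
           (∃ c : Fin r → ℕ, β₂ = ∑ j, (c j : ℝ) • simple j ∧ c i ≠ 0))) :
    ∃! β : V, β ∈ A ∧ ∀ γ ∈ A, ¬ posSum Φpos β γ := by
  classical
  -- canonical coefficient functions
  choose coeff hcoeff using hsspan
  -- uniqueness of coefficients
  have huniq : ∀ c d : Fin r → ℕ,
      (∑ j, (c j : ℝ) • simple j) = (∑ j, (d j : ℝ) • simple j) → c = d := by
    intro c d h
    rw [Fintype.linearIndependent_iff] at hsind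
    have h0 : ∑ j, ((c j : ℝ) - (d j : ℝ)) • simple j = 0 := by
      simp only [sub_smul, Finset.sum_sub_distrib, h, sub_self]
    have hz := hsind (fun j => (c j : ℝ) - (d j : ℝ)) h0
    funext j
    have hj : (c j : ℝ) - (d j : ℝ) = 0 := hz j
    have : (c j : ℝ) = (d j : ℝ) := by linarith
    exact_mod_cast this
  -- coefficients of a positive root are nonzero
  have hcne : ∀ a (ha : a ∈ Φpos), coeff a ha ≠ 0 := by
    intro a ha h0
    have : a = 0 := by
      rw [hcoeff a ha, h0]; simp
    exact hΦ0 (this ▸ hpos ha)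
  -- proof irrelevance for coefficients
  have hpi : ∀ a (h1 h2 : a ∈ Φpos), coeff a h1 = coeff a h2 :=
    fun a h1 h2 => huniq _ _ ((hcoeff a h1).symm.trans (hcoeff a h2))
  -- sums of multisets of positive roots have nat coefficients
  have hmsum : ∀ m : Multiset V, (∀ x ∈ m, x ∈ Φpos) →
      ∃ d : Fin r → ℕ, m.sum = ∑ j, (d j : ℝ) • simple j ∧ (m ≠ 0 → d ≠ 0) := by
    intro m
    induction m using Multiset.induction with
    | empty => intro _; exact ⟨0, by simp, by simp⟩
    | cons x m ih =>
      intro hx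
      obtain ⟨d, hd, _⟩ := ih (fun y hy => hx y (Multiset.mem_cons_of_mem hy))
      have hxp : x ∈ Φpos := hx x (Multiset.mem_cons_self x m)
      refine ⟨fun j => coeff x hxp j + d j, ?_, ?_⟩
      · show (x ::ₘ m).sum = ∑ j, ((coeff x hxp j + d j : ℕ) : ℝ) • simple j
        rw [Multiset.sum_cons, hd]
        calc x + ∑ j, (d j : ℝ) • simple j
            = (∑ j, (coeff x hxp j : ℝ) • simple j) + ∑ j, (d j : ℝ) • simple j := by
              rw [← hcoeff x hxp]
          _ = ∑ j, ((coeff x hxp j + d j : ℕ) : ℝ) • simple j := by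
              rw [← Finset.sum_add_distrib]
              exact Finset.sum_congr rfl (fun j _ => by push_cast; rw [add_smul])
      · intro _ h0
        apply hcne x hxp
        funext j
        have := congrFun h0 j
        simp only [Pi.zero_apply] at this ⊢
        omega
  -- coefficient monotonicity along posSum
  have hmono : ∀ a (ha : a ∈ Φpos), ∀ b (hb : b ∈ Φpos), posSum Φpos a b →
      ∃ d : Fin r → ℕ, d ≠ 0 ∧ ∀ j, coeff b hb j = coeff a ha j + d j := by
    intro a ha b hb ⟨m, hm0, hmP, hms⟩
    obtain ⟨d, hd, hdne⟩ := hmsum m hmP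
    refine ⟨d, hdne hm0, ?_⟩
    have hb2 : (∑ j, (coeff b hb j : ℝ) • simple j)
        = ∑ j, ((coeff a ha j + d j : ℕ) : ℝ) • simple j := by
      calc ∑ j, (coeff b hb j : ℝ) • simple j = b := (hcoeff b hb).symm
        _ = a + m.sum := by rw [hms]; abel
        _ = (∑ j, (coeff a ha j : ℝ) • simple j) + ∑ j, (d j : ℝ) • simple j := by
            rw [← hcoeff a ha, hd]
        _ = ∑ j, ((coeff a ha j + d j : ℕ) : ℝ) • simple j := by
            rw [← Finset.sum_add_distrib]
            exact Finset.sum_congr rfl (fun j _ => by push_cast; rw [add_smul])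
    have := huniq _ _ hb2
    intro j
    exact congrFun this j
  -- height function
  have hH : ∀ a (ha : a ∈ Φpos), ∀ b (hb : b ∈ Φpos), posSum Φpos a b →
      (∑ j, coeff a ha j) < ∑ j, coeff b hb j := by
    intro a ha b hb hab
    obtain ⟨d, hdne, hd⟩ := hmono a ha b hb hab
    have hdpos : 0 < ∑ j, d j := by
      rcases Function.ne_iff.mp hdne with ⟨j, hj⟩
      calc 0 < d j := Nat.pos_of_ne_zero hj
        _ ≤ ∑ j, d j := Finset.single_le_sum (fun _ _ => Nat.zero_le _) (Finset.mem_univ j)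
    calc (∑ j, coeff a ha j) < (∑ j, coeff a ha j) + ∑ j, d j := by omega
      _ = ∑ j, coeff b hb j := by rw [← Finset.sum_add_distrib]; exact (Finset.sum_congr rfl (fun j _ => (hd j).symm))
  -- transitivity of posSum
  have htrans : ∀ a b c : V, posSum Φpos a b → posSum Φpos b c → posSum Φpos a c := by
    rintro a b c ⟨m₁, h₁0, h₁P, h₁s⟩ ⟨m₂, h₂0, h₂P, h₂s⟩
    refine ⟨m₁ + m₂, by simp [h₁0], ?_, ?_⟩
    · intro x hx
      rcases Multiset.mem_add.mp hx with h | h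
      · exact h₁P x h
      · exact h₂P x h
    · rw [Multiset.sum_add, h₁s, h₂s]; abel
  -- define H as total function
  set H : V → ℕ := fun v => if h : v ∈ Φpos then ∑ j, coeff v h j else 0 with hHdef
  have hHlt : ∀ a ∈ A, ∀ b ∈ A, posSum Φpos a b → H a < H b := by
    intro a ha b hb hab
    have ha' := hA ha; have hb' := hA hb
    simp only [hHdef, dif_pos ha', dif_pos hb']
    exact hH a ha' b hb' hab
  -- existence of a maximal element above any element
  have hmaxex : ∀ a ∈ A, ∃ β ∈ A, (a = β ∨ posSum Φpos a β) ∧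
      ∀ γ ∈ A, ¬ posSum Φpos β γ := by
    have key : ∀ N : ℕ, ∀ a ∈ A, (A.filter (fun x => H a < H x)).card ≤ N →
        ∃ β ∈ A, (a = β ∨ posSum Φpos a β) ∧ ∀ γ ∈ A, ¬ posSum Φpos β γ := by
      intro N
      induction N with
      | zero =>
        intro a ha hcard
        refine ⟨a, ha, Or.inl rfl, ?_⟩
        intro γ hγ hp
        have : γ ∈ A.filter (fun x => H a < H x) :=
          Finset.mem_filter.mpr ⟨hγ, hHlt a ha γ hγ hp⟩
        have := Finset.card_pos.mpr ⟨γ, this⟩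
        omega
      | succ N ih =>
        intro a ha hcard
        by_cases hmax : ∀ γ ∈ A, ¬ posSum Φpos a γ
        · exact ⟨a, ha, Or.inl rfl, hmax⟩
        · push_neg at hmax
          obtain ⟨γ, hγ, hp⟩ := hmax
          have hsub : A.filter (fun x => H γ < H x) ⊆
              (A.filter (fun x => H a < H x)).erase γ := by
            intro x hx
            rw [Finset.mem_filter] at hx
            refine Finset.mem_erase.mpr ⟨?_, Finset.mem_filter.mpr ⟨hx.1, ?_⟩⟩
            · rintro rfl; omega
            · have := hHlt a ha γ hγ hp; omega
          have hγmem : γ ∈ A.filter (fun x => H a < H x) :=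
            Finset.mem_filter.mpr ⟨hγ, hHlt a ha γ hγ hp⟩
          have hlt : (A.filter (fun x => H γ < H x)).card ≤ N := by
            have h1 := Finset.card_le_card hsub
            have h2 := Finset.card_erase_of_mem hγmem
            have h3 := Finset.card_pos.mpr ⟨γ, hγmem⟩
            omega
          obtain ⟨β, hβA, hβrel, hβmax⟩ := ih γ hγ hlt
          refine ⟨β, hβA, Or.inr ?_, hβmax⟩
          rcases hβrel with rfl | hrel
          · exact hp
          · exact htrans a γ β hp hrel
    intro a ha
    exact key _ a ha le_rfl
  -- membership in RIdx via canonical coefficients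
  have hRmem : ∀ (J : Finset (Fin r)) a (ha : a ∈ Φpos),
      (a ∈ RIdx simple J A ↔ a ∈ A ∧ ∃ i ∈ J, coeff a ha i ≠ 0) := by
    intro J a ha
    unfold RIdx
    rw [Finset.mem_filter]
    constructor
    · rintro ⟨haA, i, hi, c, hc, hci⟩
      have : c = coeff a ha := huniq c (coeff a ha) (by rw [← hc, ← hcoeff a ha])
      exact ⟨haA, i, hi, this ▸ hci⟩
    · rintro ⟨haA, i, hi, hci⟩
      exact ⟨haA, i, hi, coeff a ha, hcoeff a ha, hci⟩
  set I : Finset (Fin r) := Finset.univ.filter (fun i => 0 < n i) with hIdef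
  have hRIA : RIdx simple I A = A := by
    apply Finset.eq_of_subset_of_card_le (Finset.filter_subset _ _)
    show A.card ≤ (RIdx simple I A).card
    rw [hexc1, hsum]
  -- every element of A has a coefficient supported in I
  have hsuppI : ∀ a ∈ A, ∃ i ∈ I, ∀ (ha : a ∈ Φpos), coeff a ha i ≠ 0 := by
    intro a haA
    have ha := hA haA
    have : a ∈ RIdx simple I A := by rw [hRIA]; exact haA
    obtain ⟨_, i, hi, hci⟩ := (hRmem I a ha).mp this
    exact ⟨i, hi, fun ha' => by rw [hpi a ha' ha]; exact hci⟩
  -- the key uniqueness of maximal elements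
  have huniqmax : ∀ β₁ ∈ A, ∀ β₂ ∈ A,
      (∀ γ ∈ A, ¬ posSum Φpos β₁ γ) → (∀ γ ∈ A, ¬ posSum Φpos β₂ γ) → β₁ = β₂ := by
    intro β₁ hβ₁A β₂ hβ₂A hm₁ hm₂
    by_contra hne
    have h₁ := hA hβ₁A
    have h₂ := hA hβ₂A
    set J : Finset (Fin r) := I.filter (fun i => coeff β₁ h₁ i ≠ 0) with hJdef
    have hJsub : J ⊆ I := Finset.filter_subset _ _
    have hJne : J.Nonempty := by
      obtain ⟨i, hi, hci⟩ := hsuppI β₁ hβ₁A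
      exact ⟨i, Finset.mem_filter.mpr ⟨hi, hci h₁⟩⟩
    -- index from β₂'s support is not in J
    obtain ⟨i₂, hi₂I, hci₂⟩ := hsuppI β₂ hβ₂A
    have hi₂J : i₂ ∉ J := by
      intro hmem
      have hni₂ : 0 < n i₂ := (Finset.mem_filter.mp hi₂I).2
      apply hmaxsupp β₁ hβ₁A β₂ hβ₂A hm₁ hm₂ hne i₂ hni₂
      exact ⟨⟨coeff β₁ h₁, hcoeff β₁ h₁, (Finset.mem_filter.mp hmem).2⟩,
             ⟨coeff β₂ h₂, hcoeff β₂ h₂, hci₂ h₂⟩⟩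
    set J' : Finset (Fin r) := I \ J with hJ'def
    have hJ'sub : J' ⊆ I := Finset.sdiff_subset
    have hJ'ne : J'.Nonempty := ⟨i₂, Finset.mem_sdiff.mpr ⟨hi₂I, hi₂J⟩⟩
    have hJneI : J ≠ I := by
      intro h
      exact hi₂J (h ▸ hi₂I)
    have hJ'neI : J' ≠ I := by
      intro h
      obtain ⟨i, hi⟩ := hJne
      have : i ∈ J' := h ▸ (hJsub hi)
      exact (Finset.mem_sdiff.mp this).2 hi
    have hc1 := hexc2 J hJsub hJne hJneI
    have hc2 := hexc2 J' hJ'sub hJ'ne hJ'neI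
    -- R_J(A) and R_{J'}(A) are disjoint and cover A
    have hcover : RIdx simple J A ∪ RIdx simple J' A = A := by
      apply Finset.Subset.antisymm
      · apply Finset.union_subset <;> exact Finset.filter_subset _ _
      · intro a haA
        have ha := hA haA
        obtain ⟨i, hiI, hci⟩ := hsuppI a haA
        by_cases hiJ : i ∈ J
        · exact Finset.mem_union_left _ ((hRmem J a ha).mpr ⟨haA, i, hiJ, hci ha⟩)
        · exact Finset.mem_union_right _
            ((hRmem J' a ha).mpr ⟨haA, i, Finset.mem_sdiff.mpr ⟨hiI, hiJ⟩, hci ha⟩)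
    have hdisj : Disjoint (RIdx simple J A) (RIdx simple J' A) := by
      rw [Finset.disjoint_left]
      intro a haJ haJ'
      have haA : a ∈ A := (Finset.filter_subset _ _) haJ
      have ha := hA haA
      obtain ⟨_, i, hiJ, hci⟩ := (hRmem J a ha).mp haJ
      obtain ⟨_, i', hi'J', hci'⟩ := (hRmem J' a ha).mp haJ'
      -- find maximal element above a
      obtain ⟨β, hβA, hβrel, hβmax⟩ := hmaxex a haA
      have hβ := hA hβA
      -- coefficients of a carry to β
      have hcarry : ∀ k, coeff a ha k ≠ 0 → coeff β hβ k ≠ 0 := by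
        rcases hβrel with rfl | hrel
        · intro k hk
          rw [hpi a hβ ha]; exact hk
        · obtain ⟨d, _, hd⟩ := hmono a ha β hβ hrel
          intro k hk
          have := hd k
          omega
      -- β = β₁ via index i ∈ J
      have hββ₁ : β = β₁ := by
        by_contra hneβ
        have hiI : i ∈ I := hJsub hiJ
        have hni : 0 < n i := (Finset.mem_filter.mp hiI).2
        apply hmaxsupp β hβA β₁ hβ₁A hβmax hm₁ hneβ i hni
        exact ⟨⟨coeff β hβ, hcoeff β hβ, hcarry i hci⟩,
               ⟨coeff β₁ h₁, hcoeff β₁ h₁, (Finset.mem_filter.mp hiJ).2⟩⟩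
      -- but then i' ∈ J, contradiction
      have hi'I : i' ∈ I := (Finset.mem_sdiff.mp hi'J').1
      have : i' ∈ J := by
        rw [hJdef, Finset.mem_filter]
        refine ⟨hi'I, ?_⟩
        have hcb : coeff β hβ i' ≠ 0 := hcarry i' hci'
        subst hββ₁
        rw [hpi β h₁ hβ]; exact hcb
      exact (Finset.mem_sdiff.mp hi'J').2 this
    -- counting
    have hcards : (RIdx simple J A).card + (RIdx simple J' A).card = A.card := by
      rw [← Finset.card_union_of_disjoint hdisj, hcover]
    have hsumJ : (∑ i ∈ J, n i) + (∑ i ∈ J', n i) = ∑ i ∈ I, n i := by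
      rw [hJ'def, ← Finset.sum_union (Finset.disjoint_sdiff), Finset.union_sdiff_of_subset hJsub]
    have hsumI : ∑ i ∈ I, n i = ∑ i, n i := by
      apply Finset.sum_subset (Finset.subset_univ _)
      intro i _ hi
      have hni : ¬ 0 < n i := by
        intro h
        exact hi (Finset.mem_filter.mpr ⟨Finset.mem_univ i, h⟩)
      omega
    omega
  -- conclude
  obtain ⟨a, ha⟩ := hAne
  obtain ⟨β, hβA, _, hβmax⟩ := hmaxex a ha
  refine ⟨β, ⟨hβA, hβmax⟩, ?_⟩
  rintro y ⟨hyA, hymax⟩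
  exact huniqmax y hyA β hβA hymax hβmax
end

section
/- Let 0 = β_0, β_1, …, β_k be a path-originating sequence, and write α_{i_j} = β_j − β_{j−1}. If β_m = γ + δ for some 1 ≤ m ≤ k and γ, δ ∈ Φ⁺, then, after possibly interchanging γ and δ, there exists an index p with 1 ≤ p < m such that γ = β_p and δ = α_{i_{p+1}} + ⋯ + α_{i_m}. -/
open scoped RealInnerProductSpace

lemma aux_interval (m : ℕ) (S T : Finset ℕ)
    (hU : S ∪ T = Finset.Icc 1 m) (hD : Disjoint S T)
    (ha : (S.filter (fun j => j + 1 ∈ T)).card = 1)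
    (hb : (T.filter (fun j => j + 1 ∈ S)).card = 0) :
    ∃ p, 1 ≤ p ∧ p < m ∧ S = Finset.Icc 1 p ∧ T = Finset.Icc (p + 1) m := by
  obtain ⟨j0, hj0⟩ := Finset.card_eq_one.mp ha
  have hj0ST : j0 ∈ S ∧ j0 + 1 ∈ T := by
    have h := hj0 ▸ Finset.mem_singleton_self j0
    simpa using (Finset.mem_filter.mp h)
  have hbe : ∀ j, j ∈ T → j + 1 ∉ S := by
    intro j hj hjs
    have h : j ∈ T.filter (fun j => j + 1 ∈ S) := Finset.mem_filter.mpr ⟨hj, hjs⟩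
    rw [Finset.card_eq_zero.mp hb] at h
    exact absurd h (Finset.notMem_empty j)
  have hSsub : S ⊆ Finset.Icc 1 m := hU ▸ Finset.subset_union_left
  have hTsub : T ⊆ Finset.Icc 1 m := hU ▸ Finset.subset_union_right
  have hmem : ∀ j, 1 ≤ j → j ≤ m → j ∈ S ∨ j ∈ T := by
    intro j h1 h2
    have h : j ∈ S ∪ T := by rw [hU]; exact Finset.mem_Icc.mpr ⟨h1, h2⟩
    exact Finset.mem_union.mp h
  have hj0m := Finset.mem_Icc.mp (hSsub hj0ST.1)
  have hj01m := (Finset.mem_Icc.mp (hTsub hj0ST.2)).2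
  have down : ∀ t j, j + t = j0 → 1 ≤ j → j ∈ S := by
    intro t
    induction t with
    | zero =>
      intro j hj _
      have : j = j0 := by omega
      exact this ▸ hj0ST.1
    | succ t ih =>
      intro j hj h1
      have hj1 : j + 1 ∈ S := ih (j + 1) (by omega) (by omega)
      rcases hmem j h1 (by omega) with h | h
      · exact h
      · exact absurd hj1 (hbe j h)
  have up : ∀ t, j0 + 1 + t ≤ m → j0 + 1 + t ∈ T := by
    intro t
    induction t with
    | zero => intro _; exact hj0ST.2
    | succ t ih =>
      intro h
      have hT : j0 + 1 + t ∈ T := ih (by omega)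
      rcases hmem (j0 + 1 + t + 1) (by omega) (by omega) with hS' | hT'
      · exact absurd hS' (hbe _ hT)
      · exact hT'
  refine ⟨j0, hj0m.1, by omega, ?_, ?_⟩
  · ext j
    simp only [Finset.mem_Icc]
    constructor
    · intro hjS
      have h := Finset.mem_Icc.mp (hSsub hjS)
      refine ⟨h.1, ?_⟩
      by_contra hlt
      push_neg at hlt
      have hjT : j ∈ T := by
        have h2 := up (j - j0 - 1) (by omega)
        have heq : j0 + 1 + (j - j0 - 1) = j := by omega
        rwa [heq] at h2
      exact (Finset.disjoint_left.mp hD hjS) hjT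
    · rintro ⟨h1, h2⟩
      exact down (j0 - j) j (by omega) h1
  · ext j
    simp only [Finset.mem_Icc]
    constructor
    · intro hjT
      have h := Finset.mem_Icc.mp (hTsub hjT)
      refine ⟨?_, h.2⟩
      by_contra hlt
      push_neg at hlt
      have hjS : j ∈ S := down (j0 - j) j (by omega) h.1
      exact (Finset.disjoint_left.mp hD hjS) hjT
    · rintro ⟨h1, h2⟩
      have h2' := up (j - j0 - 1) (by omega)
      have heq : j0 + 1 + (j - j0 - 1) = j := by omega
      rwa [heq] at h2'

/-- Decomposition of members of a path-originating sequence: if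
`0 = β 0, β 1, …, β k` is path-originating with differences
`simple (idx j) = β j - β (j-1)` and `β m = γ + δ` with `γ, δ ∈ Φ⁺`, then (up to
interchanging `γ` and `δ`) there is `1 ≤ p < m` with `γ = β p` and
`δ = simple (idx (p+1)) + ⋯ + simple (idx m)`. -/
theorem path_originating_decompose {V : Type*} [NormedAddCommGroup V]
    [InnerProductSpace ℝ V] [FiniteDimensional ℝ V]
    (Φ : Finset V)
    (hΦ0 : (0 : V) ∉ Φ)
    (hrefl : ∀ α ∈ Φ, ∀ β ∈ Φ, β - ⟪α, β⟫ • α ∈ Φ)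
    (hred : ∀ α ∈ Φ, ∀ c : ℝ, c • α ∈ Φ → c = 1 ∨ c = -1)
    (hcrys : ∀ α ∈ Φ, ∀ β ∈ Φ, ∃ n : ℤ, ⟪α, β⟫ = (n : ℝ))
    (hnorm : ∀ α ∈ Φ, ⟪α, α⟫ = 2)
    (Φpos : Finset V) (hpos : Φpos ⊆ Φ)
    (hsplit : ∀ α ∈ Φ, (α ∈ Φpos ↔ -α ∉ Φpos))
    (r : ℕ) (simple : Fin r → V)
    (hsmem : ∀ i, simple i ∈ Φpos)
    (hsind : LinearIndependent ℝ simple)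
    (hsspan : ∀ α ∈ Φpos, ∃ c : Fin r → ℕ, α = ∑ j, (c j : ℝ) • simple j)
    (k : ℕ) (β : ℕ → V) (idx : ℕ → Fin r)
    (hβ0 : β 0 = 0)
    (hβpos : ∀ j, 1 ≤ j → j ≤ k → β j ∈ Φpos)
    (hdiff : ∀ j, 1 ≤ j → j ≤ k → β j - β (j - 1) = simple (idx j))
    (hadj : ∀ j, 1 ≤ j → j + 1 ≤ k → ⟪simple (idx j), simple (idx (j + 1))⟫ = -1)
    (hfar : ∀ j j', 1 ≤ j → j ≤ k → 1 ≤ j' → j' ≤ k →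
      (j + 1 < j' ∨ j' + 1 < j) → ⟪simple (idx j), simple (idx j')⟫ = 0)
    (m : ℕ) (hm1 : 1 ≤ m) (hmk : m ≤ k)
    (γ δ : V) (hγ : γ ∈ Φpos) (hδ : δ ∈ Φpos) (hsum : β m = γ + δ) :
    ∃ p, 1 ≤ p ∧ p < m ∧
      ((γ = β p ∧ δ = ∑ j ∈ Finset.Icc (p + 1) m, simple (idx j)) ∨
       (δ = β p ∧ γ = ∑ j ∈ Finset.Icc (p + 1) m, simple (idx j))) := by
  classical
  have hγΦ : γ ∈ Φ := hpos hγ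
  have hδΦ : δ ∈ Φ := hpos hδ
  have hβmΦ : β m ∈ Φ := hpos (hβpos m hm1 hmk)
  -- pointwise inner products along the path
  have hip : ∀ j j', 1 ≤ j → j ≤ k → 1 ≤ j' → j' ≤ k → j ≠ j' →
      ⟪simple (idx j), simple (idx j')⟫ =
        (if j' = j + 1 then (-1 : ℝ) else 0) + (if j = j' + 1 then (-1 : ℝ) else 0) := by
    intro j j' hj1 hjk hj'1 hj'k hne
    by_cases h1 : j' = j + 1
    · subst h1
      rw [if_pos rfl, if_neg (by omega), hadj j hj1 hj'k]
      ring
    · by_cases h2 : j = j' + 1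
      · subst h2
        rw [if_neg (by omega), if_pos rfl, real_inner_comm, hadj j' hj'1 hjk]
        ring
      · rw [if_neg h1, if_neg h2, hfar j j' hj1 hjk hj'1 hj'k (by omega)]
        ring
  -- injectivity of idx on [1, m]
  have hinj : ∀ j ∈ Finset.Icc 1 m, ∀ j' ∈ Finset.Icc 1 m, idx j = idx j' → j = j' := by
    intro j hj j' hj' hidx
    by_contra hne
    obtain ⟨hj1, hjm⟩ := Finset.mem_Icc.mp hj
    obtain ⟨hj'1, hj'm⟩ := Finset.mem_Icc.mp hj'
    have h := hip j j' hj1 (by omega) hj'1 (by omega) hne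
    rw [hidx] at h
    have h2 : ⟪simple (idx j'), simple (idx j')⟫ = 2 := hnorm _ (hpos (hsmem _))
    rw [h2] at h
    split_ifs at h <;> norm_num at h
  -- telescoping
  have tele : ∀ n, n ≤ k → β n = ∑ j ∈ Finset.Icc 1 n, simple (idx j) := by
    intro n
    induction n with
    | zero => intro _; simp [hβ0]
    | succ n ih =>
      intro h
      have hd := hdiff (n + 1) (by omega) h
      rw [Nat.add_sub_cancel] at hd
      rw [Finset.sum_Icc_succ_top (by omega : 1 ≤ n + 1), ← ih (by omega)]
      have : β (n + 1) = simple (idx (n + 1)) + β n := sub_eq_iff_eq_add.mp hd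
      rw [this]; ring_nf
      abel
  -- coefficients
  obtain ⟨c, hc⟩ := hsspan γ hγ
  obtain ⟨d, hd⟩ := hsspan δ hδ
  set img := (Finset.Icc 1 m).image idx with himg
  set e : Fin r → ℕ := fun i => if i ∈ img then 1 else 0 with he
  have hβsum : β m = ∑ j ∈ Finset.Icc 1 m, simple (idx j) := tele m hmk
  have hβe : β m = ∑ i : Fin r, (e i : ℝ) • simple i := by
    have himgsum : ∑ i ∈ img, simple i = ∑ j ∈ Finset.Icc 1 m, simple (idx j) :=
      Finset.sum_image hinj
    rw [hβsum, ← himgsum]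
    calc ∑ i ∈ img, simple i
        = ∑ i : Fin r, (if i ∈ img then simple i else 0) := by
          rw [Finset.sum_ite_mem, Finset.univ_inter]
      _ = ∑ i : Fin r, (e i : ℝ) • simple i := by
          refine Finset.sum_congr rfl fun i _ => ?_
          by_cases h : i ∈ img <;> simp [he, h]
  have hcd : ∀ i, c i + d i = e i := by
    have hz : ∑ i : Fin r, (((c i : ℝ) + (d i : ℝ)) - (e i : ℝ)) • simple i = 0 := by
      simp only [sub_smul, add_smul]
      rw [Finset.sum_sub_distrib, Finset.sum_add_distrib, ← hc, ← hd, ← hβe, ← hsum]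
      abel
    intro i
    have h := Fintype.linearIndependent_iff.mp hsind _ hz i
    have h' : (c i : ℝ) + (d i : ℝ) = (e i : ℝ) := by linarith [sub_eq_zero.mp h]
    exact_mod_cast h'
  have he1 : ∀ i, e i ≤ 1 := by
    intro i; rw [he]; dsimp only; split <;> omega
  have heidx : ∀ j ∈ Finset.Icc 1 m, e (idx j) = 1 := by
    intro j hj
    have h : idx j ∈ img := Finset.mem_image_of_mem _ hj
    simp [he, h]
  set S := (Finset.Icc 1 m).filter (fun j => c (idx j) = 1) with hSdef
  set T := (Finset.Icc 1 m).filter (fun j => d (idx j) = 1) with hTdef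
  have hUm : S ∪ T = Finset.Icc 1 m := by
    apply Finset.Subset.antisymm
    · exact Finset.union_subset (Finset.filter_subset _ _) (Finset.filter_subset _ _)
    · intro j hj
      have h1 := heidx j hj
      have h2 := hcd (idx j)
      rcases (show c (idx j) = 1 ∨ d (idx j) = 1 by omega) with h | h
      · exact Finset.mem_union_left _ (Finset.mem_filter.mpr ⟨hj, h⟩)
      · exact Finset.mem_union_right _ (Finset.mem_filter.mpr ⟨hj, h⟩)
  have hDm : Disjoint S T := by
    rw [Finset.disjoint_left]
    intro j hjS hjT
    rw [hSdef, Finset.mem_filter] at hjS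
    rw [hTdef, Finset.mem_filter] at hjT
    have h1 := heidx j hjS.1
    have h2 := hcd (idx j)
    have h3 := hjS.2
    have h4 := hjT.2
    omega
  -- γ as a sum over S, δ as a sum over T
  have key : ∀ (c' : Fin r → ℕ) (x : V), x = ∑ i, (c' i : ℝ) • simple i →
      (∀ i, c' i ≤ e i) →
      x = ∑ j ∈ (Finset.Icc 1 m).filter (fun j => c' (idx j) = 1), simple (idx j) := by
    intro c' x hx hle
    have himgS : ((Finset.Icc 1 m).filter (fun j => c' (idx j) = 1)).image idx
        = Finset.univ.filter (fun i => c' i = 1) := by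
      ext i
      simp only [Finset.mem_image, Finset.mem_filter, Finset.mem_univ, true_and]
      constructor
      · rintro ⟨j, hj, rfl⟩; exact hj.2
      · intro hci
        have hei : e i = 1 := by have := hle i; have := he1 i; omega
        have hiimg : i ∈ img := by
          by_contra h; rw [he] at hei; simp [h] at hei
        rw [himg, Finset.mem_image] at hiimg
        obtain ⟨j, hj, rfl⟩ := hiimg
        exact ⟨j, ⟨hj, hci⟩, rfl⟩
    calc x = ∑ i : Fin r, (c' i : ℝ) • simple i := hx
      _ = ∑ i : Fin r, (if c' i = 1 then simple i else 0) := by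
          refine Finset.sum_congr rfl fun i _ => ?_
          by_cases h : c' i = 1
          · simp [h]
          · have : c' i = 0 := by have := hle i; have := he1 i; omega
            simp [h, this]
      _ = ∑ i ∈ Finset.univ.filter (fun i => c' i = 1), simple i := by
          rw [Finset.sum_filter]
      _ = ∑ i ∈ ((Finset.Icc 1 m).filter (fun j => c' (idx j) = 1)).image idx, simple i := by
          rw [himgS]
      _ = ∑ j ∈ (Finset.Icc 1 m).filter (fun j => c' (idx j) = 1), simple (idx j) := by
          refine Finset.sum_image ?_
          intro x hx y hy h
          exact hinj x (Finset.filter_subset _ _ hx) y (Finset.filter_subset _ _ hy) h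
  have hγS : γ = ∑ j ∈ S, simple (idx j) :=
    key c γ hc (fun i => by have := hcd i; omega)
  have hδT : δ = ∑ j ∈ T, simple (idx j) :=
    key d δ hd (fun i => by have := hcd i; omega)
  -- inner product ⟪γ, δ⟫ = -1
  have hinner : ⟪γ, δ⟫ = -1 := by
    have h2 : ⟪β m, β m⟫ = 2 := hnorm _ hβmΦ
    rw [hsum] at h2
    have hγ2 := hnorm γ hγΦ
    have hδ2 := hnorm δ hδΦ
    have hexp := real_inner_add_add_self γ δ
    linarith
  -- expand the inner product as a count of boundaries
  set a := (S.filter (fun j => j + 1 ∈ T)).card with hadefn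
  set b := (T.filter (fun j => j + 1 ∈ S)).card with hbdefn
  have hSsub : S ⊆ Finset.Icc 1 m := Finset.filter_subset _ _
  have hTsub : T ⊆ Finset.Icc 1 m := Finset.filter_subset _ _
  have hexp : ⟪γ, δ⟫ = -(a : ℝ) - (b : ℝ) := by
    rw [hγS, hδT, sum_inner]
    have step1 : ∀ j ∈ S, ⟪simple (idx j), ∑ j' ∈ T, simple (idx j')⟫ =
        (if j + 1 ∈ T then (-1 : ℝ) else 0) +
          ∑ j' ∈ T, (if j = j' + 1 then (-1 : ℝ) else 0) := by
      intro j hj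
      rw [inner_sum]
      have hterm : ∀ j' ∈ T, ⟪simple (idx j), simple (idx j')⟫ =
          (if j' = j + 1 then (-1 : ℝ) else 0) + (if j = j' + 1 then (-1 : ℝ) else 0) := by
        intro j' hj'
        obtain ⟨hj1, hjm⟩ := Finset.mem_Icc.mp (hSsub hj)
        obtain ⟨hj'1, hj'm⟩ := Finset.mem_Icc.mp (hTsub hj')
        have hne : j ≠ j' := fun h => (Finset.disjoint_left.mp hDm hj) (h ▸ hj')
        exact hip j j' hj1 (by omega) hj'1 (by omega) hne
      rw [Finset.sum_congr rfl hterm, Finset.sum_add_distrib,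
        Finset.sum_ite_eq' T (j + 1) (fun _ => (-1 : ℝ))]
    rw [Finset.sum_congr rfl step1, Finset.sum_add_distrib]
    have h1 : ∑ j ∈ S, (if j + 1 ∈ T then (-1 : ℝ) else 0) = -(a : ℝ) := by
      rw [← Finset.sum_filter, Finset.sum_const, hadefn]
      simp
    have h2 : ∑ j ∈ S, ∑ j' ∈ T, (if j = j' + 1 then (-1 : ℝ) else 0) = -(b : ℝ) := by
      rw [Finset.sum_comm]
      have hswap : ∀ j' ∈ T, ∑ j ∈ S, (if j = j' + 1 then (-1 : ℝ) else 0) =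
          (if j' + 1 ∈ S then (-1 : ℝ) else 0) :=
        fun j' _ => Finset.sum_ite_eq' S (j' + 1) (fun _ => (-1 : ℝ))
      rw [Finset.sum_congr rfl hswap, ← Finset.sum_filter, Finset.sum_const, hbdefn]
      simp
    rw [h1, h2]
    ring
  have hab : a + b = 1 := by
    have h : -(a : ℝ) - (b : ℝ) = -1 := by rw [← hexp, hinner]
    have h' : (a : ℝ) + (b : ℝ) = 1 := by linarith
    exact_mod_cast h'
  rcases (by omega : a = 1 ∧ b = 0 ∨ a = 0 ∧ b = 1) with ⟨ha, hb⟩ | ⟨ha, hb⟩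
  · obtain ⟨p, hp1, hpm, hSe, hTe⟩ := aux_interval m S T hUm hDm ha hb
    refine ⟨p, hp1, hpm, Or.inl ⟨?_, ?_⟩⟩
    · rw [hγS, hSe, tele p (by omega)]
    · rw [hδT, hTe]
  · obtain ⟨p, hp1, hpm, hTe, hSe⟩ :=
      aux_interval m T S (by rw [Finset.union_comm]; exact hUm) hDm.symm hb ha
    refine ⟨p, hp1, hpm, Or.inr ⟨?_, ?_⟩⟩
    · rw [hδT, hTe, tele p (by omega)]
    · rw [hγS, hSe]
end

section
/- Let 0 = β_0, β_1, …, β_n be a path-originating sequence and let w = σ_{β_n} ⋯ σ_{β_1} ∈ W. Then the roots β_1, …, β_n are pairwise distinct, Φ⁺ ∩ wΦ⁻ = {β_1, …, β_n}, and |Φ⁺ ∩ wΦ⁻| = n. -/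
open scoped RealInnerProductSpace

/-- `iterRefl β n` is the composition `σ_{β n} ∘ ⋯ ∘ σ_{β 1}` of the reflections
in the roots `β 1, …, β n` (normalized so that `(α,α) = 2`). -/
def iterRefl {V : Type*} [NormedAddCommGroup V] [InnerProductSpace ℝ V]
    (β : ℕ → V) : ℕ → V → V
  | 0, v => v
  | (j + 1), v => iterRefl β j v - ⟪β (j + 1), iterRefl β j v⟫ • β (j + 1)

namespace PathOrigAux

variable {V : Type*} [NormedAddCommGroup V] [InnerProductSpace ℝ V]

/-- The reflection in a root `a` normalized so that `⟪a,a⟫ = 2`. -/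
def sg (a v : V) : V := v - ⟪a, v⟫ • a

lemma sg_sg (a : V) (ha : ⟪a,a⟫ = 2) (v : V) : sg a (sg a v) = v := by
  simp only [sg, inner_sub_right, real_inner_smul_right, ha]
  match_scalars <;> ring

lemma sg_conj (a c : V) (ha : ⟪a,a⟫ = 2) (u : V) :
    sg c (sg a u) = sg a (sg (sg a c) u) := by
  simp only [sg, inner_sub_right, inner_sub_left, real_inner_smul_right,
    real_inner_smul_left, ha, real_inner_comm c a]
  match_scalars <;> ring

lemma sg_injective (a : V) (ha : ⟪a,a⟫ = 2) : Function.Injective (sg a) :=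
  fun x y h => by rw [← sg_sg a ha x, h, sg_sg a ha]

lemma iterRefl_succ (β : ℕ → V) (j : ℕ) (v : V) :
    iterRefl β (j+1) v = sg (β (j+1)) (iterRefl β j v) := rfl

lemma iterRefl_neg (β : ℕ → V) (n : ℕ) (v : V) :
    iterRefl β n (-v) = -iterRefl β n v := by
  induction n with
  | zero => rfl
  | succ j ih =>
    simp only [iterRefl, ih, inner_neg_right]
    match_scalars <;> ring

lemma iterRefl_mem (Φ : Finset V)
    (hrefl : ∀ α ∈ Φ, ∀ β ∈ Φ, β - ⟪α, β⟫ • α ∈ Φ)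
    (β : ℕ → V) (n : ℕ) (hβ : ∀ j, 1 ≤ j → j ≤ n → β j ∈ Φ) :
    ∀ x ∈ Φ, iterRefl β n x ∈ Φ := by
  induction n with
  | zero => exact fun x hx => hx
  | succ m ihm =>
    intro x hx
    exact hrefl (β (m+1)) (hβ (m+1) (by omega) (by omega)) _
      (ihm (fun j h1 h2 => hβ j h1 (by omega)) x hx)

lemma iterRefl_injective (β : ℕ → V) (n : ℕ)
    (hβn : ∀ j, 1 ≤ j → j ≤ n → ⟪β j, β j⟫ = 2) :
    Function.Injective (iterRefl β n) := by
  induction n with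
  | zero => exact fun a b h => h
  | succ m ihm =>
    intro a b h
    rw [iterRefl_succ, iterRefl_succ] at h
    exact ihm (fun j h1 h2 => hβn j h1 (by omega))
      (sg_injective _ (hβn (m+1) (by omega) (by omega)) h)

section Root
variable [DecidableEq V] (Φ Φpos : Finset V) {r : ℕ} (simple : Fin r → V)

lemma neg_mem (hrefl : ∀ α ∈ Φ, ∀ β ∈ Φ, β - ⟪α, β⟫ • α ∈ Φ)
    (hnorm : ∀ α ∈ Φ, ⟪α, α⟫ = 2) : ∀ γ ∈ Φ, -γ ∈ Φ := by
  intro γ hγ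
  have h := hrefl γ hγ γ hγ
  have h2 : γ - ⟪γ,γ⟫ • γ = -γ := by
    rw [hnorm γ hγ]; match_scalars <;> ring
  rwa [h2] at h

lemma neg_pos (hrefl : ∀ α ∈ Φ, ∀ β ∈ Φ, β - ⟪α, β⟫ • α ∈ Φ)
    (hnorm : ∀ α ∈ Φ, ⟪α, α⟫ = 2)
    (hsplit : ∀ α ∈ Φ, (α ∈ Φpos ↔ -α ∉ Φpos)) :
    ∀ γ ∈ Φ, γ ∉ Φpos → -γ ∈ Φpos := by
  intro γ hγ hnp
  have hm := neg_mem Φ hrefl hnorm γ hγ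
  have h := hsplit (-γ) hm
  rw [neg_neg] at h
  exact h.mpr hnp

lemma regroup (idx : ℕ → Fin r) (s : Finset ℕ) :
    ∑ m ∈ s, simple (idx m)
      = ∑ t : Fin r, ((s.filter (fun m => idx m = t)).card : ℝ) • simple t := by
  rw [← Finset.sum_fiberwise s (fun m => idx m) (fun m => simple (idx m))]
  refine Finset.sum_congr rfl (fun t _ => ?_)
  rw [Finset.sum_congr rfl (fun m hm => by
        rw [(Finset.mem_filter.mp hm).2] : ∀ m ∈ s.filter (fun m => idx m = t), simple (idx m) = simple t)]
  rw [Finset.sum_const, Nat.cast_smul_eq_nsmul]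

lemma pos_of_combo (hΦ0 : (0 : V) ∉ Φ)
    (hrefl : ∀ α ∈ Φ, ∀ β ∈ Φ, β - ⟪α, β⟫ • α ∈ Φ)
    (hnorm : ∀ α ∈ Φ, ⟪α, α⟫ = 2)
    (hpos : Φpos ⊆ Φ)
    (hsplit : ∀ α ∈ Φ, (α ∈ Φpos ↔ -α ∉ Φpos))
    (hsind : LinearIndependent ℝ simple)
    (hsspan : ∀ α ∈ Φpos, ∃ c : Fin r → ℕ, α = ∑ j, (c j : ℝ) • simple j)
    (γ : V) (hγ : γ ∈ Φ) (c : Fin r → ℝ) (hc : ∀ t, 0 ≤ c t)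
    (hcomb : γ = ∑ t, c t • simple t) : γ ∈ Φpos := by
  by_contra hnp
  have hng := neg_pos Φ Φpos hrefl hnorm hsplit γ hγ hnp
  obtain ⟨d, hd⟩ := hsspan (-γ) hng
  have hzero : ∑ t, (c t + (d t : ℝ)) • simple t = 0 := by
    simp only [add_smul, Finset.sum_add_distrib]
    rw [← hcomb, ← hd]; simp
  have hall := Fintype.linearIndependent_iff.mp hsind _ hzero
  have hc0 : ∀ t, c t = 0 := by
    intro t
    have h1 := hall t
    have h2 := hc t
    have h3 : (0:ℝ) ≤ (d t : ℝ) := Nat.cast_nonneg _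
    linarith
  apply hΦ0
  have hγ0 : γ = 0 := by
    rw [hcomb]
    exact Finset.sum_eq_zero (fun t _ => by rw [hc0 t, zero_smul])
  rwa [← hγ0]

lemma simple_perm (hΦ0 : (0 : V) ∉ Φ)
    (hrefl : ∀ α ∈ Φ, ∀ β ∈ Φ, β - ⟪α, β⟫ • α ∈ Φ)
    (hred : ∀ α ∈ Φ, ∀ c : ℝ, c • α ∈ Φ → c = 1 ∨ c = -1)
    (hnorm : ∀ α ∈ Φ, ⟪α, α⟫ = 2)
    (hpos : Φpos ⊆ Φ)
    (hsplit : ∀ α ∈ Φ, (α ∈ Φpos ↔ -α ∉ Φpos))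
    (hsmem : ∀ i, simple i ∈ Φpos)
    (hsind : LinearIndependent ℝ simple)
    (hsspan : ∀ α ∈ Φpos, ∃ c : Fin r → ℕ, α = ∑ j, (c j : ℝ) • simple j)
    (t : Fin r) (γ : V) (hγp : γ ∈ Φpos) (hne : γ ≠ simple t) :
    sg (simple t) γ ∈ Φpos := by
  have haΦ : simple t ∈ Φ := hpos (hsmem t)
  have hγΦ : γ ∈ Φ := hpos hγp
  have hσΦ : sg (simple t) γ ∈ Φ := hrefl (simple t) haΦ γ hγΦ
  by_contra hnp
  have hng : -(sg (simple t) γ) ∈ Φpos :=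
    neg_pos Φ Φpos hrefl hnorm hsplit _ hσΦ hnp
  obtain ⟨c, hcγ⟩ := hsspan γ hγp
  obtain ⟨d, hdγ⟩ := hsspan _ hng
  have key : ∑ u, (((c u : ℝ) + (d u : ℝ)) - (if u = t then ⟪simple t, γ⟫ else 0)) • simple u = 0 := by
    simp only [sub_smul, add_smul, Finset.sum_sub_distrib, Finset.sum_add_distrib, ite_smul, zero_smul]
    rw [← hcγ, ← hdγ]
    have hsum : ∑ x : Fin r, (if x = t then ⟪simple t, γ⟫ • simple x else 0)
        = ⟪simple t, γ⟫ • simple t := by simp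
    rw [hsum]
    simp only [sg]
    abel
  have hall := Fintype.linearIndependent_iff.mp hsind _ key
  have hcu : ∀ u, u ≠ t → (c u : ℝ) = 0 := by
    intro u hu
    have h1 := hall u
    simp only [hu, if_false] at h1
    have h3 : (0:ℝ) ≤ (d u : ℝ) := Nat.cast_nonneg _
    have h4 : (0:ℝ) ≤ (c u : ℝ) := Nat.cast_nonneg _
    linarith
  have hγeq : γ = (c t : ℝ) • simple t := by
    rw [hcγ, Finset.sum_eq_single t (fun u _ hu => by rw [hcu u hu, zero_smul])
      (fun h => absurd (Finset.mem_univ t) h)]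
  rcases hred (simple t) haΦ (c t) (hγeq ▸ hγΦ) with h1 | h2
  · exact hne (by rw [hγeq, h1, one_smul])
  · have hna : -(simple t) ∉ Φpos := (hsplit (simple t) haΦ).mp (hsmem t)
    apply hna
    have : γ = -(simple t) := by rw [hγeq, h2, neg_smul, one_smul]
    rwa [← this]

end Root

end PathOrigAux

namespace PathOrigAux

lemma key {V : Type*} [NormedAddCommGroup V] [InnerProductSpace ℝ V] [DecidableEq V]
    (Φ : Finset V) (hΦ0 : (0 : V) ∉ Φ)
    (hrefl : ∀ α ∈ Φ, ∀ β ∈ Φ, β - ⟪α, β⟫ • α ∈ Φ)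
    (hred : ∀ α ∈ Φ, ∀ c : ℝ, c • α ∈ Φ → c = 1 ∨ c = -1)
    (hnorm : ∀ α ∈ Φ, ⟪α, α⟫ = 2)
    (Φpos : Finset V) (hpos : Φpos ⊆ Φ)
    (hsplit : ∀ α ∈ Φ, (α ∈ Φpos ↔ -α ∉ Φpos))
    {r : ℕ} (simple : Fin r → V)
    (hsmem : ∀ i, simple i ∈ Φpos)
    (hsind : LinearIndependent ℝ simple)
    (hsspan : ∀ α ∈ Φpos, ∃ c : Fin r → ℕ, α = ∑ j, (c j : ℝ) • simple j) :
    ∀ (n : ℕ) (β : ℕ → V) (idx : ℕ → Fin r), β 0 = 0 →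
    (∀ j, 1 ≤ j → j ≤ n → β j ∈ Φpos) →
    (∀ j, 1 ≤ j → j ≤ n → β j - β (j - 1) = simple (idx j)) →
    (∀ j, 1 ≤ j → j + 1 ≤ n → ⟪simple (idx j), simple (idx (j + 1))⟫ = -1) →
    (∀ j j', 1 ≤ j → j ≤ n → 1 ≤ j' → j' ≤ n →
      (j + 1 < j' ∨ j' + 1 < j) → ⟪simple (idx j), simple (idx j')⟫ = 0) →
    Φpos ∩ Φpos.image (fun x => iterRefl β n (-x)) = (Finset.Icc 1 n).image β ∧
    (Φpos ∩ Φpos.image (fun x => iterRefl β n (-x))).card = n := by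
  intro n
  induction n with
  | zero =>
    intro β idx hβ0 _ _ _ _
    have hempty : Φpos ∩ Φpos.image (fun x => iterRefl β 0 (-x)) = ∅ := by
      rw [Finset.eq_empty_iff_forall_notMem]
      intro γ hγ
      rw [Finset.mem_inter, Finset.mem_image] at hγ
      obtain ⟨hγp, x, hxp, hx⟩ := hγ
      have hγx : -γ = x := by
        have : iterRefl β 0 (-x) = -x := rfl
        rw [this] at hx
        rw [← hx, neg_neg]
      exact (hsplit γ (hpos hγp)).mp hγp (hγx ▸ hxp)
    rw [hempty]
    simp
  | succ n ih =>
    intro β idx hβ0 hβpos hdiff hadj hfar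
    set α1 := simple (idx 1) with hα1def
    have hβ1 : β 1 = α1 := by
      have h := hdiff 1 le_rfl (by omega)
      simpa [hβ0] using h
    have hα1p : α1 ∈ Φpos := hsmem (idx 1)
    have hα1Φ : α1 ∈ Φ := hpos hα1p
    have hα1n : ⟪α1, α1⟫ = 2 := hnorm _ hα1Φ
    have hstep : ∀ k, 1 ≤ k → k ≤ n + 1 → β k = β (k-1) + simple (idx k) := by
      intro k h1 h2
      have h := hdiff k h1 h2
      rw [← h]; abel
    -- inner products of α1 with the β k
    have innerB : ∀ k, 2 ≤ k → k ≤ n + 1 → ⟪α1, β k⟫ = 1 := by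
      intro k
      induction k with
      | zero => omega
      | succ m ihm =>
        intro h2 hle
        have hm1 : β (m+1) = β m + simple (idx (m+1)) := by
          have h := hstep (m+1) (by omega) hle
          rwa [Nat.add_sub_cancel] at h
        rcases Nat.lt_or_ge m 2 with hm | hm
        · have hm' : m = 1 := by omega
          subst hm'
          rw [hm1, inner_add_right, hβ1, hα1n, hadj 1 le_rfl (by omega)]
          norm_num
        · rw [hm1, inner_add_right, ihm hm (by omega),
            hfar 1 (m+1) (by omega) (by omega) (by omega) (by omega) (by omega)]
          norm_num
    -- telescoping
    have teles : ∀ k, k ≤ n + 1 → β k = ∑ m ∈ Finset.Icc 1 k, simple (idx m) := by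
      intro k
      induction k with
      | zero => intro _; simpa using hβ0
      | succ m ihm =>
        intro hle
        have hins : Finset.Icc 1 (m+1) = insert (m+1) (Finset.Icc 1 m) := by
          ext x; simp only [Finset.mem_Icc, Finset.mem_insert]; omega
        have hnm : (m+1) ∉ Finset.Icc 1 m := by simp
        rw [hins, Finset.sum_insert hnm, ← ihm (by omega)]
        have h := hstep (m+1) (by omega) hle
        rw [Nat.add_sub_cancel] at h
        rw [h]; abel
    -- the shifted sequence
    have hβ'Φ : ∀ j, 1 ≤ j → j ≤ n → β (j+1) - β 1 ∈ Φ := by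
      intro j h1 h2
      have hmem := hrefl α1 hα1Φ (β (j+1)) (hpos (hβpos (j+1) (by omega) (by omega)))
      rw [innerB (j+1) (by omega) (by omega), one_smul] at hmem
      rwa [hβ1]
    have hβ'sum : ∀ j, 1 ≤ j → j ≤ n →
        β (j+1) - β 1 = ∑ m ∈ Finset.Icc 2 (j+1), simple (idx m) := by
      intro j h1 h2
      have e1 := teles (j+1) (by omega)
      have e2 : Finset.Icc 1 (j+1) = insert 1 (Finset.Icc 2 (j+1)) := by
        ext x; simp only [Finset.mem_Icc, Finset.mem_insert]; omega
      have h1n : (1:ℕ) ∉ Finset.Icc 2 (j+1) := by simp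
      rw [e2, Finset.sum_insert h1n] at e1
      rw [e1, hβ1, ← hα1def]; abel
    have hβ'pos : ∀ j, 1 ≤ j → j ≤ n → β (j+1) - β 1 ∈ Φpos := by
      intro j h1 h2
      exact pos_of_combo Φ Φpos simple hΦ0 hrefl hnorm hpos hsplit hsind hsspan _
        (hβ'Φ j h1 h2)
        (fun t => (((Finset.Icc 2 (j+1)).filter (fun m => idx m = t)).card : ℝ))
        (fun t => Nat.cast_nonneg _)
        (by rw [hβ'sum j h1 h2]; exact regroup simple idx _)
    -- apply the induction hypothesis to the shifted sequence
    obtain ⟨hS', hc'⟩ := ih (fun k => β (k+1) - β 1) (fun k => idx (k+1)) (sub_self _)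
      (fun j h1 h2 => hβ'pos j h1 h2)
      (fun j h1 h2 => by
        have h' : j - 1 + 1 = j := by omega
        have h := hdiff (j+1) (by omega) (by omega)
        rw [Nat.add_sub_cancel] at h
        rw [h', ← h]; abel)
      (fun j h1 h2 => hadj (j+1) (by omega) (by omega))
      (fun j j' h1 h2 h3 h4 h5 =>
        hfar (j+1) (j'+1) (by omega) (by omega) (by omega) (by omega) (by omega))
    -- the function identity
    have hfun : ∀ m, m ≤ n → ∀ v,
        iterRefl β (m+1) v = sg α1 (iterRefl (fun k => β (k+1) - β 1) m v) := by
      intro m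
      induction m with
      | zero =>
        intro _ v
        show iterRefl β 1 v = sg α1 (iterRefl (fun k => β (k+1) - β 1) 0 v)
        have h0 : iterRefl (fun k => β (k+1) - β 1) 0 v = v := rfl
        rw [h0]
        show iterRefl β 0 v - ⟪β 1, iterRefl β 0 v⟫ • β 1 = sg α1 v
        have h1 : iterRefl β 0 v = v := rfl
        rw [h1, hβ1]
        rfl
      | succ m ihm =>
        intro hle v
        rw [iterRefl_succ β (m+1) v, ihm (by omega) v,
          iterRefl_succ (fun k => β (k+1) - β 1) m v,
          sg_conj α1 (β (m+1+1)) hα1n]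
        have hx : sg α1 (β (m+1+1)) = β (m+1+1) - β 1 := by
          rw [sg, innerB (m+1+1) (by omega) (by omega), one_smul, hβ1]
        rw [hx]
    -- inner products with shifted roots
    have hinner' : ∀ k, 1 ≤ k → k ≤ n → ⟪α1, β (k+1) - β 1⟫ = -1 := by
      intro k h1 h2
      rw [inner_sub_right, innerB (k+1) (by omega) (by omega), hβ1, hα1n]
      norm_num
    have hsgβ' : ∀ k, 1 ≤ k → k ≤ n → sg α1 (β (k+1) - β 1) = β (k+1) := by
      intro k h1 h2
      rw [sg, hinner' k h1 h2, hβ1]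
      match_scalars <;> ring
    have hsgα1 : sg α1 α1 = -α1 := by
      rw [sg, hα1n]; match_scalars <;> ring
    -- the main set identity
    have hmain : Φpos ∩ Φpos.image (fun x => iterRefl β (n+1) (-x))
        = insert (β 1) ((Φpos ∩ Φpos.image
            (fun x => iterRefl (fun k => β (k+1) - β 1) n (-x))).image (sg α1)) := by
      ext γ
      simp only [Finset.mem_inter, Finset.mem_image, Finset.mem_insert]
      constructor
      · rintro ⟨hγp, x, hxp, hx⟩
        rw [hfun n le_rfl (-x)] at hx
        by_cases hγ1 : γ = β 1
        · exact Or.inl hγ1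
        · right
          refine ⟨sg α1 γ, ⟨?_, x, hxp, ?_⟩, sg_sg α1 hα1n γ⟩
          · exact simple_perm Φ Φpos simple hΦ0 hrefl hred hnorm hpos hsplit hsmem
              hsind hsspan (idx 1) γ hγp (by rwa [← hα1def, ← hβ1])
          · have := congrArg (sg α1) hx
            rwa [sg_sg α1 hα1n] at this
      · rintro (rfl | ⟨y, ⟨hyp, x, hxp, hxy⟩, rfl⟩)
        · -- β 1 is in the set
          refine ⟨hβpos 1 (by omega) (by omega), ?_⟩
          have hβ'Φall : ∀ j, 1 ≤ j → j ≤ n → (fun k => β (k+1) - β 1) j ∈ Φ :=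
            fun j h1 h2 => hβ'Φ j h1 h2
          have hmaps : ∀ x ∈ Φ, iterRefl (fun k => β (k+1) - β 1) n x ∈ Φ :=
            iterRefl_mem Φ hrefl _ n hβ'Φall
          have hinj : Function.Injective (iterRefl (fun k => β (k+1) - β 1) n) :=
            iterRefl_injective _ n (fun j h1 h2 => hnorm _ (hβ'Φall j h1 h2))
          have hsurj := Finset.surj_on_of_inj_on_of_card_le
            (fun x (_ : x ∈ Φ) => iterRefl (fun k => β (k+1) - β 1) n x)
            (fun x hx => hmaps x hx)
            (fun a₁ a₂ _ _ h => hinj h) le_rfl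
          obtain ⟨x, hxΦ, hxeq⟩ := hsurj α1 hα1Φ
          have hxeq' : α1 = iterRefl (fun k => β (k+1) - β 1) n x := hxeq
          by_cases hxp : x ∈ Φpos
          · refine ⟨x, hxp, ?_⟩
            rw [hfun n le_rfl (-x), iterRefl_neg, ← hxeq', hβ1, sg,
              inner_neg_right, hα1n]
            match_scalars <;> ring
          · exfalso
            have hnx : -x ∈ Φpos := neg_pos Φ Φpos hrefl hnorm hsplit x hxΦ hxp
            have hmem : α1 ∈ Φpos ∩ Φpos.image
                (fun x => iterRefl (fun k => β (k+1) - β 1) n (-x)) :=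
              Finset.mem_inter.mpr ⟨hα1p, Finset.mem_image.mpr
                ⟨-x, hnx, by rw [neg_neg, ← hxeq']⟩⟩
            rw [hS'] at hmem
            obtain ⟨k, hk, hβ'k⟩ := Finset.mem_image.mp hmem
            rw [Finset.mem_Icc] at hk
            have h := hinner' k hk.1 hk.2
            rw [hβ'k, hα1n] at h
            norm_num at h
        · -- images of elements of S'
          have hyS : y ∈ Φpos ∩ Φpos.image
              (fun x => iterRefl (fun k => β (k+1) - β 1) n (-x)) :=
            Finset.mem_inter.mpr ⟨hyp, Finset.mem_image.mpr ⟨x, hxp, hxy⟩⟩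
          rw [hS'] at hyS
          obtain ⟨k, hk, hβ'k⟩ := Finset.mem_image.mp hyS
          rw [Finset.mem_Icc] at hk
          refine ⟨?_, x, hxp, ?_⟩
          · rw [← hβ'k, hsgβ' k hk.1 hk.2]
            exact hβpos (k+1) (by omega) (by omega)
          · rw [hfun n le_rfl (-x), hxy]
      -- end hmain
    have hnotmem : β 1 ∉ (Φpos ∩ Φpos.image
        (fun x => iterRefl (fun k => β (k+1) - β 1) n (-x))).image (sg α1) := by
      intro hmem'
      obtain ⟨y, hyT, hy⟩ := Finset.mem_image.mp hmem'
      have hyp : y ∈ Φpos := (Finset.mem_inter.mp hyT).1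
      have hy' : y = -α1 := by
        have h := congrArg (sg α1) hy
        rw [sg_sg α1 hα1n, hβ1, hsgα1] at h
        exact h
      rw [hy'] at hyp
      exact (hsplit α1 hα1Φ).mp hα1p hyp
    have himg : (Φpos ∩ Φpos.image
        (fun x => iterRefl (fun k => β (k+1) - β 1) n (-x))).image (sg α1)
        = (Finset.Icc 2 (n+1)).image β := by
      rw [hS', Finset.image_image]
      ext γ
      simp only [Finset.mem_image, Function.comp, Finset.mem_Icc]
      constructor
      · rintro ⟨k, hk, rfl⟩
        exact ⟨k+1, ⟨by omega, by omega⟩, (hsgβ' k hk.1 hk.2).symm⟩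
      · rintro ⟨m, hm, rfl⟩
        refine ⟨m-1, ⟨by omega, by omega⟩, ?_⟩
        show sg α1 (β (m-1+1) - β 1) = β m
        have hm' : m - 1 + 1 = m := by omega
        rw [hm']
        have h := hsgβ' (m-1) (by omega) (by omega)
        rwa [hm'] at h
    have hfin : insert (β 1) ((Finset.Icc 2 (n+1)).image β)
        = (Finset.Icc 1 (n+1)).image β := by
      have h : Finset.Icc 1 (n+1) = insert 1 (Finset.Icc 2 (n+1)) := by
        ext x; simp only [Finset.mem_Icc, Finset.mem_insert]; omega
      rw [h, Finset.image_insert]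
    constructor
    · rw [hmain, himg, hfin]
    · rw [hmain, Finset.card_insert_of_notMem hnotmem,
        Finset.card_image_of_injective _ (sg_injective α1 hα1n), hc']

end PathOrigAux

/-- If `0 = β 0, β 1, …, β n` is a path-originating sequence and
`w = σ_{β n} ⋯ σ_{β 1}`, then the roots `β 1, …, β n` are pairwise distinct,
`Φ⁺ ∩ wΦ⁻ = {β 1, …, β n}` and `|Φ⁺ ∩ wΦ⁻| = n`. -/
theorem path_originating_inversions {V : Type*} [NormedAddCommGroup V]
    [InnerProductSpace ℝ V] [FiniteDimensional ℝ V] [DecidableEq V]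
    (Φ : Finset V)
    (hΦ0 : (0 : V) ∉ Φ)
    (hrefl : ∀ α ∈ Φ, ∀ β ∈ Φ, β - ⟪α, β⟫ • α ∈ Φ)
    (hred : ∀ α ∈ Φ, ∀ c : ℝ, c • α ∈ Φ → c = 1 ∨ c = -1)
    (hcrys : ∀ α ∈ Φ, ∀ β ∈ Φ, ∃ n : ℤ, ⟪α, β⟫ = (n : ℝ))
    (hnorm : ∀ α ∈ Φ, ⟪α, α⟫ = 2)
    (Φpos : Finset V) (hpos : Φpos ⊆ Φ)
    (hsplit : ∀ α ∈ Φ, (α ∈ Φpos ↔ -α ∉ Φpos))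
    (r : ℕ) (simple : Fin r → V)
    (hsmem : ∀ i, simple i ∈ Φpos)
    (hsind : LinearIndependent ℝ simple)
    (hsspan : ∀ α ∈ Φpos, ∃ c : Fin r → ℕ, α = ∑ j, (c j : ℝ) • simple j)
    (n : ℕ) (β : ℕ → V) (idx : ℕ → Fin r)
    (hβ0 : β 0 = 0)
    (hβpos : ∀ j, 1 ≤ j → j ≤ n → β j ∈ Φpos)
    (hdiff : ∀ j, 1 ≤ j → j ≤ n → β j - β (j - 1) = simple (idx j))
    (hadj : ∀ j, 1 ≤ j → j + 1 ≤ n → ⟪simple (idx j), simple (idx (j + 1))⟫ = -1)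
    (hfar : ∀ j j', 1 ≤ j → j ≤ n → 1 ≤ j' → j' ≤ n →
      (j + 1 < j' ∨ j' + 1 < j) → ⟪simple (idx j), simple (idx j')⟫ = 0)
    (w : V ≃ₗ[ℝ] V) (hw : ∀ v, w v = iterRefl β n v) :
    (∀ j j', 1 ≤ j → j ≤ n → 1 ≤ j' → j' ≤ n → β j = β j' → j = j') ∧
    Φpos ∩ Φpos.image (fun x => w (-x)) = (Finset.Icc 1 n).image β ∧
    (Φpos ∩ Φpos.image (fun x => w (-x))).card = n := by
  have hset : (fun x : V => w (-x)) = (fun x => iterRefl β n (-x)) :=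
    funext (fun x => hw (-x))
  have hkey := PathOrigAux.key Φ hΦ0 hrefl hred hnorm Φpos hpos hsplit simple
    hsmem hsind hsspan n β idx hβ0 hβpos hdiff hadj hfar
  rw [hset]
  refine ⟨?_, hkey.1, hkey.2⟩
  intro j j' h1 h2 h3 h4 heq
  have himgcard : ((Finset.Icc 1 n).image β).card = (Finset.Icc 1 n).card := by
    rw [← hkey.1, hkey.2, Nat.card_Icc]
    omega
  have hinj : Set.InjOn β ↑(Finset.Icc 1 n) := Finset.card_image_iff.mp himgcard
  exact hinj (Finset.mem_coe.mpr (Finset.mem_Icc.mpr ⟨h1, h2⟩))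
    (Finset.mem_coe.mpr (Finset.mem_Icc.mpr ⟨h3, h4⟩)) heq
end

section
/- Let G be a finite simple graph on r vertices. Then the total length of any multipath in G is at most r(r+1)/2. Moreover, if G is a tree and some multipath in G has total length exactly r(r+1)/2, then G is isomorphic to the path graph P_r. -/
/-- `IsMultipath G ps` says that the list `ps` of lists of vertices is a
multipath in the graph `G`: each member is a nonempty simple path (a list of
pairwise distinct vertices with consecutive vertices adjacent), and for
`m < m'` the first vertex of the `m`-th path does not occur in the `m'`-th
path. -/
def IsMultipath {α : Type*} (G : SimpleGraph α) (ps : List (List α)) : Prop :=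
  (∀ p ∈ ps, p ≠ [] ∧ p.Nodup ∧ p.Chain' G.Adj) ∧
  ps.Pairwise (fun p q => ∀ hp : p ≠ [], p.head hp ∉ q)

/-- The total length of a multipath: the sum of the lengths of its paths. -/
def multipathTotalLength {α : Type*} (ps : List (List α)) : ℕ :=
  (ps.map List.length).sum

lemma arith_step (m : ℕ) : (m + 1) * (m + 1 + 1) / 2 = (m + 1) + m * (m + 1) / 2 := by
  obtain ⟨c, hc⟩ := Nat.even_mul_succ_self m
  have h2 : (m + 1) * (m + 1 + 1) = c + c + 2 * (m + 1) := by rw [← hc]; ring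
  rw [hc, h2]
  omega

lemma lemA {α : Type*} [Fintype α] [DecidableEq α] (G : SimpleGraph α)
    (ps : List (List α)) (s : Finset α) (hmp : IsMultipath G ps)
    (hdisj : ∀ q ∈ ps, ∀ a ∈ s, a ∉ q) :
    multipathTotalLength ps ≤
      (Fintype.card α - s.card) * (Fintype.card α - s.card + 1) / 2 := by
  induction ps generalizing s with
  | nil => simp [multipathTotalLength]
  | cons p tl ih =>
    obtain ⟨hall, hpw⟩ := hmp
    obtain ⟨hpne, hpnd, -⟩ := hall p (List.mem_cons_self)
    set h0 := p.head hpne with hh0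
    have hh0p : h0 ∈ p := List.head_mem hpne
    have hh0s : h0 ∉ s := fun hs => hdisj p (List.mem_cons_self) h0 hs hh0p
    have hpcard : p.length ≤ Fintype.card α - s.card := by
      have h1 : p.toFinset.card = p.length := List.toFinset_card_of_nodup hpnd
      have h2 : p.toFinset ⊆ Finset.univ \ s := by
        intro a ha
        simp only [Finset.mem_sdiff, Finset.mem_univ, true_and]
        exact fun hs => hdisj p (List.mem_cons_self) a hs (List.mem_toFinset.1 ha)
      have h3 := Finset.card_le_card h2
      rw [Finset.card_sdiff_of_subset (Finset.subset_univ s), Finset.card_univ] at h3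
      omega
    have hscard : s.card ≤ Fintype.card α := by
      simpa using Finset.card_le_card (Finset.subset_univ s)
    have hplen : 1 ≤ p.length := List.length_pos_iff.2 hpne
    obtain ⟨hhead, hpw'⟩ := List.pairwise_cons.1 hpw
    have ihapp := ih (insert h0 s) ⟨fun q hq => hall q (List.mem_cons_of_mem _ hq), hpw'⟩
      (by
        intro q hq a ha
        rcases Finset.mem_insert.1 ha with rfl | ha
        · exact hhead q hq hpne
        · exact hdisj q (List.mem_cons_of_mem _ hq) a ha)
    rw [Finset.card_insert_of_notMem hh0s] at ihapp
    have htot : multipathTotalLength (p :: tl) = p.length + multipathTotalLength tl := by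
      simp [multipathTotalLength]
    obtain ⟨m, hm⟩ : ∃ m, Fintype.card α - s.card = m + 1 := ⟨Fintype.card α - s.card - 1, by omega⟩
    have hm' : Fintype.card α - (s.card + 1) = m := by omega
    rw [hm', ] at ihapp
    rw [htot, hm, arith_step m]
    omega

open SimpleGraph

lemma ham_tree_iso {α : Type*} [Fintype α] [DecidableEq α] {G : SimpleGraph α}
    [DecidableRel G.Adj] {r : ℕ}
    (hr : Fintype.card α = r) (hG : G.IsTree) (l : List α) (hnd : l.Nodup)
    (hch : l.Chain' G.Adj) (hlen : l.length = r) :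
    Nonempty (G ≃g SimpleGraph.pathGraph r) := by
  have hmem : ∀ x : α, x ∈ l := by
    have h1 : l.toFinset.card = l.length := List.toFinset_card_of_nodup hnd
    have h2 : l.toFinset = Finset.univ :=
      Finset.eq_univ_of_card _ (by rw [h1, hlen, hr])
    intro x
    rw [← List.mem_toFinset, h2]
    exact Finset.mem_univ x
  have hedge : G.edgeFinset.card + 1 = r := by rw [hG.card_edgeFinset, hr]
  -- the edges of the path ℓ
  set f : Fin (r - 1) → Sym2 α := fun i =>
    s(l.get ⟨i.1, by have := i.2; omega⟩, l.get ⟨i.1 + 1, by have := i.2; omega⟩) with hf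
  have hget : ∀ i (h : i < l.length - 1), G.Adj (l.get ⟨i, by omega⟩) (l.get ⟨i + 1, by omega⟩) :=
    fun i h => List.isChain_iff_getElem.1 hch i (by omega)
  have finj : Function.Injective f := by
    intro i j hij
    simp only [hf, Sym2.eq_iff] at hij
    have ginj : ∀ x y, l.get x = l.get y → x.1 = y.1 := fun x y hxy =>
      congrArg Fin.val (hnd.get_inj_iff.1 hxy)
    rcases hij with ⟨h1, h2⟩ | ⟨h1, h2⟩ <;>
      [skip; skip] <;>
      · have e1 := ginj _ _ h1
        have e2 := ginj _ _ h2
        simp only at e1 e2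
        ext
        omega
  have fsub : ∀ i, f i ∈ G.edgeFinset := by
    intro i
    rw [SimpleGraph.mem_edgeFinset, hf]
    exact hget i.1 (by have := i.2; omega)
  have hcardE : (Finset.univ.image f).card = r - 1 := by
    rw [Finset.card_image_of_injective _ finj, Finset.card_univ, Fintype.card_fin]
  have hEeq : Finset.univ.image f = G.edgeFinset := by
    apply Finset.eq_of_subset_of_card_le
    · intro e he
      obtain ⟨i, -, rfl⟩ := Finset.mem_image.1 he
      exact fsub i
    · rw [hcardE]; omega
  -- every edge is a path edge
  have hadj : ∀ a b : α, G.Adj a b → ∃ i : Fin (r - 1),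
      s(a, b) = f i := by
    intro a b hab
    have : s(a, b) ∈ Finset.univ.image f := by
      rw [hEeq, SimpleGraph.mem_edgeFinset]; exact hab
    obtain ⟨i, -, hi⟩ := Finset.mem_image.1 this
    exact ⟨i, hi.symm⟩
  -- build the iso
  let e0 : Fin l.length ≃ α := hnd.getEquivOfForallMemList l hmem
  let e : Fin r ≃ α := (finCongr hlen.symm).trans e0
  have he : ∀ i : Fin r, e i = l.get ⟨i.1, by rw [hlen]; exact i.2⟩ := fun i => rfl
  refine ⟨(SimpleGraph.Iso.symm ⟨e, ?_⟩ : G ≃g pathGraph r)⟩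
  intro i j
  rw [pathGraph_adj]
  simp only [he]
  constructor
  · intro hadj'
    obtain ⟨m, hm⟩ := hadj _ _ hadj'
    simp only [hf, Sym2.eq_iff] at hm
    have ginj : ∀ x y, l.get x = l.get y → x.1 = y.1 := fun x y hxy =>
      congrArg Fin.val (hnd.get_inj_iff.1 hxy)
    rcases hm with ⟨h1, h2⟩ | ⟨h1, h2⟩ <;>
      · have e1 := ginj _ _ h1
        have e2 := ginj _ _ h2
        simp only at e1 e2
        omega
  · intro hij
    rcases hij with hij | hij
    · have hlt : i.1 < l.length - 1 := by have := j.2; omega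
      have := hget i.1 hlt
      have hj : (⟨j.1, by rw [hlen]; exact j.2⟩ : Fin l.length) =
          ⟨i.1 + 1, by omega⟩ := Fin.mk_eq_mk.2 hij.symm
      rw [hj]
      exact this
    · have hlt : j.1 < l.length - 1 := by have := i.2; omega
      have := (hget j.1 hlt).symm
      have hi : (⟨i.1, by rw [hlen]; exact i.2⟩ : Fin l.length) =
          ⟨j.1 + 1, by omega⟩ := Fin.mk_eq_mk.2 hij.symm
      rw [hi]
      exact this

/-- In a graph on `r` vertices, every multipath has total length at most
`r(r+1)/2`; moreover if the graph is a tree and some multipath attains total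
length `r(r+1)/2`, then the graph is isomorphic to the path graph `P_r`. -/
theorem multipath_total_length_bound {α : Type*} [Fintype α]
    (r : ℕ) (hr : Fintype.card α = r) (G : SimpleGraph α) :
    (∀ ps : List (List α), IsMultipath G ps →
      multipathTotalLength ps ≤ r * (r + 1) / 2) ∧
    (G.IsTree → ∀ ps : List (List α), IsMultipath G ps →
      multipathTotalLength ps = r * (r + 1) / 2 →
      Nonempty (G ≃g SimpleGraph.pathGraph r)) := by
  classical
  constructor
  · intro ps hps
    have h := lemA G ps ∅ hps (by simp)
    simpa [hr] using h
  · intro htree ps hps htot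
    rcases Nat.eq_zero_or_pos r with hr0 | hr1
    · subst hr0
      have : IsEmpty α := Fintype.card_eq_zero_iff.1 hr
      exact ⟨⟨Equiv.equivOfIsEmpty α (Fin 0), fun {a b} => isEmptyElim a⟩⟩
    · obtain ⟨m, rfl⟩ : ∃ m, r = m + 1 := ⟨r - 1, by omega⟩
      cases ps with
      | nil =>
        simp only [multipathTotalLength, List.map_nil, List.sum_nil] at htot
        rw [arith_step m] at htot
        generalize m * (m + 1) / 2 = B at htot
        omega
      | cons p tl =>
        obtain ⟨hall, hpw⟩ := hps
        obtain ⟨hpne, hpnd, hpch⟩ := hall p (List.mem_cons_self)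
        obtain ⟨hhead, hpw'⟩ := List.pairwise_cons.1 hpw
        have hTb := lemA G tl {p.head hpne}
          ⟨fun q hq => hall q (List.mem_cons_of_mem _ hq), hpw'⟩
          (by
            intro q hq a ha
            rw [Finset.mem_singleton] at ha
            subst ha
            exact hhead q hq hpne)
        rw [Finset.card_singleton, hr, Nat.add_sub_cancel] at hTb
        have hple : p.length ≤ m + 1 := by
          have h1 : p.toFinset.card = p.length := List.toFinset_card_of_nodup hpnd
          have h2 := Finset.card_le_univ p.toFinset
          omega
        have htot' : p.length + multipathTotalLength tl = (m + 1) * (m + 1 + 1) / 2 := by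
          simpa [multipathTotalLength] using htot
        rw [arith_step m] at htot'
        generalize m * (m + 1) / 2 = B at htot' hTb
        have hplen : p.length = m + 1 := by omega
        exact ham_tree_iso hr htree p hpnd hpch hplen
end

section
/- For every r ≥ 1, the maximal total length of a multipath in the path graph P_r equals r(r+1)/2; that is, there exists a multipath in P_r of total length r(r+1)/2 (for example the paths 1,2,…,r; 2,3,…,r; …; r), and every multipath in P_r has total length at most r(r+1)/2. (This is the combinatorial content of the paper's result that the maximal degree of a multiplicity-free monomial in the Schubert divisor classes for a group of type A_r is r(r+1)/2.) -/
private lemma tri_succ (n : ℕ) : (n + 1) * (n + 2) / 2 = (n + 1) + n * (n + 1) / 2 := by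
  obtain ⟨k, hk⟩ : Even (n * (n + 1)) := Nat.even_mul_succ_self n
  have h1 : n * (n + 1) = 2 * k := by omega
  have h2 : (n + 1) * (n + 2) = 2 * (k + n + 1) := by nlinarith
  rw [h1, h2, Nat.mul_div_cancel_left _ (by norm_num), Nat.mul_div_cancel_left _ (by norm_num)]
  omega

/-- Key upper bound: if every member of `ps` is a nonempty nodup list avoiding a
forbidden set `S`, and later lists avoid the heads of earlier lists, then the
total length is at most the triangular number of `r - S.card`. -/
private lemma multipath_bound (r : ℕ) :
    ∀ (ps : List (List (Fin r))) (S : Finset (Fin r)),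
      (∀ p ∈ ps, p ≠ [] ∧ p.Nodup) →
      ps.Pairwise (fun p q => ∀ hp : p ≠ [], p.head hp ∉ q) →
      (∀ p ∈ ps, ∀ v ∈ S, v ∉ p) →
      multipathTotalLength ps ≤ (r - S.card) * (r - S.card + 1) / 2 := by
  intro ps
  induction ps with
  | nil => intro S _ _ _; simp [multipathTotalLength]
  | cons p rest IH =>
    intro S hnodup hpw havoid
    obtain ⟨hpne, hpnd⟩ := hnodup p (by simp)
    -- p.length ≤ r - S.card
    have hsub : p.toFinset ⊆ Finset.univ \ S := by
      intro v hv
      simp only [Finset.mem_sdiff, Finset.mem_univ, true_and]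
      intro hvS
      exact havoid p (by simp) v hvS (by simpa using hv)
    have hcard : p.length ≤ r - S.card := by
      have := Finset.card_le_card hsub
      rwa [List.toFinset_card_of_nodup hpnd, Finset.card_univ_diff, Fintype.card_fin] at this
    have hlenpos : 0 < p.length := List.length_pos_iff.mpr hpne
    -- r - S.card = m + 1
    obtain ⟨m, hm⟩ : ∃ m, r - S.card = m + 1 := ⟨r - S.card - 1, by omega⟩
    set h := p.head hpne with hh
    have hhS : h ∉ S := fun hc => havoid p (by simp) h hc (List.head_mem hpne)
    have hpw' := List.pairwise_cons.mp hpw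
    -- apply IH with S' = insert h S
    have hScard : (insert h S).card = S.card + 1 := Finset.card_insert_of_notMem hhS
    have hSle : S.card + 1 ≤ r := by
      have := Finset.card_le_univ (insert h S)
      simp only [Finset.card_univ, Fintype.card_fin] at this; rw [hScard] at this
      exact this
    have hIH := IH (insert h S) (fun q hq => hnodup q (by simp [hq]))
      hpw'.2
      (fun q hq v hv => by
        rcases Finset.mem_insert.mp hv with hv | hv
        · subst hv; exact hpw'.1 q hq hpne
        · exact havoid q (by simp [hq]) v hv)
    have hcard' : r - (insert h S).card = m := by rw [hScard]; omega
    rw [hcard'] at hIH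
    have : multipathTotalLength (p :: rest) = p.length + multipathTotalLength rest := by
      simp [multipathTotalLength]
    rw [this, hm, tri_succ m]
    exact Nat.add_le_add (by omega) hIH

private lemma sum_map_range (f : ℕ → ℕ) (n : ℕ) :
    ((List.range n).map f).sum = ∑ i ∈ Finset.range n, f i := by
  induction n with
  | zero => simp
  | succ n ih => rw [List.range_succ, Finset.sum_range_succ]; simp [ih]

/-- The maximal total length of a multipath in the path graph `P_r` (the
Dynkin diagram of type `A_r`) equals `r(r+1)/2`: some multipath attains this
total length, and every multipath has total length at most `r(r+1)/2`. -/
theorem pathGraph_max_multipath (r : ℕ) (hr : 1 ≤ r) :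
    (∃ ps : List (List (Fin r)), IsMultipath (SimpleGraph.pathGraph r) ps ∧
      multipathTotalLength ps = r * (r + 1) / 2) ∧
    (∀ ps : List (List (Fin r)), IsMultipath (SimpleGraph.pathGraph r) ps →
      multipathTotalLength ps ≤ r * (r + 1) / 2) := by
  constructor
  · -- existence: the paths `m, m+1, ..., r-1` for `m = 0, ..., r-1`
    refine ⟨(List.range r).map (fun m => (List.finRange r).drop m), ?_, ?_⟩
    · constructor
      · intro p hp
        simp only [List.mem_map, List.mem_range] at hp
        obtain ⟨m, hm, rfl⟩ := hp
        have hlen : ((List.finRange r).drop m).length = r - m := by simp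
        refine ⟨?_, ?_, ?_⟩
        · intro hc
          rw [← List.length_eq_zero_iff] at hc
          omega
        · exact List.Nodup.sublist (List.drop_sublist _ _) (List.nodup_finRange r)
        · rw [show List.Chain' _ _ ↔ _ from List.isChain_iff_getElem]
          intro i hi
          rw [List.getElem_drop, List.getElem_drop, List.getElem_finRange,
            List.getElem_finRange, SimpleGraph.pathGraph_adj]
          left
          simp
          omega
      · rw [List.pairwise_map]
        refine List.Pairwise.imp ?_ List.pairwise_lt_range
        intro a b hab hne hmem
        -- head of drop a is ⟨a⟩; members of drop b have val ≥ b > a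
        have hlen : a < (List.finRange r).length := by
          simp only [List.length_finRange]
          have : ((List.finRange r).drop a).length ≠ 0 := by
            intro hc; rw [List.length_eq_zero_iff] at hc; exact hne hc
          simp only [List.length_drop, List.length_finRange] at this
          omega
        rw [List.head_drop] at hmem
        obtain ⟨i, hi, hval⟩ := List.mem_iff_getElem.mp hmem
        rw [List.getElem_drop, List.getElem_finRange] at hval
        have := congrArg Fin.val hval
        rw [List.getElem_finRange] at this
        simp at this
        omega
    · unfold multipathTotalLength
      rw [List.map_map]
      have : (List.length ∘ fun m => (List.finRange r).drop m) = fun m => r - m := by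
        funext m; simp
      rw [this, sum_map_range]
      rw [← Finset.sum_range_reflect (fun i => r - i) r]
      have : ∀ j ∈ Finset.range r, r - (r - 1 - j) = j + 1 := by
        intro j hj; simp only [Finset.mem_range] at hj; omega
      rw [Finset.sum_congr rfl this]
      have : ∑ j ∈ Finset.range r, (j + 1) = ∑ j ∈ Finset.range r, j + r := by
        rw [Finset.sum_add_distrib]; simp
      rw [this, Finset.sum_range_id]
      obtain ⟨k, hk⟩ : Even (r * (r - 1)) := Nat.even_mul_pred_self r
      have h1 : r * (r - 1) / 2 = k := by omega
      have h2 : r * (r + 1) = 2 * (k + r) := by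
        have h3 : r * (r + 1) = r * (r - 1) + 2 * r := by
          cases r with
          | zero => simp
          | succ n => simp only [Nat.succ_sub_one]; ring
        omega
      have h4 : r * (r + 1) / 2 = k + r := by omega
      omega
  · intro ps hps
    have := multipath_bound r ps ∅ (fun p hp => ⟨(hps.1 p hp).1, (hps.1 p hp).2.1⟩)
      hps.2 (by simp)
    simpa using this
end
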